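/- arXiv:nlin/0306027 — 10 statements merged into one kernel-verified Lean document; each statement's English description precedes it below -/
import Mathlib

section
/- Let N, n₁, n₂ ≥ 1 be integers and let k̄₁ ≠ k̄₂ be complex numbers. Let A₁,…,A_{n₁} and B₁,…,B_{n₂} be N×N complex matrices, and define Γ₁(k) = I + Σ_{j=1}^{n₁} A_j (k−k̄₁)^{−j} and Γ₂(k) = I + Σ_{j=1}^{n₂} B_j (k−k̄₂)^{−j}. Then for every k ∉ {k̄₁, k̄₂} one has the partial-fraction decomposition Γ₁(k)Γ₂(k) = I + Σ_{j=1}^{n₁} Ã_j (k−k̄₁)^{−j} + Σ_{j=1}^{n₂} B̃_j (k−k̄₂)^{−j}, where for 0 ≤ l ≤ n₁−1, Ã_{n₁−l} = Σ_{j=0}^{l} A_{n₁−j} · (1/(l−j)!) Γ₂^{(l−j)}(k̄₁), and for 0 ≤ l ≤ n₂−1, B̃_{n₂−l} = Σ_{j=0}^{l} (1/(l−j)!) Γ₁^{(l−j)}(k̄₂) · B_{n₂−j}. -/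
/-- Entrywise `m`-th complex derivative of a matrix-valued function. -/
noncomputable def matIterDeriv {N : ℕ} (m : ℕ) (f : ℂ → Matrix (Fin N) (Fin N) ℂ) (κ : ℂ) :
    Matrix (Fin N) (Fin N) ℂ :=
  Matrix.of fun a b => iteratedDeriv m (fun k => f k a b) κ

open Finset

noncomputable def pfC (x : ℂ) (j s : ℕ) : ℂ :=
  (-1) ^ s * ((j + s - 1).choose s : ℂ) * x ^ (-(j : ℤ) - (s : ℤ))

lemma hockey (r q : ℕ) :
    ∑ s ∈ range (q + 1), (r + s).choose s = (r + q + 1).choose q := by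
  induction q with
  | zero => simp
  | succ q ih =>
    rw [Finset.sum_range_succ, ih]
    have e : r + (q + 1) = r + q + 1 := by ring
    rw [e]
    exact (Nat.choose_succ_succ' _ _).symm

lemma neg_one_zpow_natNeg (n : ℕ) : ((-1 : ℂ)) ^ (-(n : ℤ)) = (-1 : ℂ) ^ n := by
  rw [zpow_neg, zpow_natCast, ← inv_pow]
  norm_num

lemma neg_zpow_nat (w : ℂ) (n : ℕ) : (-w) ^ (-(n : ℤ)) = (-1 : ℂ) ^ n * w ^ (-(n : ℤ)) := by
  rw [show -w = (-1) * w by ring, mul_zpow, neg_one_zpow_natNeg]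

lemma neg_one_sq_pow (s : ℕ) : ((-1 : ℂ)) ^ s * (-1) ^ s = 1 := by
  rw [← pow_add]
  exact Even.neg_one_pow ⟨s, rfl⟩

lemma keyA (w : ℂ) (hw : w ≠ 0) (i j : ℕ) :
    ∑ s ∈ range (j + 1), pfC (-w) (i + 1) s * w ^ (-((j + 1 - s : ℕ) : ℤ))
      = pfC w (j + 1) (i + 1) := by
  have hstep : ∀ s ∈ range (j + 1),
      pfC (-w) (i + 1) s * w ^ (-((j + 1 - s : ℕ) : ℤ))
      = ((i + s).choose s : ℂ) * ((-1) ^ (i + 1) * w ^ (-(i : ℤ) - j - 2)) := by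
    intro s hs
    have hs' : s ≤ j := by simpa [Nat.lt_succ_iff] using hs
    have e1 : (i + 1 + s - 1) = i + s := by omega
    have h1 : (-w) ^ (-(((i + 1) : ℕ) : ℤ) - (s : ℤ))
        = (-1 : ℂ) ^ (i + 1) * (-1) ^ s * w ^ (-(((i + 1) : ℕ) : ℤ) - (s : ℤ)) := by
      rw [show (-(((i + 1) : ℕ) : ℤ) - (s : ℤ)) = -(((i + 1 + s : ℕ)) : ℤ) by push_cast; ring,
        neg_zpow_nat, pow_add]
    have h2 : w ^ (-(((i + 1) : ℕ) : ℤ) - (s : ℤ)) * w ^ (-((j + 1 - s : ℕ) : ℤ))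
        = w ^ (-(i : ℤ) - j - 2) := by
      rw [← zpow_add₀ hw]
      congr 1
      omega
    calc pfC (-w) (i + 1) s * w ^ (-((j + 1 - s : ℕ) : ℤ))
        = (((-1 : ℂ)) ^ s * (-1) ^ s) * ((i + s).choose s : ℂ) *
            ((-1) ^ (i + 1) * (w ^ (-(((i + 1) : ℕ) : ℤ) - (s : ℤ)) *
              w ^ (-((j + 1 - s : ℕ) : ℤ)))) := by
          unfold pfC
          rw [e1, h1]
          ring
      _ = ((i + s).choose s : ℂ) * ((-1) ^ (i + 1) * w ^ (-(i : ℤ) - j - 2)) := by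
          rw [neg_one_sq_pow, h2]; ring
  rw [Finset.sum_congr rfl hstep, ← Finset.sum_mul, ← Nat.cast_sum, hockey i j]
  have hcs : (i + j + 1).choose j = (i + j + 1).choose (i + 1) := by
    rw [← Nat.choose_symm (by omega : i + 1 ≤ i + j + 1)]
    congr 1
    omega
  unfold pfC
  rw [show (j + 1 + (i + 1) - 1) = i + j + 1 by omega, ← hcs]
  rw [show (-(((j + 1) : ℕ) : ℤ) - (((i + 1) : ℕ) : ℤ)) = (-(i : ℤ) - j - 2) by push_cast; ring]
  ring

lemma keyB (x : ℂ) (hx : x ≠ 0) (i q : ℕ) :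
    ∑ s ∈ range (q + 1), pfC x (i + 1) s * pfC x 1 (q - s) = pfC x (i + 2) q := by
  have hstep : ∀ s ∈ range (q + 1),
      pfC x (i + 1) s * pfC x 1 (q - s)
      = ((i + s).choose s : ℂ) * ((-1) ^ q * x ^ (-(i : ℤ) - q - 2)) := by
    intro s hs
    have hs' : s ≤ q := by simpa [Nat.lt_succ_iff] using hs
    have e1 : (i + 1 + s - 1) = i + s := by omega
    have e2 : (1 + (q - s) - 1).choose (q - s) = 1 := by
      rw [show (1 + (q - s) - 1) = q - s by omega]
      exact Nat.choose_self _
    have h2 : x ^ (-(((i + 1) : ℕ) : ℤ) - (s : ℤ)) * x ^ (-(1 : ℤ) - ((q - s : ℕ) : ℤ))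
        = x ^ (-(i : ℤ) - q - 2) := by
      rw [← zpow_add₀ hx]
      congr 1
      omega
    have h3 : ((-1 : ℂ)) ^ s * (-1) ^ (q - s) = (-1) ^ q := by
      rw [← pow_add]
      congr 1
      omega
    calc pfC x (i + 1) s * pfC x 1 (q - s)
        = (((-1 : ℂ)) ^ s * (-1) ^ (q - s)) * ((i + s).choose s : ℂ) *
            (((1 + (q - s) - 1).choose (q - s) : ℕ) : ℂ) *
            (x ^ (-(((i + 1) : ℕ) : ℤ) - (s : ℤ)) * x ^ (-((1 : ℕ) : ℤ) - ((q - s : ℕ) : ℤ))) := by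
          unfold pfC
          rw [e1]
          ring
      _ = ((i + s).choose s : ℂ) * ((-1) ^ q * x ^ (-(i : ℤ) - q - 2)) := by
          rw [h3, e2]
          rw [show (-((1 : ℕ) : ℤ)) = (-1 : ℤ) by norm_num] at *
          rw [h2]
          push_cast
          ring
  rw [Finset.sum_congr rfl hstep, ← Finset.sum_mul, ← Nat.cast_sum, hockey i q]
  unfold pfC
  rw [show (i + 2 + q - 1) = i + q + 1 by omega]
  have hcs : (i + q + 1).choose q = (i + q + 1).choose (q) := rfl
  rw [show (-(((i + 2) : ℕ) : ℤ) - ((q : ℕ) : ℤ)) = (-(i : ℤ) - q - 2) by push_cast; ring]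
  ring

lemma P11 (u v w : ℂ) (hu : u ≠ 0) (hv : v ≠ 0) (hw : w ≠ 0) (hvw : v = u + w) :
    u ^ (-1 : ℤ) * v ^ (-1 : ℤ) = pfC w 1 0 * u ^ (-1 : ℤ) + pfC (-w) 1 0 * v ^ (-1 : ℤ) := by
  unfold pfC
  simp only [pow_zero, Nat.choose_self, Nat.cast_one, one_mul, Nat.cast_ofNat,
    Nat.add_sub_cancel]
  rw [show (-(1 : ℤ) - ((0 : ℕ) : ℤ)) = (-1 : ℤ) by norm_num]
  rw [zpow_neg_one, zpow_neg_one, zpow_neg_one, zpow_neg_one]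
  have hnw : -w ≠ 0 := neg_ne_zero.mpr hw
  field_simp
  rw [hvw]
  ring

lemma pfC_zero_mul (w : ℂ) (hw : w ≠ 0) (j : ℕ) (hj : 1 ≤ j) :
    pfC w j 0 * pfC w 1 0 = pfC w (j + 1) 0 := by
  unfold pfC
  simp only [pow_zero, one_mul, Nat.cast_zero, Nat.choose_zero_right, Nat.cast_one]
  rw [← zpow_add₀ hw]
  ring_nf
  congr 1
  push_cast
  ring

lemma neg_zpow' (x : ℂ) (n : ℤ) : (-x) ^ n = (-1) ^ n * x ^ n := by
  rw [show -x = -1 * x by ring, mul_zpow]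

lemma neg_one_zpow_sub (j : ℕ) : ((-1 : ℂ)) ^ (-(1 : ℤ) - j) = (-1 : ℂ) ^ (j + 1) := by
  rw [show (-(1 : ℤ) - j) = -(((j + 1 : ℕ)) : ℤ) by push_cast; ring, neg_one_zpow_natNeg]

lemma pfC_zero_mul_neg (w : ℂ) (hw : w ≠ 0) (j : ℕ) :
    pfC w j 0 * pfC (-w) 1 0 = pfC (-w) 1 j := by
  unfold pfC
  rw [show (1 + j - 1) = j by omega, Nat.choose_self]
  push_cast
  rw [pow_zero, Nat.choose_zero_right, Nat.cast_one]
  rw [neg_zpow' w (-1), neg_zpow' w (-1 - (j : ℤ))]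
  rw [show ((-1 : ℂ)) ^ (-1 : ℤ) = -1 by norm_num, neg_one_zpow_sub j]
  have hw2 : w ^ (-(j : ℤ) - 0) * w ^ (-1 : ℤ) = w ^ ((-1 : ℤ) - (j : ℤ)) := by
    rw [← zpow_add₀ hw]; ring_nf
  have hsgn : ((-1 : ℂ)) ^ j * (-1) ^ (j + 1) = -1 := by
    rw [pow_succ, show ((-1 : ℂ)) ^ j * ((-1) ^ j * -1) = ((-1) ^ j * (-1) ^ j) * -1 by ring,
      neg_one_sq_pow]
    ring
  rw [Nat.choose_self, Nat.cast_one]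
  linear_combination (-1 : ℂ) * hw2 - w ^ ((-1 : ℤ) - (j : ℤ)) * hsgn

lemma pfC_zero (w : ℂ) (n : ℕ) : pfC w n 0 = w ^ (-(n : ℤ)) := by
  unfold pfC
  rw [pow_zero, Nat.choose_zero_right, Nat.cast_one]
  rw [show (-(n : ℤ) - ((0 : ℕ) : ℤ)) = -(n : ℤ) by norm_num]
  ring

lemma keyA' (w : ℂ) (hw : w ≠ 0) (i j : ℕ) (hi : 1 ≤ i) (hj : 1 ≤ j) :
    ∑ s ∈ range j, pfC (-w) i s * w ^ (-((j - s : ℕ) : ℤ)) = pfC w j i := by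
  obtain ⟨i', rfl⟩ : ∃ i', i = i' + 1 := ⟨i - 1, by omega⟩
  obtain ⟨j', rfl⟩ : ∃ j', j = j' + 1 := ⟨j - 1, by omega⟩
  exact keyA w hw i' j'

lemma keyB' (x : ℂ) (hx : x ≠ 0) (i q : ℕ) (hi : 1 ≤ i) :
    ∑ s ∈ range (q + 1), pfC x i s * pfC x 1 (q - s) = pfC x (i + 1) q := by
  obtain ⟨i', rfl⟩ : ∃ i', i = i' + 1 := ⟨i - 1, by omega⟩
  exact keyB x hx i' q

lemma PF1 (u v w : ℂ) (hu : u ≠ 0) (hv : v ≠ 0) (hw : w ≠ 0) (hvw : v = u + w) :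
    ∀ j : ℕ, 1 ≤ j → u ^ (-1 : ℤ) * v ^ (-(j : ℤ)) =
      pfC w j 0 * u ^ (-1 : ℤ)
        + ∑ m ∈ range j, pfC (-w) 1 (j - 1 - m) * v ^ (-(m : ℤ) - 1) := by
  intro j hj
  induction j, hj using Nat.le_induction with
  | base =>
    rw [Finset.sum_range_one]
    have h := P11 u v w hu hv hw hvw
    norm_num at h ⊢
    convert h using 3 <;> norm_num
  | succ j hj ih =>
    have hsplit : u ^ (-1 : ℤ) * v ^ (-((j + 1 : ℕ) : ℤ))
        = (u ^ (-1 : ℤ) * v ^ (-(j : ℤ))) * v ^ (-1 : ℤ) := by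
      rw [mul_assoc, ← zpow_add₀ hv]
      congr 2
      push_cast; ring
    rw [hsplit, ih, add_mul, Finset.sum_mul]
    have hA : pfC w j 0 * u ^ (-1 : ℤ) * v ^ (-1 : ℤ)
        = pfC w (j + 1) 0 * u ^ (-1 : ℤ) + pfC (-w) 1 j * v ^ (-1 : ℤ) := by
      rw [mul_assoc, P11 u v w hu hv hw hvw, mul_add, ← mul_assoc, ← mul_assoc,
        pfC_zero_mul w hw j hj, pfC_zero_mul_neg w hw j]
    rw [hA]
    rw [Finset.sum_range_succ' (fun m => pfC (-w) 1 (j + 1 - 1 - m) * v ^ (-(m : ℤ) - 1)) j]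
    have hterm : ∀ m ∈ range j, pfC (-w) 1 (j - 1 - m) * v ^ (-(m : ℤ) - 1) * v ^ (-1 : ℤ)
        = pfC (-w) 1 (j + 1 - 1 - (m + 1)) * v ^ (-((m + 1 : ℕ) : ℤ) - 1) := by
      intro m hm
      rw [show (j + 1 - 1 - (m + 1)) = j - 1 - m by omega, mul_assoc, ← zpow_add₀ hv]
      congr 2
      push_cast; ring
    rw [Finset.sum_congr rfl hterm, show (j + 1 - 1 - 0) = j by omega]
    have : v ^ (-((0 : ℕ) : ℤ) - 1) = v ^ (-1 : ℤ) := by norm_num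
    rw [this]
    ring

lemma PF (u v w : ℂ) (hu : u ≠ 0) (hv : v ≠ 0) (hw : w ≠ 0) (hvw : v = u + w) :
    ∀ i : ℕ, 1 ≤ i → ∀ j : ℕ, 1 ≤ j →
      u ^ (-(i : ℤ)) * v ^ (-(j : ℤ)) =
        (∑ m ∈ range i, pfC w j (i - 1 - m) * u ^ (-(m : ℤ) - 1))
          + ∑ m ∈ range j, pfC (-w) i (j - 1 - m) * v ^ (-(m : ℤ) - 1) := by
  have hnw : -w ≠ 0 := neg_ne_zero.mpr hw
  intro i hi
  induction i, hi using Nat.le_induction with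
  | base =>
    intro j hj
    rw [Finset.sum_range_one]
    have h := PF1 u v w hu hv hw hvw j hj
    norm_num at h ⊢
    convert h using 3 <;> norm_num
  | succ i hi ih =>
    intro j hj
    have hsplit : u ^ (-((i + 1 : ℕ) : ℤ)) * v ^ (-(j : ℤ))
        = u ^ (-1 : ℤ) * (u ^ (-(i : ℤ)) * v ^ (-(j : ℤ))) := by
      rw [← mul_assoc, ← zpow_add₀ hu]
      congr 2
      push_cast; ring
    rw [hsplit, ih j hj, mul_add, Finset.mul_sum, Finset.mul_sum]
    have hterm1 : ∀ m ∈ range i,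
        u ^ (-1 : ℤ) * (pfC w j (i - 1 - m) * u ^ (-(m : ℤ) - 1))
          = pfC w j (i + 1 - 1 - (m + 1)) * u ^ (-((m + 1 : ℕ) : ℤ) - 1) := by
      intro m hm
      rw [show i + 1 - 1 - (m + 1) = i - 1 - m by omega]
      rw [show u ^ (-((m + 1 : ℕ) : ℤ) - 1) = u ^ (-1 : ℤ) * u ^ (-(m : ℤ) - 1) by
        rw [← zpow_add₀ hu]; congr 1; push_cast; ring]
      ring
    rw [Finset.sum_congr rfl hterm1]
    have hterm2 : ∀ m ∈ range j,
        u ^ (-1 : ℤ) * (pfC (-w) i (j - 1 - m) * v ^ (-(m : ℤ) - 1))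
          = pfC (-w) i (j - 1 - m) * pfC w (m + 1) 0 * u ^ (-1 : ℤ)
            + ∑ m' ∈ range (m + 1),
                pfC (-w) i (j - 1 - m) * (pfC (-w) 1 (m + 1 - 1 - m') * v ^ (-(m' : ℤ) - 1)) := by
      intro m hm
      have h1 : v ^ (-(m : ℤ) - 1) = v ^ (-((m + 1 : ℕ) : ℤ)) := by
        congr 1; push_cast; ring
      rw [h1, show u ^ (-1 : ℤ) * (pfC (-w) i (j - 1 - m) * v ^ (-((m + 1 : ℕ) : ℤ)))
          = pfC (-w) i (j - 1 - m) * (u ^ (-1 : ℤ) * v ^ (-((m + 1 : ℕ) : ℤ))) by ring,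
        PF1 u v w hu hv hw hvw (m + 1) (by omega), mul_add, Finset.mul_sum]
      ring
    rw [Finset.sum_congr rfl hterm2, Finset.sum_add_distrib, ← Finset.sum_mul]
    have hS1 : ∑ m ∈ range j, pfC (-w) i (j - 1 - m) * pfC w (m + 1) 0 = pfC w j i := by
      rw [← keyA' w hw i j hi hj]
      refine Finset.sum_bij' (fun m _ => j - 1 - m) (fun s _ => j - 1 - s) ?_ ?_ ?_ ?_ ?_
      · intro m hm
        simp only [mem_range] at hm ⊢
        omega
      · intro s hs
        simp only [mem_range] at hs ⊢
        omega
      · intro m hm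
        simp only [mem_range] at hm
        omega
      · intro s hs
        simp only [mem_range] at hs
        omega
      · intro m hm
        simp only [mem_range] at hm
        rw [pfC_zero, show j - (j - 1 - m) = m + 1 from by omega]
    rw [hS1]
    have hS2 : ∑ m ∈ range j, ∑ m' ∈ range (m + 1),
          pfC (-w) i (j - 1 - m) * (pfC (-w) 1 (m + 1 - 1 - m') * v ^ (-(m' : ℤ) - 1))
        = ∑ m' ∈ range j, pfC (-w) (i + 1) (j - 1 - m') * v ^ (-(m' : ℤ) - 1) := by
      rw [Finset.sum_comm' (t' := range j) (s' := fun m' => Icc m' (j - 1))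
        (fun x y => by simp only [mem_range, mem_Icc]; omega)]
      refine Finset.sum_congr rfl fun m' hm' => ?_
      have hm'j : m' < j := mem_range.mp hm'
      have hfac : ∀ m ∈ Icc m' (j - 1),
          pfC (-w) i (j - 1 - m) * (pfC (-w) 1 (m + 1 - 1 - m') * v ^ (-(m' : ℤ) - 1))
            = (pfC (-w) i (j - 1 - m) * pfC (-w) 1 (m - m')) * v ^ (-(m' : ℤ) - 1) := by
        intro m hm
        rw [show m + 1 - 1 - m' = m - m' by omega]
        ring
      rw [Finset.sum_congr rfl hfac, ← Finset.sum_mul]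
      have hbij : ∑ m ∈ Icc m' (j - 1), pfC (-w) i (j - 1 - m) * pfC (-w) 1 (m - m')
          = ∑ s ∈ range (j - 1 - m' + 1), pfC (-w) i s * pfC (-w) 1 ((j - 1 - m') - s) := by
        refine Finset.sum_bij' (fun m _ => j - 1 - m) (fun s _ => j - 1 - s) ?_ ?_ ?_ ?_ ?_
        · intro m hm
          simp only [mem_Icc] at hm
          simp only [mem_range]
          omega
        · intro s hs
          simp only [mem_range] at hs
          simp only [mem_Icc]
          omega
        · intro m hm
          simp only [mem_Icc] at hm
          omega
        · intro s hs
          simp only [mem_range] at hs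
          omega
        · intro m hm
          simp only [mem_Icc] at hm
          rw [show j - 1 - m' - (j - 1 - m) = m - m' from by omega]
      rw [hbij, keyB' (-w) hnw i (j - 1 - m') hi]
    rw [hS2]
    rw [Finset.sum_range_succ' (fun m => pfC w j (i + 1 - 1 - m) * u ^ (-(m : ℤ) - 1)) i]
    rw [show (i + 1 - 1 - 0) = i by omega,
      show u ^ (-((0 : ℕ) : ℤ) - 1) = u ^ (-1 : ℤ) by norm_num]
    ring

lemma hasDerivAt_zpow_shift (e : ℤ) (b k : ℂ) (hk : k ≠ b) :
    HasDerivAt (fun x => (x - b) ^ e) ((e : ℂ) * (k - b) ^ (e - 1)) k := by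
  have h1 : HasDerivAt (fun x : ℂ => x - b) 1 k := (hasDerivAt_id k).sub_const b
  have h2 := hasDerivAt_zpow e (k - b) (Or.inl (sub_ne_zero.mpr hk))
  have h3 := h2.comp k h1
  simp only [mul_one] at h3
  exact h3

lemma iterDeriv_formula (n : ℕ) (b C : ℂ) (β : ℕ → ℂ) (s : ℕ) :
    ∀ k : ℂ, k ≠ b →
      iteratedDeriv s (fun k => C + ∑ j ∈ Icc 1 n, (k - b) ^ (-(j : ℤ)) * β j) k
      = (if s = 0 then C else 0)
        + ∑ j ∈ Icc 1 n, (∏ t ∈ range s, (-(j : ℂ) - t)) * (k - b) ^ (-(j : ℤ) - s) * β j := by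
  induction s with
  | zero =>
    intro k hk
    rw [iteratedDeriv_zero]
    simp only [if_pos rfl, Finset.prod_empty, range_zero, one_mul]
    congr 1
    refine Finset.sum_congr rfl fun j hj => ?_
    norm_num
  | succ s ih =>
    intro k hk
    rw [iteratedDeriv_succ]
    have hev : iteratedDeriv s (fun k => C + ∑ j ∈ Icc 1 n, (k - b) ^ (-(j : ℤ)) * β j)
        =ᶠ[nhds k] (fun x => (if s = 0 then C else 0)
          + ∑ j ∈ Icc 1 n, (∏ t ∈ range s, (-(j : ℂ) - t)) * (x - b) ^ (-(j : ℤ) - s) * β j) := by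
      filter_upwards [isOpen_ne.mem_nhds hk] with x hx
      exact ih x hx
    rw [hev.deriv_eq]
    have hd : HasDerivAt (fun x => (if s = 0 then C else 0)
        + ∑ j ∈ Icc 1 n, (∏ t ∈ range s, (-(j : ℂ) - t)) * (x - b) ^ (-(j : ℤ) - s) * β j)
        (∑ j ∈ Icc 1 n, (∏ t ∈ range s, (-(j : ℂ) - t)) *
          (((-(j : ℤ) - s : ℤ) : ℂ) * (k - b) ^ ((-(j : ℤ) - s) - 1)) * β j) k := by
      refine HasDerivAt.const_add _ ?_
      refine HasDerivAt.fun_sum fun j hj => ?_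
      exact (((hasDerivAt_zpow_shift (-(j : ℤ) - s) b k hk).const_mul _).mul_const _)
    rw [hd.deriv, if_neg (Nat.succ_ne_zero s), zero_add]
    refine Finset.sum_congr rfl fun j hj => ?_
    rw [Finset.prod_range_succ]
    have he : ((-(j : ℤ) - s) - 1) = (-(j : ℤ) - (s + 1 : ℕ)) := by push_cast; ring
    rw [he]
    have hc : ((-(j : ℤ) - s : ℤ) : ℂ) = (-(j : ℂ) - s) := by push_cast; ring
    rw [hc]
    ring


lemma prod_range_add_nat (n s : ℕ) : ∏ t ∈ range s, (n + 1 + t) = s.factorial * (n + s).choose s := by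
  have h : ∏ t ∈ range s, (n + 1 + t) = (n + 1).ascFactorial s := by
    induction s with
    | zero => simp
    | succ s ih => rw [Finset.prod_range_succ, ih, Nat.ascFactorial_succ]; ring
  rw [h, Nat.ascFactorial_eq_factorial_mul_choose]

lemma prodC (j s : ℕ) (hj : 1 ≤ j) :
    (∏ t ∈ range s, (-(j : ℂ) - t)) = (-1) ^ s * (s.factorial : ℂ) * ((j + s - 1).choose s : ℂ) := by
  obtain ⟨n, rfl⟩ : ∃ n, j = n + 1 := ⟨j - 1, by omega⟩
  have h1 : ∀ t ∈ range s, (-((n + 1 : ℕ) : ℂ) - t) = (-1) * (((n + 1 + t : ℕ)) : ℂ) := by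
    intro t ht
    push_cast
    ring
  rw [Finset.prod_congr rfl h1, Finset.prod_mul_distrib, Finset.prod_const]
  rw [← Nat.cast_prod, prod_range_add_nat n s]
  rw [show (n + 1 + s - 1) = n + s by omega, Finset.card_range]
  push_cast
  ring

lemma matD {N : ℕ} (n : ℕ) (a b : ℂ) (hab : a ≠ b) (B : ℕ → Matrix (Fin N) (Fin N) ℂ)
    (Γ : ℂ → Matrix (Fin N) (Fin N) ℂ)
    (hΓ : ∀ k, Γ k = 1 + ∑ j ∈ Icc 1 n, (k - b) ^ (-(j : ℤ)) • B j) (s : ℕ) :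
    ((s.factorial : ℂ))⁻¹ • matIterDeriv s Γ a
      = (if s = 0 then (1 : Matrix (Fin N) (Fin N) ℂ) else 0)
          + ∑ j ∈ Icc 1 n, pfC (a - b) j s • B j := by
  ext p q
  have hfun : (fun k => Γ k p q)
      = fun k => (1 : Matrix (Fin N) (Fin N) ℂ) p q
          + ∑ j ∈ Icc 1 n, (k - b) ^ (-(j : ℤ)) * B j p q := by
    funext k
    rw [hΓ k]
    simp [Matrix.add_apply, Matrix.sum_apply, Matrix.smul_apply, smul_eq_mul]
  have hent : matIterDeriv s Γ a p q
      = (if s = 0 then (1 : Matrix (Fin N) (Fin N) ℂ) p q else 0)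
        + ∑ j ∈ Icc 1 n, (∏ t ∈ range s, (-(j : ℂ) - t)) * (a - b) ^ (-(j : ℤ) - s) * B j p q := by
    show iteratedDeriv s (fun k => Γ k p q) a = _
    rw [hfun]
    exact iterDeriv_formula n b _ _ s a hab
  rw [Matrix.smul_apply, hent, Matrix.add_apply, Matrix.sum_apply]
  rw [smul_eq_mul, mul_add, Finset.mul_sum]
  congr 1
  · rcases Nat.eq_zero_or_pos s with hs | hs
    · subst hs
      simp [apply_ite (fun M : Matrix (Fin N) (Fin N) ℂ => M p q)]
    · rw [if_neg (by omega), if_neg (by omega), mul_zero]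
      simp [apply_ite (fun M : Matrix (Fin N) (Fin N) ℂ => M p q), Nat.pos_iff_ne_zero.mp hs]
  · refine Finset.sum_congr rfl fun j hj => ?_
    have hj1 : 1 ≤ j := (mem_Icc.mp hj).1
    rw [Matrix.smul_apply, smul_eq_mul]
    unfold pfC
    rw [prodC j s hj1]
    have hfac : (s.factorial : ℂ) ≠ 0 := Nat.cast_ne_zero.mpr s.factorial_ne_zero
    field_simp

lemma core1 {V : Type*} [AddCommMonoid V] [Module ℂ V] (n₁ n₂ : ℕ) (u w : ℂ)
    (M : ℕ → ℕ → V) :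
    ∑ i ∈ Icc 1 n₁, ∑ j ∈ Icc 1 n₂, ∑ m ∈ range i,
        (pfC w j (i - 1 - m) * u ^ (-(m : ℤ) - 1)) • M i j
      = ∑ m ∈ Icc 1 n₁, u ^ (-(m : ℤ)) •
          ∑ jj ∈ range (n₁ - m + 1), ∑ j ∈ Icc 1 n₂, pfC w j (n₁ - m - jj) • M (n₁ - jj) j := by
  have h1 : ∀ i ∈ Icc 1 n₁, ∑ j ∈ Icc 1 n₂, ∑ m ∈ range i,
        (pfC w j (i - 1 - m) * u ^ (-(m : ℤ) - 1)) • M i j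
      = ∑ m ∈ range i, ∑ j ∈ Icc 1 n₂, (pfC w j (i - 1 - m) * u ^ (-(m : ℤ) - 1)) • M i j :=
    fun i _ => Finset.sum_comm
  rw [Finset.sum_congr rfl h1]
  rw [Finset.sum_comm' (t' := range n₁) (s' := fun m => Icc (m + 1) n₁)
    (fun x y => by simp only [mem_Icc, mem_range]; omega)]
  have h2 : ∑ m ∈ Icc 1 n₁, u ^ (-(m : ℤ)) • ∑ jj ∈ range (n₁ - m + 1), ∑ j ∈ Icc 1 n₂,
        pfC w j (n₁ - m - jj) • M (n₁ - jj) j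
      = ∑ m ∈ range n₁, u ^ (-((1 + m : ℕ) : ℤ)) •
          ∑ jj ∈ range (n₁ - (1 + m) + 1), ∑ j ∈ Icc 1 n₂,
            pfC w j (n₁ - (1 + m) - jj) • M (n₁ - jj) j := by
    rw [← Finset.Ico_add_one_right_eq_Icc, Finset.sum_Ico_eq_sum_range]
    simp only [Nat.add_sub_cancel]
  rw [h2]
  refine Finset.sum_congr rfl fun m hm => ?_
  have hmn : m < n₁ := mem_range.mp hm
  rw [Finset.smul_sum]
  refine Finset.sum_bij' (fun i _ => n₁ - i) (fun jj _ => n₁ - jj) ?_ ?_ ?_ ?_ ?_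
  · intro i hi
    simp only [mem_Icc] at hi
    simp only [mem_range]
    omega
  · intro jj hjj
    simp only [mem_range] at hjj
    simp only [mem_Icc]
    omega
  · intro i hi
    simp only [mem_Icc] at hi
    omega
  · intro jj hjj
    simp only [mem_range] at hjj
    omega
  · intro i hi
    simp only [mem_Icc] at hi
    rw [Finset.smul_sum]
    refine Finset.sum_congr rfl fun j hj => ?_
    rw [show n₁ - (1 + m) - (n₁ - i) = i - 1 - m from by omega,
      show n₁ - (n₁ - i) = i from by omega, smul_smul]
    congr 1
    rw [mul_comm]
    congr 1
    push_cast
    ring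

lemma tA_expand {N : ℕ} (n₁ n₂ : ℕ) (A B : ℕ → Matrix (Fin N) (Fin N) ℂ) (w : ℂ)
    (D : ℕ → Matrix (Fin N) (Fin N) ℂ)
    (hD : ∀ s, D s = (if s = 0 then (1 : Matrix (Fin N) (Fin N) ℂ) else 0)
        + ∑ j ∈ Icc 1 n₂, pfC w j s • B j)
    (m : ℕ) (hm1 : 1 ≤ m) (hm2 : m ≤ n₁) :
    ∑ jj ∈ range (n₁ - m + 1), A (n₁ - jj) * D (n₁ - m - jj)
      = A m + ∑ jj ∈ range (n₁ - m + 1), ∑ j ∈ Icc 1 n₂,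
          pfC w j (n₁ - m - jj) • (A (n₁ - jj) * B j) := by
  have hterm : ∀ jj ∈ range (n₁ - m + 1),
      A (n₁ - jj) * D (n₁ - m - jj)
        = (if jj = n₁ - m then A (n₁ - jj) else 0)
          + ∑ j ∈ Icc 1 n₂, pfC w j (n₁ - m - jj) • (A (n₁ - jj) * B j) := by
    intro jj hjj
    have hjj' : jj ≤ n₁ - m := by simpa [Nat.lt_succ_iff] using hjj
    rw [hD, mul_add, Finset.mul_sum]
    congr 1
    · rw [mul_ite, mul_one, mul_zero]
      by_cases h : jj = n₁ - m
      · rw [if_pos (by omega), if_pos h]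
      · rw [if_neg (by omega), if_neg h]
    · exact Finset.sum_congr rfl fun j hj => mul_smul_comm _ _ _
  rw [Finset.sum_congr rfl hterm, Finset.sum_add_distrib]
  congr 1
  rw [Finset.sum_ite_eq' (range (n₁ - m + 1)) (n₁ - m) (fun jj => A (n₁ - jj))]
  rw [if_pos (by simp [Nat.lt_succ_iff])]
  rw [show n₁ - (n₁ - m) = m from by omega]

lemma tB_expand {N : ℕ} (n₁ n₂ : ℕ) (A B : ℕ → Matrix (Fin N) (Fin N) ℂ) (w : ℂ)
    (D : ℕ → Matrix (Fin N) (Fin N) ℂ)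
    (hD : ∀ s, D s = (if s = 0 then (1 : Matrix (Fin N) (Fin N) ℂ) else 0)
        + ∑ j ∈ Icc 1 n₁, pfC w j s • A j)
    (m : ℕ) (hm1 : 1 ≤ m) (hm2 : m ≤ n₂) :
    ∑ jj ∈ range (n₂ - m + 1), D (n₂ - m - jj) * B (n₂ - jj)
      = B m + ∑ jj ∈ range (n₂ - m + 1), ∑ j ∈ Icc 1 n₁,
          pfC w j (n₂ - m - jj) • (A j * B (n₂ - jj)) := by
  have hterm : ∀ jj ∈ range (n₂ - m + 1),
      D (n₂ - m - jj) * B (n₂ - jj)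
        = (if jj = n₂ - m then B (n₂ - jj) else 0)
          + ∑ j ∈ Icc 1 n₁, pfC w j (n₂ - m - jj) • (A j * B (n₂ - jj)) := by
    intro jj hjj
    have hjj' : jj ≤ n₂ - m := by simpa [Nat.lt_succ_iff] using hjj
    rw [hD, add_mul, Finset.sum_mul]
    congr 1
    · rw [ite_mul, one_mul, zero_mul]
      by_cases h : jj = n₂ - m
      · rw [if_pos (by omega), if_pos h]
      · rw [if_neg (by omega), if_neg h]
    · exact Finset.sum_congr rfl fun j hj => smul_mul_assoc _ _ _
  rw [Finset.sum_congr rfl hterm, Finset.sum_add_distrib]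
  congr 1
  rw [Finset.sum_ite_eq' (range (n₂ - m + 1)) (n₂ - m) (fun jj => B (n₂ - jj))]
  rw [if_pos (by simp [Nat.lt_succ_iff])]
  rw [show n₂ - (n₂ - m) = m from by omega]


/-- Partial-fraction decomposition of the product
`Γ₁(k)Γ₂(k)` of `Γ₁(k) = I + Σ_{j=1}^{n₁} A_j (k−k̄₁)^{−j}` and
`Γ₂(k) = I + Σ_{j=1}^{n₂} B_j (k−k̄₂)^{−j}` for `k̄₁ ≠ k̄₂`:
`Γ₁Γ₂ = I + Σ Ã_j (k−k̄₁)^{−j} + Σ B̃_j (k−k̄₂)^{−j}` with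
`Ã_{n₁−l} = Σ_{j=0}^{l} A_{n₁−j} · (1/(l−j)!) Γ₂^{(l−j)}(k̄₁)` and
`B̃_{n₂−l} = Σ_{j=0}^{l} (1/(l−j)!) Γ₁^{(l−j)}(k̄₂) · B_{n₂−j}`. -/
theorem stmt0 (N n₁ n₂ : ℕ) (hN : 1 ≤ N) (hn₁ : 1 ≤ n₁) (hn₂ : 1 ≤ n₂)
    (kb₁ kb₂ : ℂ) (hk : kb₁ ≠ kb₂)
    (A B : ℕ → Matrix (Fin N) (Fin N) ℂ)
    (Γ₁ Γ₂ : ℂ → Matrix (Fin N) (Fin N) ℂ)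
    (hΓ₁ : ∀ k, Γ₁ k = 1 + ∑ j ∈ Finset.Icc 1 n₁, (k - kb₁) ^ (-(j : ℤ)) • A j)
    (hΓ₂ : ∀ k, Γ₂ k = 1 + ∑ j ∈ Finset.Icc 1 n₂, (k - kb₂) ^ (-(j : ℤ)) • B j)
    (tA tB : ℕ → Matrix (Fin N) (Fin N) ℂ)
    (htA : ∀ l < n₁, tA (n₁ - l) = ∑ j ∈ Finset.range (l + 1),
      A (n₁ - j) * (((Nat.factorial (l - j) : ℂ))⁻¹ • matIterDeriv (l - j) Γ₂ kb₁))
    (htB : ∀ l < n₂, tB (n₂ - l) = ∑ j ∈ Finset.range (l + 1),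
      (((Nat.factorial (l - j) : ℂ))⁻¹ • matIterDeriv (l - j) Γ₁ kb₂) * B (n₂ - j)) :
    ∀ k : ℂ, k ≠ kb₁ → k ≠ kb₂ →
      Γ₁ k * Γ₂ k = 1 + ∑ j ∈ Finset.Icc 1 n₁, (k - kb₁) ^ (-(j : ℤ)) • tA j
        + ∑ j ∈ Finset.Icc 1 n₂, (k - kb₂) ^ (-(j : ℤ)) • tB j := by
  intro k hk1 hk2
  have hu : k - kb₁ ≠ 0 := sub_ne_zero.mpr hk1
  have hv : k - kb₂ ≠ 0 := sub_ne_zero.mpr hk2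
  have hw : kb₁ - kb₂ ≠ 0 := sub_ne_zero.mpr hk
  have hvw : k - kb₂ = (k - kb₁) + (kb₁ - kb₂) := by ring
  have hD2 := matD n₂ kb₁ kb₂ hk B Γ₂ hΓ₂
  have hD1 := matD n₁ kb₂ kb₁ (Ne.symm hk) A Γ₁ hΓ₁
  have hexp : ∑ i ∈ Icc 1 n₁, ∑ j ∈ Icc 1 n₂,
        ((k - kb₁) ^ (-(i : ℤ)) • A i) * ((k - kb₂) ^ (-(j : ℤ)) • B j)
      = (∑ i ∈ Icc 1 n₁, ∑ j ∈ Icc 1 n₂, ∑ m ∈ range i,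
          (pfC (kb₁ - kb₂) j (i - 1 - m) * (k - kb₁) ^ (-(m : ℤ) - 1)) • (A i * B j))
        + ∑ i ∈ Icc 1 n₁, ∑ j ∈ Icc 1 n₂, ∑ m ∈ range j,
          (pfC (kb₂ - kb₁) i (j - 1 - m) * (k - kb₂) ^ (-(m : ℤ) - 1)) • (A i * B j) := by
    rw [← Finset.sum_add_distrib]
    refine Finset.sum_congr rfl fun i hi => ?_
    rw [← Finset.sum_add_distrib]
    refine Finset.sum_congr rfl fun j hj => ?_
    simp only [mem_Icc] at hi hj
    rw [smul_mul_smul_comm,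
      PF (k - kb₁) (k - kb₂) (kb₁ - kb₂) hu hv hw hvw i hi.1 j hj.1,
      add_smul, Finset.sum_smul, Finset.sum_smul]
    simp only [neg_sub]
  have hc1 : (∑ i ∈ Icc 1 n₁, ∑ j ∈ Icc 1 n₂, ∑ m ∈ range i,
        (pfC (kb₁ - kb₂) j (i - 1 - m) * (k - kb₁) ^ (-(m : ℤ) - 1)) • (A i * B j))
      = ∑ m ∈ Icc 1 n₁, (k - kb₁) ^ (-(m : ℤ)) •
          ∑ jj ∈ range (n₁ - m + 1), ∑ j ∈ Icc 1 n₂,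
            pfC (kb₁ - kb₂) j (n₁ - m - jj) • (A (n₁ - jj) * B j) :=
    core1 n₁ n₂ (k - kb₁) (kb₁ - kb₂) (fun i j => A i * B j)
  have hswap : (∑ i ∈ Icc 1 n₁, ∑ j ∈ Icc 1 n₂, ∑ m ∈ range j,
        (pfC (kb₂ - kb₁) i (j - 1 - m) * (k - kb₂) ^ (-(m : ℤ) - 1)) • (A i * B j))
      = ∑ j ∈ Icc 1 n₂, ∑ i ∈ Icc 1 n₁, ∑ m ∈ range j,
        (pfC (kb₂ - kb₁) i (j - 1 - m) * (k - kb₂) ^ (-(m : ℤ) - 1)) • (A i * B j) :=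
    Finset.sum_comm
  have hc2 : (∑ j ∈ Icc 1 n₂, ∑ i ∈ Icc 1 n₁, ∑ m ∈ range j,
        (pfC (kb₂ - kb₁) i (j - 1 - m) * (k - kb₂) ^ (-(m : ℤ) - 1)) • (A i * B j))
      = ∑ m ∈ Icc 1 n₂, (k - kb₂) ^ (-(m : ℤ)) •
          ∑ jj ∈ range (n₂ - m + 1), ∑ i ∈ Icc 1 n₁,
            pfC (kb₂ - kb₁) i (n₂ - m - jj) • (A i * B (n₂ - jj)) :=
    core1 n₂ n₁ (k - kb₂) (kb₂ - kb₁) (fun j i => A i * B j)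
  have hR1 : ∑ j ∈ Icc 1 n₁, (k - kb₁) ^ (-(j : ℤ)) • tA j
      = (∑ m ∈ Icc 1 n₁, (k - kb₁) ^ (-(m : ℤ)) • A m)
        + ∑ m ∈ Icc 1 n₁, (k - kb₁) ^ (-(m : ℤ)) •
            ∑ jj ∈ range (n₁ - m + 1), ∑ j ∈ Icc 1 n₂,
              pfC (kb₁ - kb₂) j (n₁ - m - jj) • (A (n₁ - jj) * B j) := by
    rw [← Finset.sum_add_distrib]
    refine Finset.sum_congr rfl fun m hm => ?_
    rw [← smul_add]
    congr 1
    simp only [mem_Icc] at hm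
    have h0 := htA (n₁ - m) (by omega)
    rw [show n₁ - (n₁ - m) = m from by omega] at h0
    rw [h0]
    exact tA_expand n₁ n₂ A B (kb₁ - kb₂)
      (fun s => ((Nat.factorial s : ℂ))⁻¹ • matIterDeriv s Γ₂ kb₁) hD2 m hm.1 hm.2
  have hR2 : ∑ j ∈ Icc 1 n₂, (k - kb₂) ^ (-(j : ℤ)) • tB j
      = (∑ m ∈ Icc 1 n₂, (k - kb₂) ^ (-(m : ℤ)) • B m)
        + ∑ m ∈ Icc 1 n₂, (k - kb₂) ^ (-(m : ℤ)) •
            ∑ jj ∈ range (n₂ - m + 1), ∑ i ∈ Icc 1 n₁,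
              pfC (kb₂ - kb₁) i (n₂ - m - jj) • (A i * B (n₂ - jj)) := by
    rw [← Finset.sum_add_distrib]
    refine Finset.sum_congr rfl fun m hm => ?_
    rw [← smul_add]
    congr 1
    simp only [mem_Icc] at hm
    have h0 := htB (n₂ - m) (by omega)
    rw [show n₂ - (n₂ - m) = m from by omega] at h0
    rw [h0]
    exact tB_expand n₁ n₂ A B (kb₂ - kb₁)
      (fun s => ((Nat.factorial s : ℂ))⁻¹ • matIterDeriv s Γ₁ kb₂) hD1 m hm.1 hm.2
  rw [hΓ₁ k, hΓ₂ k, add_mul, one_mul, mul_add, mul_one, Finset.sum_mul_sum,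
    hexp, hc1, hswap, hc2, hR1, hR2]
  abel
end

section
/- Let N ≥ 1, let k₁ ≠ k̄₁ be complex numbers, let 1 ≤ r₁ ≤ r̃ be integers and s₁,…,s_{r₁} ≥ 1. Suppose Γ(k) = I + Σ_{ν=1}^{r₁} S̄_ν(k), where S̄_ν is the upper block at k̄₁ of size s_ν built from column vectors q̄^{(ν)}_1,…,q̄^{(ν)}_{s_ν} and row vectors p̄^{(ν)}_1,…,p̄^{(ν)}_{s_ν}, and assume the row vectors p̄^{(1)}_1,…,p̄^{(r₁)}_1 are linearly independent. Let u_1,…,u_{r̃} ∈ ℂ^N be column vectors and ū_1,…,ū_{r̃} row vectors with ū_l u_i = (k̄₁−k₁)δ_{l,i}, set R = Σ_{l=1}^{r̃} u_l ū_l, and assume the r₁×r̃ matrix M with entries M_{ν,l} = p̄^{(ν)}_1 u_l has rank r₁. Then there exist column vectors q̄'^{(ν)}_j and row vectors p̄'^{(ν)}_j, for 1 ≤ ν ≤ r̃ and 1 ≤ j ≤ s'_ν where s'_ν = s_ν + 1 for ν ≤ r₁ and s'_ν = 1 for r₁ < ν ≤ r̃, such that Γ(k)(I + (k−k̄₁)^{−1}R)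 = I + Σ_{ν=1}^{r̃} S̄'_ν(k) for all k ≠ k̄₁, where S̄'_ν is the upper block at k̄₁ of size s'_ν built from the primed vectors, and moreover p̄'^{(1)}_1,…,p̄'^{(r̃)}_1 are linearly independent. -/
open Matrix

/-- The "upper block at `κ` of size `s`" built from column vectors `q 1, …, q s` and row
vectors `p 1, …, p s`:  `S̄(k) = Σ_{l=1}^{s} Σ_{j=1}^{l} q_j p_{l+1−j} (k−κ)^{−(s+1−l)}`. -/
noncomputable def upperBlock {N : ℕ} (s : ℕ) (κ : ℂ) (q p : ℕ → Fin N → ℂ) (k : ℂ) :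
    Matrix (Fin N) (Fin N) ℂ :=
  ∑ l ∈ Finset.Icc 1 s, ∑ j ∈ Finset.Icc 1 l,
    (k - κ) ^ (-((s : ℤ) + 1 - (l : ℤ))) • vecMulVec (q j) (p (l + 1 - j))

section Helpers

open Finset

variable {N : ℕ}

/-- The same block, written with nonnegative powers of `z = (k-κ)⁻¹`. -/
noncomputable def UB (s : ℕ) (z : ℂ) (q p : ℕ → Fin N → ℂ) : Matrix (Fin N) (Fin N) ℂ :=
  ∑ l ∈ Finset.Icc 1 s, ∑ j ∈ Finset.Icc 1 l, z ^ (s + 1 - l) • vecMulVec (q j) (p (l + 1 - j))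

lemma vecMulVec_add_right (a b c : Fin N → ℂ) :
    vecMulVec a (b + c) = vecMulVec a b + vecMulVec a c := by
  ext i j; simp [vecMulVec_apply, mul_add]

lemma vecMulVec_zero_right (a : Fin N → ℂ) : vecMulVec a (0 : Fin N → ℂ) = 0 := by
  ext i j; simp [vecMulVec_apply]

lemma vecMulVec_mul (a b : Fin N → ℂ) (R : Matrix (Fin N) (Fin N) ℂ) :
    vecMulVec a b * R = vecMulVec a (b ᵥ* R) := by
  ext i j
  simp [vecMulVec_apply, mul_apply, vecMul, dotProduct, Finset.mul_sum, mul_assoc]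

lemma mul_vecMulVec (A : Matrix (Fin N) (Fin N) ℂ) (a b : Fin N → ℂ) :
    A * vecMulVec a b = vecMulVec (A *ᵥ a) b := by
  ext i j
  simp [vecMulVec_apply, mul_apply, mulVec, dotProduct, Finset.sum_mul, mul_assoc]

lemma upperBlock_eq_UB (s : ℕ) (κ : ℂ) (q p : ℕ → Fin N → ℂ) (k : ℂ) :
    upperBlock s κ q p k = UB s (k - κ)⁻¹ q p := by
  unfold upperBlock UB
  refine Finset.sum_congr rfl fun l hl => Finset.sum_congr rfl fun j hj => ?_
  obtain ⟨h1, h2⟩ := Finset.mem_Icc.mp hl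
  have he : -((s : ℤ) + 1 - (l : ℤ)) = -((s + 1 - l : ℕ) : ℤ) := by
    have : ((s + 1 - l : ℕ) : ℤ) = (s : ℤ) + 1 - l := by
      push_cast [Nat.cast_sub (by omega : l ≤ s + 1)]; ring
    omega
  rw [he, _root_.zpow_neg, zpow_natCast, ← inv_pow]

lemma UB_canon (s : ℕ) (z : ℂ) (q p : ℕ → Fin N → ℂ) :
    UB s z q p
      = ∑ j ∈ Finset.Icc 1 s, ∑ i ∈ Finset.Icc 1 (s + 1 - j),
          z ^ (s + 2 - j - i) • vecMulVec (q j) (p i) := by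
  unfold UB
  rw [Finset.sum_sigma', Finset.sum_sigma']
  refine Finset.sum_nbij' (fun x => ⟨x.2, x.1 + 1 - x.2⟩) (fun y => ⟨y.1 + y.2 - 1, y.1⟩)
    ?_ ?_ ?_ ?_ ?_
  · rintro ⟨l, j⟩ hx
    simp only [Finset.mem_sigma, Finset.mem_Icc] at hx ⊢
    omega
  · rintro ⟨j, i⟩ hy
    simp only [Finset.mem_sigma, Finset.mem_Icc] at hy ⊢
    omega
  · rintro ⟨l, j⟩ hx
    simp only [Finset.mem_sigma, Finset.mem_Icc] at hx
    simp only [Sigma.mk.inj_iff]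
    exact ⟨by omega, heq_of_eq (by omega)⟩
  · rintro ⟨j, i⟩ hy
    simp only [Finset.mem_sigma, Finset.mem_Icc] at hy
    simp only [Sigma.mk.inj_iff]
    exact ⟨trivial, heq_of_eq (by omega)⟩
  · rintro ⟨l, j⟩ hx
    simp only [Finset.mem_sigma, Finset.mem_Icc] at hx
    dsimp only
    have h1 : s + 2 - j - (l + 1 - j) = s + 1 - l := by omega
    rw [h1]

lemma block (s : ℕ) (hs : 1 ≤ s) (z : ℂ) (q p : ℕ → Fin N → ℂ) (v : Fin N → ℂ)
    (R : Matrix (Fin N) (Fin N) ℂ) (q' p' : ℕ → Fin N → ℂ)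
    (hq' : ∀ j, q' j = if j ≤ s then q j else v)
    (hp' : ∀ i, p' i = (if i - 1 ∈ Finset.Icc 1 s then p (i - 1) else 0)
                       + ((if i ∈ Finset.Icc 1 s then p i else 0) ᵥ* R)) :
    UB (s + 1) z q' p' =
      UB s z q p * (1 + z • R)
        + z • (vecMulVec v (p 1 ᵥ* R)
               + (∑ j ∈ Finset.Icc 2 s, vecMulVec (q j) (p (s + 2 - j))) * R) := by
  rw [UB_canon]
  rw [Finset.sum_Icc_succ_top (show (1:ℕ) ≤ s + 1 by omega)]
  have htop : (∑ i ∈ Finset.Icc 1 (s + 1 + 1 - (s + 1)),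
      z ^ (s + 1 + 2 - (s + 1) - i) • vecMulVec (q' (s + 1)) (p' i))
      = z • vecMulVec v (p 1 ᵥ* R) := by
    have h1 : s + 1 + 1 - (s + 1) = 1 := by omega
    rw [h1, Finset.Icc_self, Finset.sum_singleton]
    have h2 : s + 1 + 2 - (s + 1) - 1 = 1 := by omega
    rw [h2, pow_one, hq', hp']
    rw [if_neg (by omega), if_neg (by simp), if_pos (by simp [Finset.mem_Icc, hs])]
    rw [zero_add]
  rw [htop]
  have hmain : (∑ j ∈ Finset.Icc 1 s, ∑ i ∈ Finset.Icc 1 (s + 1 + 1 - j),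
      z ^ (s + 1 + 2 - j - i) • vecMulVec (q' j) (p' i))
      = UB s z q p + (UB s z q p * (z • R)
          + z • ((∑ j ∈ Finset.Icc 2 s, vecMulVec (q j) (p (s + 2 - j))) * R)) := by
    have hsplit : ∀ j ∈ Finset.Icc 1 s,
        (∑ i ∈ Finset.Icc 1 (s + 1 + 1 - j),
          z ^ (s + 1 + 2 - j - i) • vecMulVec (q' j) (p' i))
        = (∑ i ∈ Finset.Icc 1 (s + 1 - j), z ^ (s + 2 - j - i) • vecMulVec (q j) (p i))
          + ((∑ i ∈ Finset.Icc 1 (s + 1 - j),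
               (z ^ (s + 2 - j - i) * z) • vecMulVec (q j) (p i ᵥ* R))
             + z • vecMulVec (q j)
                 ((if s + 2 - j ∈ Finset.Icc 1 s then p (s + 2 - j) else 0) ᵥ* R)) := by
      intro j hj
      obtain ⟨hj1, hj2⟩ := Finset.mem_Icc.mp hj
      have hqj : q' j = q j := by rw [hq', if_pos (by omega)]
      calc ∑ i ∈ Finset.Icc 1 (s + 1 + 1 - j),
              z ^ (s + 1 + 2 - j - i) • vecMulVec (q' j) (p' i)
          = (∑ i ∈ Finset.Icc 1 (s + 1 + 1 - j),
              z ^ (s + 1 + 2 - j - i) • vecMulVec (q j) (if i - 1 ∈ Finset.Icc 1 s then p (i - 1) else 0))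
            + ∑ i ∈ Finset.Icc 1 (s + 1 + 1 - j),
              z ^ (s + 1 + 2 - j - i) • vecMulVec (q j) ((if i ∈ Finset.Icc 1 s then p i else 0) ᵥ* R) := by
            rw [← Finset.sum_add_distrib]
            refine Finset.sum_congr rfl fun i _ => ?_
            rw [hqj, hp', vecMulVec_add_right, smul_add]
        _ = (∑ i ∈ Finset.Icc 1 (s + 1 - j), z ^ (s + 2 - j - i) • vecMulVec (q j) (p i))
            + ((∑ i ∈ Finset.Icc 1 (s + 1 - j),
                 (z ^ (s + 2 - j - i) * z) • vecMulVec (q j) (p i ᵥ* R))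
               + z • vecMulVec (q j)
                   ((if s + 2 - j ∈ Finset.Icc 1 s then p (s + 2 - j) else 0) ᵥ* R)) := by
            congr 1
            · -- SA part : drop i = 1 and shift
              rw [← Finset.sum_subset
                  (show Finset.Icc 2 (s + 1 + 1 - j) ⊆ Finset.Icc 1 (s + 1 + 1 - j) from
                    Finset.Icc_subset_Icc_left (by omega))]
              · refine Finset.sum_nbij' (fun i => i - 1) (fun i => i + 1) ?_ ?_ ?_ ?_ ?_
                · intro i hi; simp only [Finset.mem_Icc] at hi ⊢; omega
                · intro i hi; simp only [Finset.mem_Icc] at hi ⊢; omega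
                · intro i hi; simp only [Finset.mem_Icc] at hi; omega
                · intro i hi; simp only [Finset.mem_Icc] at hi; omega
                · intro i hi
                  simp only [Finset.mem_Icc] at hi
                  rw [if_pos (by simp only [Finset.mem_Icc]; omega)]
                  have he : s + 1 + 2 - j - i = s + 2 - j - (i - 1) := by omega
                  rw [he]
              · intro x hx hx2
                simp only [Finset.mem_Icc] at hx hx2
                have hx1 : x = 1 := by omega
                subst hx1
                rw [if_neg (by simp), vecMulVec_zero_right, smul_zero]
            · -- SB part : peel top i = s + 2 - j
              have hb : s + 1 + 1 - j = (s + 1 - j) + 1 := by omega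
              conv_lhs => rw [hb, Finset.sum_Icc_succ_top (show (1:ℕ) ≤ s + 1 - j + 1 by omega)]
              congr 1
              · refine Finset.sum_congr rfl fun i hi => ?_
                obtain ⟨hi1, hi2⟩ := Finset.mem_Icc.mp hi
                rw [if_pos (by simp only [Finset.mem_Icc]; omega)]
                have he : s + 1 + 2 - j - i = (s + 2 - j - i) + 1 := by omega
                rw [he, pow_succ]
              · have he : s + 1 + 2 - j - (s + 1 - j + 1) = 1 := by omega
                have hi2 : s + 1 - j + 1 = s + 2 - j := by omega
                rw [he, pow_one, hi2]
    rw [Finset.sum_congr rfl hsplit]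
    rw [Finset.sum_add_distrib, Finset.sum_add_distrib]
    congr 1
    · rw [UB_canon]
    congr 1
    · -- sum of SB main parts = UB s z q p * (z • R)
      rw [UB_canon, Finset.sum_mul]
      refine Finset.sum_congr rfl fun j hj => ?_
      rw [Finset.sum_mul]
      refine Finset.sum_congr rfl fun i hi => ?_
      rw [smul_mul_smul_comm, _root_.vecMulVec_mul]
    · -- sum of SB top parts = z • (T * R)
      rw [← Finset.sum_subset
          (show Finset.Icc 2 s ⊆ Finset.Icc 1 s from Finset.Icc_subset_Icc_left (by omega))]
      · rw [Finset.sum_mul, Finset.smul_sum]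
        refine Finset.sum_congr rfl fun j hj => ?_
        obtain ⟨hj1, hj2⟩ := Finset.mem_Icc.mp hj
        rw [if_pos (by simp only [Finset.mem_Icc]; omega), _root_.vecMulVec_mul]
      · intro x hx hx2
        simp only [Finset.mem_Icc] at hx hx2
        have hx1 : x = 1 := by omega
        subst hx1
        rw [if_neg (by simp only [Finset.mem_Icc]; omega), Matrix.zero_vecMul,
          vecMulVec_zero_right, smul_zero]
  rw [hmain, mul_add, mul_one, smul_add]
  abel

lemma exists_extension {r₁ rt : ℕ} (hrt : r₁ ≤ rt) (m : Fin r₁ → (Fin rt → ℂ))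
    (hm : LinearIndependent ℂ m) :
    ∃ G : Matrix (Fin rt) (Fin rt) ℂ, IsUnit G ∧
      ∀ (ν : Fin rt) (h : (ν : ℕ) < r₁), G ν = m ⟨ν, h⟩ := by
  classical
  set W := Submodule.span ℂ (Set.range m) with hW
  obtain ⟨W', hcompl⟩ := Submodule.exists_isCompl W
  have hdim : Module.finrank ℂ (Fin rt → ℂ) = rt := by
    simp [Module.finrank_fintype_fun_eq_card]
  have hWdim : Module.finrank ℂ W = r₁ := by
    rw [hW, finrank_span_eq_card hm, Fintype.card_fin]
  have hW'dim : Module.finrank ℂ W' = rt - r₁ := by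
    have := Submodule.finrank_add_eq_of_isCompl hcompl
    omega
  let b' : Module.Basis (Fin (rt - r₁)) ℂ W' := Module.finBasisOfFinrankEq ℂ W' hW'dim
  let fam : Fin r₁ ⊕ Fin (rt - r₁) → (Fin rt → ℂ) :=
    Sum.elim m fun μ => (b' μ : Fin rt → ℂ)
  have hfam : LinearIndependent ℂ fam := by
    refine hm.sum_type ?_ ?_
    · exact (b'.linearIndependent).map' W'.subtype W'.ker_subtype
    · refine Disjoint.mono_right ?_ hcompl.disjoint
      rw [Submodule.span_le]
      rintro x ⟨μ, rfl⟩
      exact (b' μ).2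
  let E : Fin r₁ ⊕ Fin (rt - r₁) ≃ Fin rt :=
    finSumFinEquiv.trans (finCongr (by omega))
  have hg0 : LinearIndependent ℂ (fam ∘ E.symm) := hfam.comp E.symm E.symm.injective
  refine ⟨Matrix.of (fam ∘ E.symm), ?_, ?_⟩
  · exact linearIndependent_rows_iff_isUnit.mp hg0
  · intro ν h
    have hE : E.symm ν = Sum.inl ⟨ν, h⟩ := by
      rw [Equiv.symm_apply_eq]
      apply Fin.ext
      simp [E, finSumFinEquiv_apply_left]
    show fam (E.symm ν) = m ⟨ν, h⟩
    rw [hE]; rfl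

end Helpers

/-- multiplying a soliton matrix `Γ(k) = I + Σ_{ν=1}^{r₁} S̄_ν(k)` (blocks at `k̄₁`
of sizes `s_ν`, with `p̄^{(1)}_1, …, p̄^{(r₁)}_1` linearly independent) on the right by
`I + (k−k̄₁)^{−1}R`, where `R = Σ_{l=1}^{r̃} u_l ū_l` with `ū_l u_i = (k̄₁−k₁)δ_{l,i}` and the
matrix `M_{ν,l} = p̄^{(ν)}_1 u_l` has rank `r₁ ≤ r̃`, yields a matrix of the same form with `r̃`
blocks of sizes `s_ν + 1` (for `ν ≤ r₁`) and `1` (for `r₁ < ν ≤ r̃`), whose new leading row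
vectors are again linearly independent. -/
theorem stmt1 (N : ℕ) (hN : 1 ≤ N) (k₁ kb₁ : ℂ) (hk : k₁ ≠ kb₁)
    (r₁ rt : ℕ) (hr₁ : 1 ≤ r₁) (hrt : r₁ ≤ rt)
    (s : Fin r₁ → ℕ) (hs : ∀ ν, 1 ≤ s ν)
    (qb pb : Fin r₁ → ℕ → Fin N → ℂ)
    (Γ : ℂ → Matrix (Fin N) (Fin N) ℂ)
    (hΓ : ∀ k, Γ k = 1 + ∑ ν : Fin r₁, upperBlock (s ν) kb₁ (qb ν) (pb ν) k)
    (hindep : LinearIndependent ℂ fun ν : Fin r₁ => pb ν 1)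
    (u ub : Fin rt → Fin N → ℂ)
    (huu : ∀ l i, ub l ⬝ᵥ u i = if l = i then kb₁ - k₁ else 0)
    (R : Matrix (Fin N) (Fin N) ℂ) (hR : R = ∑ l : Fin rt, vecMulVec (u l) (ub l))
    (M : Matrix (Fin r₁) (Fin rt) ℂ) (hM : ∀ ν l, M ν l = pb ν 1 ⬝ᵥ u l)
    (hrank : M.rank = r₁) :
    ∃ qb' pb' : Fin rt → ℕ → Fin N → ℂ,
      (∀ k : ℂ, k ≠ kb₁ →
        Γ k * (1 + (k - kb₁)⁻¹ • R) =
          1 + ∑ ν : Fin rt,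
            upperBlock (if h : (ν : ℕ) < r₁ then s ⟨ν, h⟩ + 1 else 1) kb₁ (qb' ν) (pb' ν) k) ∧
      LinearIndependent ℂ fun ν : Fin rt => pb' ν 1 := by
  classical
  have hkk : kb₁ - k₁ ≠ 0 := sub_ne_zero.mpr (Ne.symm hk)
  -- the rows `ub` are linearly independent
  have hub : LinearIndependent ℂ ub := by
    rw [Fintype.linearIndependent_iff]
    intro c hc i
    have h2 : (∑ l, c l • ub l) ⬝ᵥ u i = 0 := by rw [hc]; simp
    have h3 : ∑ l, c l * (ub l ⬝ᵥ u i) = 0 := by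
      rw [← h2]
      simp only [dotProduct, Finset.sum_apply, Pi.smul_apply, smul_eq_mul, Finset.sum_mul,
        mul_assoc, Finset.mul_sum]
      rw [Finset.sum_comm]
    simp only [huu, mul_ite, mul_zero] at h3
    rw [Finset.sum_ite_eq' Finset.univ i (fun l => c l * (kb₁ - k₁))] at h3
    simp only [Finset.mem_univ, if_true] at h3
    exact (mul_eq_zero.mp h3).resolve_right hkk
  -- the rows of `M` are linearly independent
  have hMrows : LinearIndependent ℂ (fun ν : Fin r₁ => M ν) := by
    rw [linearIndependent_iff_card_eq_finrank_span, Fintype.card_fin]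
    show r₁ = Module.finrank ℂ (Submodule.span ℂ (Set.range fun ν => M ν))
    rw [show (Set.range fun ν : Fin r₁ => M ν) = Set.range M.row from rfl,
      ← Matrix.rank_eq_finrank_span_row M, hrank]
  obtain ⟨G, hG, hGrow⟩ := exists_extension hrt (fun ν => M ν) hMrows
  have hGdet : IsUnit G.det := (Matrix.isUnit_iff_isUnit_det G).mp hG
  -- auxiliary data
  set T : Fin r₁ → Matrix (Fin N) (Fin N) ℂ :=
    fun ν => ∑ j ∈ Finset.Icc 2 (s ν), vecMulVec (qb ν j) (pb ν (s ν + 2 - j)) with hT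
  set C : Matrix (Fin N) (Fin N) ℂ := 1 - ∑ ν, T ν with hC
  set V : Matrix (Fin rt) (Fin N) ℂ := (G⁻¹)ᵀ * (Matrix.of fun l a => (C *ᵥ u l) a) with hV
  set g : Fin rt → Fin N → ℂ := fun ν => ∑ l, G ν l • ub l with hgdef
  -- leading primed rows
  have hgr : ∀ (ν : Fin rt) (h : (ν : ℕ) < r₁), pb ⟨ν, h⟩ 1 ᵥ* R = g ν := by
    intro ν h
    have hGl : ∀ l, G ν l = pb ⟨ν, h⟩ 1 ⬝ᵥ u l := fun l => by
      rw [congrFun (hGrow ν h) l, hM]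
    funext b
    calc (pb ⟨ν, h⟩ 1 ᵥ* R) b
        = ∑ a, pb ⟨ν, h⟩ 1 a * ∑ l, u l a * ub l b := by
          rw [hR]; simp [vecMul, dotProduct, Matrix.sum_apply, vecMulVec_apply]
      _ = ∑ l, (∑ a, pb ⟨ν, h⟩ 1 a * u l a) * ub l b := by
          simp_rw [Finset.mul_sum]
          rw [Finset.sum_comm]
          simp_rw [Finset.sum_mul, mul_assoc]
      _ = g ν b := by
          simp [hgdef, hGl, dotProduct, Finset.sum_apply]
  -- the key identity
  have hkey : ∑ ν : Fin rt, vecMulVec (V ν) (g ν) = C * R := by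
    have hGV : Gᵀ * V = Matrix.of fun l a => (C *ᵥ u l) a := by
      rw [hV, ← Matrix.mul_assoc, ← Matrix.transpose_mul, Matrix.nonsing_inv_mul G hGdet,
        Matrix.transpose_one, Matrix.one_mul]
    ext a b
    have hGV' : ∀ l, (∑ ν, V ν a * G ν l) = (C *ᵥ u l) a := by
      intro l
      have h1 := congrFun (congrFun hGV l) a
      rw [Matrix.mul_apply] at h1
      simp only [Matrix.transpose_apply, Matrix.of_apply] at h1
      rw [← h1]
      exact Finset.sum_congr rfl fun ν _ => mul_comm _ _
    calc (∑ ν : Fin rt, vecMulVec (V ν) (g ν)) a b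
        = ∑ ν, V ν a * ∑ l, G ν l * ub l b := by
          simp [Matrix.sum_apply, vecMulVec_apply, hgdef, Finset.sum_apply]
      _ = ∑ l, (∑ ν, V ν a * G ν l) * ub l b := by
          simp_rw [Finset.mul_sum]
          rw [Finset.sum_comm]
          simp_rw [Finset.sum_mul, mul_assoc]
      _ = ∑ l, (C *ᵥ u l) a * ub l b := by simp [hGV']
      _ = (C * R) a b := by
          rw [hR, Matrix.mul_sum]
          simp [Matrix.sum_apply, _root_.mul_vecMulVec, vecMulVec_apply]
  -- independence of g
  have hgind : LinearIndependent ℂ g := by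
    rw [Fintype.linearIndependent_iff]
    intro c hc
    have h0 : ∑ l, (∑ ν, c ν * G ν l) • ub l = 0 := by
      calc ∑ l, (∑ ν, c ν * G ν l) • ub l
          = ∑ ν, c ν • g ν := by
            funext b
            simp only [hgdef, Finset.sum_apply, Pi.smul_apply, smul_eq_mul, Finset.sum_mul,
              Finset.mul_sum, mul_assoc]
            rw [Finset.sum_comm]
        _ = 0 := hc
    have hcv : c ᵥ* G = 0 := by
      funext l
      have := Fintype.linearIndependent_iff.mp hub _ h0 l
      simpa [Matrix.vecMul, dotProduct] using this
    have hc0 : c = 0 := by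
      have h2 := congrArg (fun w => w ᵥ* G⁻¹) hcv
      simpa [Matrix.vecMul_vecMul, Matrix.mul_nonsing_inv G hGdet] using h2
    exact fun i => congrFun hc0 i
  -- the reindexing equivalence
  have hErt : r₁ + (rt - r₁) = rt := by omega
  set E : Fin r₁ ⊕ Fin (rt - r₁) ≃ Fin rt := finSumFinEquiv.trans (finCongr hErt) with hE
  have hEl : ∀ ν : Fin r₁, ((E (Sum.inl ν)) : ℕ) = (ν : ℕ) := by
    intro ν; simp [hE, finSumFinEquiv_apply_left]
  have hEr : ∀ μ : Fin (rt - r₁), ((E (Sum.inr μ)) : ℕ) = r₁ + (μ : ℕ) := by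
    intro μ; simp [hE, finSumFinEquiv_apply_right]
  -- the primed vectors
  set qb' : Fin rt → ℕ → Fin N → ℂ := fun ν j =>
    if h : (ν : ℕ) < r₁ then (if j ≤ s ⟨ν, h⟩ then qb ⟨ν, h⟩ j else V ν) else V ν with hqb'
  set pb' : Fin rt → ℕ → Fin N → ℂ := fun ν i =>
    if h : (ν : ℕ) < r₁ then
      ((if i - 1 ∈ Finset.Icc 1 (s ⟨ν, h⟩) then pb ⟨ν, h⟩ (i - 1) else 0)
        + ((if i ∈ Finset.Icc 1 (s ⟨ν, h⟩) then pb ⟨ν, h⟩ i else 0) ᵥ* R))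
    else g ν with hpb'
  have hpb1 : ∀ ν : Fin rt, pb' ν 1 = g ν := by
    intro ν
    by_cases h : (ν : ℕ) < r₁
    · rw [hpb']
      simp only [dif_pos h]
      rw [if_neg (by simp), if_pos (by simp [Finset.mem_Icc, hs]), zero_add]
      exact hgr ν h
    · rw [hpb']; simp only [dif_neg h]
  refine ⟨qb', pb', ?_, ?_⟩
  swap
  · have : (fun ν : Fin rt => pb' ν 1) = g := funext hpb1
    rw [this]; exact hgind
  intro k hki
  set z : ℂ := (k - kb₁)⁻¹ with hz
  -- reduce upperBlocks to UB
  have hUBΓ : (∑ ν : Fin r₁, upperBlock (s ν) kb₁ (qb ν) (pb ν) k)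
      = ∑ ν : Fin r₁, UB (s ν) z (qb ν) (pb ν) :=
    Finset.sum_congr rfl fun ν _ => upperBlock_eq_UB _ _ _ _ _
  have hUBgoal : (∑ ν : Fin rt,
        upperBlock (if h : (ν : ℕ) < r₁ then s ⟨ν, h⟩ + 1 else 1) kb₁ (qb' ν) (pb' ν) k)
      = ∑ ν : Fin rt,
        UB (if h : (ν : ℕ) < r₁ then s ⟨ν, h⟩ + 1 else 1) z (qb' ν) (pb' ν) :=
    Finset.sum_congr rfl fun ν _ => upperBlock_eq_UB _ _ _ _ _
  rw [hΓ, hUBΓ, hUBgoal]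
  -- per-block transformation, left part
  have hblock : ∀ ν : Fin r₁,
      UB (s ν) z (qb ν) (pb ν) * (1 + z • R)
        = UB (s ν + 1) z (qb' (E (Sum.inl ν))) (pb' (E (Sum.inl ν)))
          - z • (vecMulVec (V (E (Sum.inl ν))) (g (E (Sum.inl ν))) + T ν * R) := by
    intro ν
    have h : ((E (Sum.inl ν)) : ℕ) < r₁ := by rw [hEl]; exact ν.2
    have hfin : (⟨((E (Sum.inl ν)) : ℕ), h⟩ : Fin r₁) = ν := Fin.ext (hEl ν)
    have hb := block (s ν) (hs ν) z (qb ν) (pb ν) (V (E (Sum.inl ν))) R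
      (qb' (E (Sum.inl ν))) (pb' (E (Sum.inl ν)))
      (fun j => by rw [hqb']; simp only [dif_pos h, hfin])
      (fun i => by rw [hpb']; simp only [dif_pos h, hfin])
    have hgr2 : pb ν 1 ᵥ* R = g (E (Sum.inl ν)) := by
      rw [← hfin]; exact hgr _ h
    rw [hgr2] at hb
    rw [hb, hT]
    abel
  -- size-one blocks, right part
  have hone : ∀ μ : Fin (rt - r₁),
      UB 1 z (qb' (E (Sum.inr μ))) (pb' (E (Sum.inr μ)))
        = z • vecMulVec (V (E (Sum.inr μ))) (g (E (Sum.inr μ))) := by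
    intro μ
    have h : ¬ ((E (Sum.inr μ)) : ℕ) < r₁ := by rw [hEr]; omega
    rw [UB]
    rw [Finset.Icc_self, Finset.sum_singleton, Finset.Icc_self, Finset.sum_singleton]
    norm_num
    rw [hqb', hpb']
    simp only [dif_neg h]
  -- split the Fin rt sum
  have hsplitRT : ∀ F : Fin rt → Matrix (Fin N) (Fin N) ℂ,
      (∑ ν : Fin rt, F ν) = (∑ ν : Fin r₁, F (E (Sum.inl ν))) + ∑ μ, F (E (Sum.inr μ)) := by
    intro F
    rw [← Equiv.sum_comp E F, Fintype.sum_sum_type]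
  have hdite : ∀ ν : Fin r₁,
      UB (if h : ((E (Sum.inl ν)) : ℕ) < r₁ then s ⟨(E (Sum.inl ν) : ℕ), h⟩ + 1 else 1) z
          (qb' (E (Sum.inl ν))) (pb' (E (Sum.inl ν)))
        = UB (s ν + 1) z (qb' (E (Sum.inl ν))) (pb' (E (Sum.inl ν))) := by
    intro ν
    have h : ((E (Sum.inl ν)) : ℕ) < r₁ := by rw [hEl]; exact ν.2
    have hfin : (⟨((E (Sum.inl ν)) : ℕ), h⟩ : Fin r₁) = ν := Fin.ext (hEl ν)
    rw [dif_pos h, hfin]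
  have hdite2 : ∀ μ : Fin (rt - r₁),
      UB (if h : ((E (Sum.inr μ)) : ℕ) < r₁ then s ⟨(E (Sum.inr μ) : ℕ), h⟩ + 1 else 1) z
          (qb' (E (Sum.inr μ))) (pb' (E (Sum.inr μ)))
        = UB 1 z (qb' (E (Sum.inr μ))) (pb' (E (Sum.inr μ))) := by
    intro μ
    have h : ¬ ((E (Sum.inr μ)) : ℕ) < r₁ := by rw [hEr]; omega
    rw [dif_neg h]
  rw [hsplitRT (fun ν => UB (if h : (ν : ℕ) < r₁ then s ⟨ν, h⟩ + 1 else 1) z (qb' ν) (pb' ν))]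
  simp only [hdite, hdite2, hone]
  -- now pure algebra
  rw [add_mul, one_mul, Finset.sum_mul]
  simp only [hblock]
  rw [Finset.sum_sub_distrib]
  have hz2 : (∑ ν : Fin r₁, z • (vecMulVec (V (E (Sum.inl ν))) (g (E (Sum.inl ν))) + T ν * R))
      = z • (∑ ν : Fin r₁, vecMulVec (V (E (Sum.inl ν))) (g (E (Sum.inl ν))))
        + z • ((∑ ν : Fin r₁, T ν) * R) := by
    rw [← Finset.smul_sum, ← smul_add, Finset.sum_add_distrib, Finset.sum_mul]
  rw [hz2]
  -- note: convert the inr-sum to a single smul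
  rw [show (∑ μ, z • vecMulVec (V (E (Sum.inr μ))) (g (E (Sum.inr μ))))
      = z • ∑ μ, vecMulVec (V (E (Sum.inr μ))) (g (E (Sum.inr μ))) from
    (Finset.smul_sum).symm]
  have hRR : z • R
      = z • (∑ ν : Fin r₁, vecMulVec (V (E (Sum.inl ν))) (g (E (Sum.inl ν))))
        + z • ((∑ ν : Fin r₁, T ν) * R)
        + z • ∑ μ, vecMulVec (V (E (Sum.inr μ))) (g (E (Sum.inr μ))) := by
    have hCR : C * R = R - (∑ ν : Fin r₁, T ν) * R := by
      rw [hC, sub_mul, one_mul]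
    have h5 : z • (C * R) = z • R - z • ((∑ ν : Fin r₁, T ν) * R) := by
      rw [hCR, smul_sub]
    rw [← hkey, hsplitRT (fun ν => vecMulVec (V ν) (g ν)), smul_add] at h5
    have h6 := eq_sub_iff_add_eq.mp h5
    rw [← h6]
    abel
  rw [hRR]
  abel
end

section
/- Let N ≥ 1, r₁ ≥ 1, sizes s₁,…,s_{r₁} ≥ 1, and complex numbers κ₁,…,κ_{r₁} and κ̄₁,…,κ̄_{r₁} with κ_ν ≠ κ̄_μ for all ν, μ. For each ν let q̄^{(ν)}_i, p^{(ν)}_i ∈ ℂ^N be column vectors and p̄^{(ν)}_i, q^{(ν)}_i row vectors (1 ≤ i ≤ s_ν). Set Γ(k) = I + Σ_{ν=1}^{r₁} S̄_ν(k) and Γinv(k) = I + Σ_{ν=1}^{r₁} S_ν(k), where S̄_ν is the upper block at κ̄_ν of size s_ν built from the q̄^{(ν)}, p̄^{(ν)}, and S_ν is the lower block at κ_ν of size s_ν built from the p^{(ν)}, q^{(ν)}. Assume Γ(k)Γinv(k) = I for every k not among the κ_ν and κ̄_ν. Then: (a) if for each point κ occurring among κ₁,…,κ_{r₁} the row vectors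 {q^{(ν)}_1 : κ_ν = κ} are linearly independent, then for every ν and every l ∈ {1,…,s_ν} one has Σ_{m=0}^{l−1} (1/m!) Γ^{(m)}(κ_ν) p^{(ν)}_{l−m} = 0; (b) if for each point κ̄ occurring among κ̄₁,…,κ̄_{r₁} the column vectors {q̄^{(ν)}_1 : κ̄_ν = κ̄} are linearly independent, then for every ν and every l ∈ {1,…,s_ν} one has Σ_{m=0}^{l−1} (1/m!) p̄^{(ν)}_{l−m} Γinv^{(m)}(κ̄_ν) = 0. -/
open Matrix

/-- The "lower block at `κ` of size `s`":
`S(k) = Σ_{l=1}^{s} Σ_{j=1}^{l} p_{l+1−j} q_j (k−κ)^{−(s+1−l)}` (columns `p`, rows `q`). -/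
noncomputable def lowerBlock {N : ℕ} (s : ℕ) (κ : ℂ) (p q : ℕ → Fin N → ℂ) (k : ℂ) :
    Matrix (Fin N) (Fin N) ℂ :=
  ∑ l ∈ Finset.Icc 1 s, ∑ j ∈ Finset.Icc 1 l,
    (k - κ) ^ (-((s : ℤ) + 1 - (l : ℤ))) • vecMulVec (p (l + 1 - j)) (q j)

section Helpers

open Finset Topology

/-- The derivative of a function analytic at a point is analytic there. -/
lemma AnalyticAt.derivAux {f : ℂ → ℂ} {x : ℂ} (h : AnalyticAt ℂ f x) :
    AnalyticAt ℂ (deriv f) x := by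
  obtain ⟨s, hs, hf⟩ := h.eventually_analyticAt.exists_mem
  obtain ⟨t, hts, hto, hxt⟩ := mem_nhds_iff.mp hs
  have hA : AnalyticOnNhd ℂ f t := fun y hy => hf y (hts hy)
  exact hA.deriv x hxt

lemma eventuallyDiffAux {f : ℂ → ℂ} {x : ℂ} (h : AnalyticAt ℂ f x) :
    ∀ᶠ y in 𝓝 x, DifferentiableAt ℂ f y :=
  h.eventually_analyticAt.mono fun _ hy => hy.differentiableAt

/-- Additivity of `iteratedDeriv` at a point, for analytic functions. -/
lemma iterAdd {n : ℕ} {f g : ℂ → ℂ} {x : ℂ} (hf : AnalyticAt ℂ f x)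
    (hg : AnalyticAt ℂ g x) :
    iteratedDeriv n (fun k => f k + g k) x
      = iteratedDeriv n f x + iteratedDeriv n g x := by
  induction n generalizing f g with
  | zero => simp
  | succ n IH =>
    rw [iteratedDeriv_succ', iteratedDeriv_succ', iteratedDeriv_succ']
    have he : (deriv fun k => f k + g k) =ᶠ[𝓝 x] fun k => deriv f k + deriv g k := by
      filter_upwards [eventuallyDiffAux hf, eventuallyDiffAux hg] with y h1 h2
      exact deriv_add h1 h2
    rw [he.iteratedDeriv_eq n]
    exact IH hf.derivAux hg.derivAux

lemma iterZeroFun (n : ℕ) (x : ℂ) : iteratedDeriv n (fun _ => (0:ℂ)) x = 0 := by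
  induction n with
  | zero => simp
  | succ n IH =>
    rw [iteratedDeriv_succ']
    simpa [deriv_const'] using IH

lemma iterConstMul (n : ℕ) (c : ℂ) (f : ℂ → ℂ) (x : ℂ) :
    iteratedDeriv n (fun k => c * f k) x = c * iteratedDeriv n f x := by
  induction n generalizing f with
  | zero => simp
  | succ n IH =>
    rw [iteratedDeriv_succ', iteratedDeriv_succ']
    have : (deriv fun k => c * f k) = fun k => c * deriv f k := by
      funext y; exact deriv_const_mul_field c
    rw [this, IH]

lemma iterMulConst (n : ℕ) (c : ℂ) (f : ℂ → ℂ) (x : ℂ) :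
    iteratedDeriv n (fun k => f k * c) x = iteratedDeriv n f x * c := by
  simp only [mul_comm _ c]
  exact iterConstMul n c f x

lemma iterSum {ι : Type*} (t : Finset ι) (f : ι → ℂ → ℂ) {x : ℂ} (n : ℕ)
    (hf : ∀ i ∈ t, AnalyticAt ℂ (f i) x) :
    iteratedDeriv n (fun k => ∑ i ∈ t, f i k) x = ∑ i ∈ t, iteratedDeriv n (f i) x := by
  induction t using Finset.cons_induction with
  | empty => simpa using iterZeroFun n x
  | cons a t ha IH =>
    simp only [Finset.sum_cons]
    rw [iterAdd (hf a (Finset.mem_cons_self a t))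
        (Finset.analyticAt_fun_sum _ fun i hi => hf i (Finset.mem_cons_of_mem hi)),
      IH fun i hi => hf i (Finset.mem_cons_of_mem hi)]

lemma analyticAtZpowSub {a x : ℂ} (h : x ≠ a) (m : ℤ) :
    AnalyticAt ℂ (fun k => (k - a) ^ m) x := by
  have hb : AnalyticAt ℂ (fun k => k - a) x := analyticAt_id.sub analyticAt_const
  obtain ⟨t, rfl | rfl⟩ := Int.eq_nat_or_neg m
  · simpa [zpow_natCast] using hb.fun_pow t
  · have : (fun k : ℂ => (k - a) ^ (-(t:ℤ))) = fun k => ((k - a) ^ t)⁻¹ := by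
      funext k; rw [_root_.zpow_neg, zpow_natCast]
    rw [this]
    exact (hb.pow t).inv (pow_ne_zero _ (sub_ne_zero.mpr h))

/-- The key computation: `dⁿ/dkⁿ [(k-κ₀)^e φ(k)]` at `κ₀`. -/
lemma iterPowMul (κ₀ : ℂ) {φ : ℂ → ℂ} (hφ : AnalyticAt ℂ φ κ₀) (e n : ℕ) :
    iteratedDeriv n (fun k => (k - κ₀) ^ e * φ k) κ₀
      = if e ≤ n then (n.choose e : ℂ) * (e.factorial : ℂ) * iteratedDeriv (n - e) φ κ₀
        else 0 := by
  induction n generalizing e φ with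
  | zero =>
    rcases Nat.eq_zero_or_pos e with rfl | he
    · simp
    · simp [zero_pow he.ne', Nat.not_le_of_lt he, iteratedDeriv_zero]
  | succ n IH =>
    rcases Nat.eq_zero_or_pos e with rfl | he
    · simp only [pow_zero, one_mul]
      simp [Nat.choose_zero_right]
    · obtain ⟨e', rfl⟩ := Nat.exists_eq_succ_of_ne_zero he.ne'
      rw [iteratedDeriv_succ']
      have hpd : ∀ y : ℂ, HasDerivAt (fun k : ℂ => (k - κ₀) ^ (e' + 1))
          (((e' : ℂ) + 1) * (y - κ₀) ^ e') y := by
        intro y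
        have h1 : HasDerivAt (fun k : ℂ => k - κ₀) 1 y := (hasDerivAt_id y).sub_const κ₀
        simpa [mul_one] using (h1.fun_pow (e' + 1))
      have he2 : (deriv fun k => (k - κ₀) ^ (e' + 1) * φ k) =ᶠ[𝓝 κ₀]
          fun k => ((e' : ℂ) + 1) * ((k - κ₀) ^ e' * φ k)
            + (k - κ₀) ^ (e' + 1) * deriv φ k := by
        filter_upwards [hφ.eventually_analyticAt] with y hy
        rw [deriv_fun_mul ((hpd y).differentiableAt) hy.differentiableAt, (hpd y).deriv]
        ring
      rw [he2.iteratedDeriv_eq n]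
      have ha1 : AnalyticAt ℂ (fun k => ((e' : ℂ) + 1) * ((k - κ₀) ^ e' * φ k)) κ₀ :=
        (analyticAt_const.mul (((analyticAt_id.sub analyticAt_const).pow e').mul hφ))
      have ha2 : AnalyticAt ℂ (fun k => (k - κ₀) ^ (e' + 1) * deriv φ k) κ₀ :=
        ((analyticAt_id.sub analyticAt_const).pow (e' + 1)).mul hφ.derivAux
      rw [iterAdd ha1 ha2, iterConstMul, IH hφ e', IH hφ.derivAux (e' + 1)]
      rcases Nat.lt_or_ge n e' with h1 | h1
      · rw [if_neg (by omega), if_neg (by omega), if_neg (by omega)]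
        ring
      · rcases Nat.eq_or_lt_of_le h1 with rfl | h2
        · rw [if_pos le_rfl, if_neg (by omega), if_pos (by omega)]
          simp only [Nat.sub_self, Nat.choose_self, Nat.cast_one, Nat.choose_succ_self_right]
          push_cast [Nat.factorial_succ]
          ring
        · rw [if_pos (by omega), if_pos (by omega), if_pos (by omega)]
          have hd : iteratedDeriv (n - (e' + 1)) (deriv φ) κ₀
              = iteratedDeriv (n - e') φ κ₀ := by
            rw [← iteratedDeriv_succ']
            congr 1
            omega
          rw [hd]
          have hc : (n + 1).choose (e' + 1) = n.choose e' + n.choose (e' + 1) :=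
            Nat.choose_succ_succ n e'
          push_cast [hc, Nat.factorial_succ]
          ring

lemma sumSwapIcc {β : Type*} [AddCommMonoid β] (A : ℕ) (f : ℕ → ℕ → β) :
    ∑ l ∈ Icc 1 A, ∑ j ∈ Icc 1 l, f l j = ∑ j ∈ Icc 1 A, ∑ l ∈ Icc j A, f l j := by
  rw [Finset.sum_sigma', Finset.sum_sigma']
  refine Finset.sum_nbij' (fun x => ⟨x.2, x.1⟩) (fun x => ⟨x.2, x.1⟩) ?_ ?_ ?_ ?_ ?_ <;>
    simp only [Finset.mem_sigma, Finset.mem_Icc] <;> intros <;> first | omega | trivial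

lemma sumIccReflect {β : Type*} [AddCommMonoid β] (j A : ℕ) (g : ℕ → β) :
    ∑ l ∈ Icc j A, g l = ∑ m ∈ range (A + 1 - j), g (A - m) := by
  refine Finset.sum_nbij' (fun l => A - l) (fun m => A - m) ?_ ?_ ?_ ?_ ?_ <;>
    simp only [Finset.mem_Icc, Finset.mem_range] <;> intros <;>
      first | omega | trivial | (congr 1; omega)

lemma mulVecMulVecApply {N : ℕ} (A : Matrix (Fin N) (Fin N) ℂ) (x y : Fin N → ℂ)
    (a b : Fin N) : (A * vecMulVec x y) a b = A.mulVec x a * y b := by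
  simp [Matrix.mul_apply, vecMulVec_apply, Matrix.mulVec, dotProduct,
    Finset.sum_mul, mul_assoc]

end Helpers

section Key

open Finset Topology

/-- The main lemma, in the form of part (a). -/
lemma keyLemma {N r₁ : ℕ} (s : Fin r₁ → ℕ) (hs : ∀ ν, 1 ≤ s ν)
    (κ κb : Fin r₁ → ℂ) (hκ : ∀ ν μ, κ ν ≠ κb μ)
    (qb pb p q : Fin r₁ → ℕ → Fin N → ℂ)
    (Γ Γinv : ℂ → Matrix (Fin N) (Fin N) ℂ)
    (hΓ : ∀ k, Γ k = 1 + ∑ ν : Fin r₁, upperBlock (s ν) (κb ν) (qb ν) (pb ν) k)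
    (hΓinv : ∀ k, Γinv k = 1 + ∑ ν : Fin r₁, lowerBlock (s ν) (κ ν) (p ν) (q ν) k)
    (hprod : ∀ k : ℂ, (∀ ν, k ≠ κ ν) → (∀ ν, k ≠ κb ν) → Γ k * Γinv k = 1)
    (hli : ∀ κ₀ : ℂ, LinearIndependent ℂ fun ν : {ν : Fin r₁ // κ ν = κ₀} => q ν.1 1) :
    ∀ ν₀ : Fin r₁, ∀ l₀ ∈ Finset.Icc 1 (s ν₀),
      ∑ m ∈ Finset.range l₀,
        ((Nat.factorial m : ℂ))⁻¹ • (matIterDeriv m Γ (κ ν₀)).mulVec (p ν₀ (l₀ - m)) = 0 := by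
  intro ν₀ l₀ hl₀
  rw [Finset.mem_Icc] at hl₀
  set κ₀ := κ ν₀ with hκ₀def
  set M := 1 + ∑ ν, s ν with hMdef
  have hsM : ∀ ν, s ν + 1 ≤ M := by
    intro ν
    have := Finset.single_le_sum (f := s) (fun i _ => Nat.zero_le _) (Finset.mem_univ ν)
    omega
  have hκ₀b : ∀ μ, κ₀ ≠ κb μ := fun μ => hκ ν₀ μ
  set B : Fin r₁ → ℕ → (Fin N → ℂ) := fun ν L =>
    ∑ m ∈ Finset.range L,
      ((Nat.factorial m : ℂ))⁻¹ • (matIterDeriv m Γ κ₀).mulVec (p ν (L - m)) with hBdef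
  -- analyticity of the entries of Γ at κ₀
  have hAΓ : ∀ a c : Fin N, AnalyticAt ℂ (fun k => Γ k a c) κ₀ := by
    intro a c
    have hre : (fun k => Γ k a c) = fun k =>
        (1 : Matrix (Fin N) (Fin N) ℂ) a c + ∑ ν, ∑ l ∈ Icc 1 (s ν), ∑ j ∈ Icc 1 l,
          (k - κb ν) ^ (-((s ν : ℤ) + 1 - (l : ℤ))) * (qb ν j a * pb ν (l + 1 - j) c) := by
      funext k
      rw [hΓ k]
      simp [upperBlock, Matrix.add_apply, Matrix.sum_apply, Matrix.smul_apply,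
        vecMulVec_apply, smul_eq_mul]
    rw [hre]
    exact analyticAt_const.add (Finset.analyticAt_fun_sum _ fun ν _ =>
      Finset.analyticAt_fun_sum _ fun l _ => Finset.analyticAt_fun_sum _ fun j _ =>
        (analyticAtZpowSub (hκ₀b ν) _).mul analyticAt_const)
  have hreΦ : ∀ (x : Fin N → ℂ) (a : Fin N),
      (fun k => (Γ k).mulVec x a) = fun k => ∑ c, Γ k a c * x c := by
    intro x a
    funext k
    simp [Matrix.mulVec, dotProduct]
  have hAΦ : ∀ (x : Fin N → ℂ) (a : Fin N), AnalyticAt ℂ (fun k => (Γ k).mulVec x a) κ₀ := by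
    intro x a
    rw [hreΦ]
    exact Finset.analyticAt_fun_sum _ fun c _ => (hAΓ a c).mul analyticAt_const
  have hD : ∀ (m : ℕ) (x : Fin N → ℂ) (a : Fin N),
      iteratedDeriv m (fun k => (Γ k).mulVec x a) κ₀ = (matIterDeriv m Γ κ₀).mulVec x a := by
    intro m x a
    rw [hreΦ, iterSum _ (fun c k => Γ k a c * x c) m (fun c _ => (hAΓ a c).mul analyticAt_const)]
    simp only [iterMulConst]
    simp [matIterDeriv, Matrix.mulVec, dotProduct]
  -- the Laurent-coefficient identities
  have hmain : ∀ u : ℕ, 1 ≤ u → u ≤ M → ∀ a b : Fin N,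
      ∑ ν ∈ Finset.univ.filter (fun ν => κ ν = κ₀), ∑ j ∈ Finset.Icc 1 (s ν + 1 - u),
        B ν (s ν + 2 - u - j) a * q ν j b = 0 := by
    intro u hu1 huM a b
    set n := M - u with hndef
    set cf : Fin r₁ → ℕ → ℂ → ℂ := fun ν l k =>
      if κ ν = κ₀ then (k - κ₀) ^ (M - (s ν + 1 - l))
      else (k - κ₀) ^ M * (k - κ ν) ^ (-((s ν : ℤ) + 1 - (l : ℤ))) with hcf
    set h : ℂ → ℂ := fun k =>
      (k - κ₀) ^ M * (Γ k a b - (1 : Matrix (Fin N) (Fin N) ℂ) a b)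
        + ∑ ν, ∑ l ∈ Icc 1 (s ν), ∑ j ∈ Icc 1 l,
            cf ν l k * ((Γ k).mulVec (p ν (l + 1 - j)) a * q ν j b) with hhdef
    -- h vanishes near κ₀
    have hzero : h =ᶠ[𝓝 κ₀] fun _ => 0 := by
      have hev : ∀ᶠ k in 𝓝 κ₀, (∀ μ, k ≠ κb μ) ∧ (∀ μ, κ μ ≠ κ₀ → k ≠ κ μ) := by
        rw [Filter.eventually_and]
        constructor
        · rw [Filter.eventually_all]
          exact fun μ => eventually_ne_nhds (hκ₀b μ)
        · rw [Filter.eventually_all]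
          intro μ
          by_cases hμ : κ μ = κ₀
          · filter_upwards with k hk
            exact absurd hμ hk
          · filter_upwards [eventually_ne_nhds (Ne.symm hμ)] with k hk _
            exact hk
      filter_upwards [hev] with k hk
      obtain ⟨hkb, hkν⟩ := hk
      by_cases hkk : k = κ₀
      · simp only [hhdef]
        rw [hkk, sub_self, zero_pow (by omega : M ≠ 0), zero_mul, zero_add]
        apply Finset.sum_eq_zero; intro ν _
        apply Finset.sum_eq_zero; intro l hl
        apply Finset.sum_eq_zero; intro j _
        rw [Finset.mem_Icc] at hl
        have hc0 : cf ν l κ₀ = 0 := by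
          simp only [hcf]
          split
          · rw [sub_self, zero_pow]
            have := hsM ν; omega
          · rw [sub_self, zero_pow (by omega : M ≠ 0), zero_mul]
        rw [hc0, zero_mul]
      · have hne : ∀ μ, k ≠ κ μ := by
          intro μ
          by_cases hμ : κ μ = κ₀
          · rw [hμ]; exact hkk
          · exact hkν μ hμ
        have hGG := hprod k hne hkb
        have hk0 : k - κ₀ ≠ 0 := sub_ne_zero.mpr hkk
        have hkey : ∀ ν, ∀ l ∈ Icc 1 (s ν),
            cf ν l k = (k - κ₀) ^ M * (k - κ ν) ^ (-((s ν : ℤ) + 1 - (l : ℤ))) := by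
          intro ν l hl
          rw [Finset.mem_Icc] at hl
          simp only [hcf]
          split
          · rename_i heq
            rw [heq]
            have h2 : ((M - (s ν + 1 - l) : ℕ) : ℤ) = (M : ℤ) + (-((s ν : ℤ) + 1 - (l : ℤ))) := by
              have := hsM ν
              push_cast [Nat.cast_sub (by omega : s ν + 1 - l ≤ M),
                Nat.cast_sub (by omega : l ≤ s ν + 1)]
              ring
            rw [← zpow_natCast (k - κ₀) (M - (s ν + 1 - l)), h2, zpow_add₀ hk0,
              zpow_natCast]
          · rfl
        have hGinv : (Γ k * Γinv k) a b = Γ k a b + ∑ ν, ∑ l ∈ Icc 1 (s ν), ∑ j ∈ Icc 1 l,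
            (k - κ ν) ^ (-((s ν : ℤ) + 1 - (l : ℤ)))
              * ((Γ k).mulVec (p ν (l + 1 - j)) a * q ν j b) := by
          rw [hΓinv k, mul_add, mul_one, Finset.mul_sum, Matrix.add_apply, Matrix.sum_apply]
          congr 1
          apply Finset.sum_congr rfl; intro ν _
          rw [lowerBlock, Finset.mul_sum, Matrix.sum_apply]
          apply Finset.sum_congr rfl; intro l _
          rw [Finset.mul_sum, Matrix.sum_apply]
          apply Finset.sum_congr rfl; intro j _
          rw [Matrix.mul_smul, Matrix.smul_apply, mulVecMulVecApply, smul_eq_mul]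
        simp only [hhdef]
        have hsummand : ∀ ν, (∑ l ∈ Icc 1 (s ν), ∑ j ∈ Icc 1 l,
            cf ν l k * ((Γ k).mulVec (p ν (l + 1 - j)) a * q ν j b))
            = (k - κ₀) ^ M * ∑ l ∈ Icc 1 (s ν), ∑ j ∈ Icc 1 l,
                (k - κ ν) ^ (-((s ν : ℤ) + 1 - (l : ℤ)))
                  * ((Γ k).mulVec (p ν (l + 1 - j)) a * q ν j b) := by
          intro ν
          rw [Finset.mul_sum]
          apply Finset.sum_congr rfl; intro l hl
          rw [Finset.mul_sum]
          apply Finset.sum_congr rfl; intro j _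
          rw [hkey ν l hl]
          ring
        calc (k - κ₀) ^ M * (Γ k a b - (1 : Matrix (Fin N) (Fin N) ℂ) a b)
              + ∑ ν, ∑ l ∈ Icc 1 (s ν), ∑ j ∈ Icc 1 l,
                  cf ν l k * ((Γ k).mulVec (p ν (l + 1 - j)) a * q ν j b)
            = (k - κ₀) ^ M * ((Γ k * Γinv k) a b - (1 : Matrix (Fin N) (Fin N) ℂ) a b) := by
              rw [hGinv]
              rw [Finset.sum_congr rfl fun ν _ => hsummand ν, ← Finset.mul_sum]
              ring
          _ = 0 := by rw [hGG]; simp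
    have hID : iteratedDeriv n h κ₀ = 0 := by
      rw [hzero.iteratedDeriv_eq n, iterZeroFun]
    -- analyticity of the summands
    have hφ₁ : AnalyticAt ℂ
        (fun k => Γ k a b - (1 : Matrix (Fin N) (Fin N) ℂ) a b) κ₀ :=
      (hAΓ a b).sub analyticAt_const
    have hA1 : AnalyticAt ℂ
        (fun k => (k - κ₀) ^ M * (Γ k a b - (1 : Matrix (Fin N) (Fin N) ℂ) a b)) κ₀ :=
      ((analyticAt_id.sub analyticAt_const).pow M).mul hφ₁
    have hAterm : ∀ ν, ∀ l ∈ Icc 1 (s ν), ∀ j ∈ Icc 1 l, AnalyticAt ℂ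
        (fun k => cf ν l k * ((Γ k).mulVec (p ν (l + 1 - j)) a * q ν j b)) κ₀ := by
      intro ν l _ j _
      by_cases hc : κ ν = κ₀
      · simp only [hcf, if_pos hc]
        exact ((analyticAt_id.sub analyticAt_const).pow _).mul
          ((hAΦ _ a).mul analyticAt_const)
      · simp only [hcf, if_neg hc]
        have hne : κ₀ ≠ κ ν := fun hxx => hc hxx.symm
        exact (((analyticAt_id.sub analyticAt_const).pow M).mul
          (analyticAtZpowSub hne _)).mul ((hAΦ _ a).mul analyticAt_const)
    -- expand the iterated derivative of h
    have hexpand : iteratedDeriv n h κ₀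
        = ∑ ν, ∑ l ∈ Icc 1 (s ν), ∑ j ∈ Icc 1 l,
            iteratedDeriv n
              (fun k => cf ν l k * ((Γ k).mulVec (p ν (l + 1 - j)) a * q ν j b)) κ₀ := by
      have e1 : iteratedDeriv n h κ₀
          = iteratedDeriv n
              (fun k => (k - κ₀) ^ M * (Γ k a b - (1 : Matrix (Fin N) (Fin N) ℂ) a b)) κ₀
            + iteratedDeriv n (fun k => ∑ ν, ∑ l ∈ Icc 1 (s ν), ∑ j ∈ Icc 1 l,
                cf ν l k * ((Γ k).mulVec (p ν (l + 1 - j)) a * q ν j b)) κ₀ := by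
        apply iterAdd hA1
        exact Finset.analyticAt_fun_sum _ fun ν _ => Finset.analyticAt_fun_sum _ fun l hl =>
          Finset.analyticAt_fun_sum _ fun j hj => hAterm ν l hl j hj
      rw [e1, iterPowMul κ₀ hφ₁ M n, if_neg (by omega), zero_add]
      rw [iterSum _ _ n (fun ν _ => Finset.analyticAt_fun_sum _ fun l hl =>
        Finset.analyticAt_fun_sum _ fun j hj => hAterm ν l hl j hj)]
      apply Finset.sum_congr rfl; intro ν _
      rw [iterSum _ _ n (fun l hl => Finset.analyticAt_fun_sum _ fun j hj => hAterm ν l hl j hj)]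
      apply Finset.sum_congr rfl; intro l hl
      rw [iterSum _ _ n (fun j hj => hAterm ν l hl j hj)]
    -- the value of each term
    have hterm : ∀ ν, ∀ l ∈ Icc 1 (s ν), ∀ j ∈ Icc 1 l,
        iteratedDeriv n
          (fun k => cf ν l k * ((Γ k).mulVec (p ν (l + 1 - j)) a * q ν j b)) κ₀
        = if κ ν = κ₀ ∧ l + u ≤ s ν + 1 then
            ((n.choose (M - (s ν + 1 - l)) : ℂ) * ((M - (s ν + 1 - l)).factorial : ℂ))
              * ((matIterDeriv (s ν + 1 - u - l) Γ κ₀).mulVec (p ν (l + 1 - j)) a * q ν j b)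
          else 0 := by
      intro ν l hl j hj
      rw [Finset.mem_Icc] at hl hj
      by_cases hc : κ ν = κ₀
      · simp only [hcf, if_pos hc]
        have hre : (fun k => (k - κ₀) ^ (M - (s ν + 1 - l))
              * ((Γ k).mulVec (p ν (l + 1 - j)) a * q ν j b))
            = fun k => ((k - κ₀) ^ (M - (s ν + 1 - l)) * (Γ k).mulVec (p ν (l + 1 - j)) a)
                * q ν j b := by
          funext k; ring
        rw [hre, iterMulConst, iterPowMul κ₀ (hAΦ _ a) (M - (s ν + 1 - l)) n]
        have hsMν := hsM ν
        by_cases h2 : l + u ≤ s ν + 1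
        · have he1 : M - (s ν + 1 - l) ≤ n := by omega
          have hnn : n - (M - (s ν + 1 - l)) = s ν + 1 - u - l := by omega
          rw [if_pos he1, if_pos ⟨hc, h2⟩, hD, hnn]
          ring
        · have he1 : ¬ (M - (s ν + 1 - l) ≤ n) := by omega
          rw [if_neg he1, if_neg (by tauto), zero_mul]
      · simp only [hcf, if_neg hc]
        have hne : κ₀ ≠ κ ν := fun hxx => hc hxx.symm
        have hre : (fun k => ((k - κ₀) ^ M * (k - κ ν) ^ (-((s ν : ℤ) + 1 - (l : ℤ))))
              * ((Γ k).mulVec (p ν (l + 1 - j)) a * q ν j b))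
            = fun k => (k - κ₀) ^ M * ((k - κ ν) ^ (-((s ν : ℤ) + 1 - (l : ℤ)))
                * ((Γ k).mulVec (p ν (l + 1 - j)) a * q ν j b)) := by
          funext k; ring
        have hφ₂ : AnalyticAt ℂ (fun k => (k - κ ν) ^ (-((s ν : ℤ) + 1 - (l : ℤ)))
            * ((Γ k).mulVec (p ν (l + 1 - j)) a * q ν j b)) κ₀ :=
          (analyticAtZpowSub hne _).mul ((hAΦ _ a).mul analyticAt_const)
        rw [hre, iterPowMul κ₀ hφ₂ M n, if_neg (by omega), if_neg (by tauto)]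
    -- assemble: the coefficient identity
    have e3 : iteratedDeriv n h κ₀ = ∑ ν, ∑ l ∈ Icc 1 (s ν), ∑ j ∈ Icc 1 l,
        (if κ ν = κ₀ ∧ l + u ≤ s ν + 1 then
          ((n.choose (M - (s ν + 1 - l)) : ℂ) * ((M - (s ν + 1 - l)).factorial : ℂ))
            * ((matIterDeriv (s ν + 1 - u - l) Γ κ₀).mulVec (p ν (l + 1 - j)) a * q ν j b)
        else 0) := by
      rw [hexpand]
      exact Finset.sum_congr rfl fun ν _ => Finset.sum_congr rfl fun l hl =>
        Finset.sum_congr rfl fun j hj => hterm ν l hl j hj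
    have hco : (∑ ν ∈ Finset.univ.filter (fun ν => κ ν = κ₀),
        ∑ l ∈ Icc 1 (s ν), ∑ j ∈ Icc 1 l,
          (if l + u ≤ s ν + 1 then
            ((n.choose (M - (s ν + 1 - l)) : ℂ) * ((M - (s ν + 1 - l)).factorial : ℂ))
              * ((matIterDeriv (s ν + 1 - u - l) Γ κ₀).mulVec (p ν (l + 1 - j)) a * q ν j b)
          else 0)) = 0 := by
      rw [Finset.sum_filter]
      have e2 : (∑ ν, if κ ν = κ₀ then ∑ l ∈ Icc 1 (s ν), ∑ j ∈ Icc 1 l,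
          (if l + u ≤ s ν + 1 then
            ((n.choose (M - (s ν + 1 - l)) : ℂ) * ((M - (s ν + 1 - l)).factorial : ℂ))
              * ((matIterDeriv (s ν + 1 - u - l) Γ κ₀).mulVec (p ν (l + 1 - j)) a * q ν j b)
          else 0) else 0)
          = ∑ ν, ∑ l ∈ Icc 1 (s ν), ∑ j ∈ Icc 1 l,
            (if κ ν = κ₀ ∧ l + u ≤ s ν + 1 then
              ((n.choose (M - (s ν + 1 - l)) : ℂ) * ((M - (s ν + 1 - l)).factorial : ℂ))
                * ((matIterDeriv (s ν + 1 - u - l) Γ κ₀).mulVec (p ν (l + 1 - j)) a * q ν j b)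
            else 0) := by
        apply Finset.sum_congr rfl; intro ν _
        by_cases hc : κ ν = κ₀
        · rw [if_pos hc]
          apply Finset.sum_congr rfl; intro l _
          apply Finset.sum_congr rfl; intro j _
          by_cases h2 : l + u ≤ s ν + 1
          · rw [if_pos h2, if_pos ⟨hc, h2⟩]
          · rw [if_neg h2, if_neg (by tauto)]
        · rw [if_neg hc]
          symm
          apply Finset.sum_eq_zero; intro l _
          apply Finset.sum_eq_zero; intro j _
          rw [if_neg (by tauto)]
      rw [e2, ← e3]
      exact hID
    -- per-ν reindexing
    have hperν : ∀ ν, κ ν = κ₀ →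
        (∑ l ∈ Icc 1 (s ν), ∑ j ∈ Icc 1 l,
          (if l + u ≤ s ν + 1 then
            ((n.choose (M - (s ν + 1 - l)) : ℂ) * ((M - (s ν + 1 - l)).factorial : ℂ))
              * ((matIterDeriv (s ν + 1 - u - l) Γ κ₀).mulVec (p ν (l + 1 - j)) a * q ν j b)
          else 0))
        = (n.factorial : ℂ) * ∑ j ∈ Finset.Icc 1 (s ν + 1 - u),
            B ν (s ν + 2 - u - j) a * q ν j b := by
      intro ν _
      have hsMν := hsM ν
      set A := s ν + 1 - u with hAdef
      have hA_le : A ≤ s ν := by omega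
      set F : ℕ → ℕ → ℂ := fun l j =>
        ((n.choose (M - (s ν + 1 - l)) : ℂ) * ((M - (s ν + 1 - l)).factorial : ℂ))
          * ((matIterDeriv (s ν + 1 - u - l) Γ κ₀).mulVec (p ν (l + 1 - j)) a * q ν j b)
        with hF
      have hstep1 : (∑ l ∈ Icc 1 (s ν), ∑ j ∈ Icc 1 l,
          (if l + u ≤ s ν + 1 then F l j else 0))
          = ∑ l ∈ Icc 1 A, ∑ j ∈ Icc 1 l, F l j := by
        have h1 : ∑ l ∈ Icc 1 A, (∑ j ∈ Icc 1 l, if l + u ≤ s ν + 1 then F l j else 0)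
            = ∑ l ∈ Icc 1 (s ν), (∑ j ∈ Icc 1 l, if l + u ≤ s ν + 1 then F l j else 0) := by
          apply Finset.sum_subset (Finset.Icc_subset_Icc (le_refl 1) hA_le)
          intro l hl hl2
          rw [Finset.mem_Icc] at hl hl2
          apply Finset.sum_eq_zero; intro j _
          rw [if_neg (by omega)]
        rw [← h1]
        apply Finset.sum_congr rfl; intro l hl
        rw [Finset.mem_Icc] at hl
        apply Finset.sum_congr rfl; intro j _
        rw [if_pos (by omega)]
      rw [hstep1, sumSwapIcc, Finset.mul_sum]
      apply Finset.sum_congr rfl; intro j hj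
      rw [Finset.mem_Icc] at hj
      rw [sumIccReflect j A (fun l => F l j)]
      have hL : A + 1 - j = s ν + 2 - u - j := by omega
      have hBapp : (B ν (s ν + 2 - u - j)) a = ∑ m ∈ range (s ν + 2 - u - j),
          ((Nat.factorial m : ℂ))⁻¹
            * ((matIterDeriv m Γ κ₀).mulVec (p ν (s ν + 2 - u - j - m)) a) := by
        simp only [hBdef]
        simp [Finset.sum_apply, Pi.smul_apply, smul_eq_mul]
      rw [hBapp, ← hL, Finset.sum_mul, Finset.mul_sum]
      apply Finset.sum_congr rfl; intro m hm
      rw [Finset.mem_range] at hm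
      simp only [hF]
      have h1 : s ν + 1 - u - (A - m) = m := by omega
      have h2 : A - m + 1 - j = A + 1 - j - m := by omega
      have h3 : M - (s ν + 1 - (A - m)) = n - m := by omega
      rw [h1, h2, h3]
      have hmn : m ≤ n := by omega
      have hfac : ((n.choose (n - m) : ℂ) * ((n - m).factorial : ℂ))
          = (n.factorial : ℂ) * ((Nat.factorial m : ℂ))⁻¹ := by
        have hnat : n.choose (n - m) * (n - m).factorial * m.factorial = n.factorial := by
          rw [Nat.choose_symm hmn, mul_right_comm]
          exact Nat.choose_mul_factorial_mul_factorial hmn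
        have hc : ((n.choose (n - m) : ℂ) * ((n - m).factorial : ℂ)) * (m.factorial : ℂ)
            = (n.factorial : ℂ) := by exact_mod_cast congrArg (Nat.cast (R := ℂ)) hnat
        have hm0 : (m.factorial : ℂ) ≠ 0 := by exact_mod_cast m.factorial_ne_zero
        field_simp [← hc]
        exact hc
      rw [hfac]
      ring
    -- conclude
    have hfinal : (n.factorial : ℂ) *
        (∑ ν ∈ Finset.univ.filter (fun ν => κ ν = κ₀), ∑ j ∈ Finset.Icc 1 (s ν + 1 - u),
          B ν (s ν + 2 - u - j) a * q ν j b) = 0 := by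
      rw [← hco, Finset.mul_sum]
      symm
      apply Finset.sum_congr rfl; intro ν hν
      rw [Finset.mem_filter] at hν
      exact hperν ν hν.2
    have hne : (n.factorial : ℂ) ≠ 0 := by exact_mod_cast Nat.factorial_ne_zero n
    exact (mul_eq_zero.mp hfinal).resolve_left hne
  -- the downward induction
  have good : ∀ d u : ℕ, 1 ≤ u → M ≤ u + d → ∀ ν, κ ν = κ₀ →
      ∀ L, 1 ≤ L → L + u ≤ s ν + 1 → B ν L = 0 := by
    intro d
    induction d with
    | zero =>
      intro u hu1 hMu ν hν L hL1 hLu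
      have := hsM ν
      omega
    | succ d IH =>
      intro u hu1 hMu ν hν L hL1 hLu
      by_cases hcase : L + (u + 1) ≤ s ν + 1
      · exact IH (u + 1) (by omega) (by omega) ν hν L hL1 hcase
      · have hLeq : L + u = s ν + 1 := by omega
        have huν : u ≤ s ν := by omega
        have huM : u ≤ M := by have := hsM ν; omega
        funext a
        have hsum := hmain u hu1 huM a
        have hvec : ∑ ν' ∈ Finset.univ.filter (fun ν' => κ ν' = κ₀),
            (if u ≤ s ν' then B ν' (s ν' + 1 - u) a else 0) • q ν' 1 = 0 := by
          have hs2 : ∀ ν' ∈ Finset.univ.filter (fun ν' => κ ν' = κ₀),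
              (∑ j ∈ Finset.Icc 1 (s ν' + 1 - u), (B ν' (s ν' + 2 - u - j) a) • q ν' j)
              = (if u ≤ s ν' then B ν' (s ν' + 1 - u) a else 0) • q ν' 1 := by
            intro ν' hν'
            rw [Finset.mem_filter] at hν'
            by_cases hus : u ≤ s ν'
            · rw [if_pos hus]
              have hins : Finset.Icc 1 (s ν' + 1 - u)
                  = insert 1 (Finset.Icc 2 (s ν' + 1 - u)) := by
                ext x
                simp only [Finset.mem_Icc, Finset.mem_insert]
                omega
              rw [hins, Finset.sum_insert (by simp)]
              have hzero2 : ∑ j ∈ Finset.Icc 2 (s ν' + 1 - u),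
                  (B ν' (s ν' + 2 - u - j) a) • q ν' j = 0 := by
                apply Finset.sum_eq_zero
                intro j hjj
                rw [Finset.mem_Icc] at hjj
                have hB0 : B ν' (s ν' + 2 - u - j) = 0 :=
                  IH (u + 1) (by omega) (by omega) ν' hν'.2 (s ν' + 2 - u - j)
                    (by omega) (by omega)
                rw [hB0]
                simp
              rw [hzero2, add_zero]
              congr 2
              omega
            · have : s ν' + 1 - u = 0 := by omega
              rw [if_neg hus, this]
              simp
          calc ∑ ν' ∈ Finset.univ.filter (fun ν' => κ ν' = κ₀),
              (if u ≤ s ν' then B ν' (s ν' + 1 - u) a else 0) • q ν' 1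
              = ∑ ν' ∈ Finset.univ.filter (fun ν' => κ ν' = κ₀),
                ∑ j ∈ Finset.Icc 1 (s ν' + 1 - u), (B ν' (s ν' + 2 - u - j) a) • q ν' j := by
                exact (Finset.sum_congr rfl hs2).symm
            _ = 0 := by
                funext b
                simp only [Finset.sum_apply, Pi.smul_apply, smul_eq_mul, Pi.zero_apply]
                exact hsum b
        have hsub : ∑ ν' : {ν' : Fin r₁ // κ ν' = κ₀},
            (if u ≤ s ν'.1 then B ν'.1 (s ν'.1 + 1 - u) a else 0) • q ν'.1 1 = 0 := by
          have hiff : ∀ x : Fin r₁, x ∈ Finset.univ.filter (fun ν' => κ ν' = κ₀) ↔ κ x = κ₀ := by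
            intro x; simp
          rw [← hvec]
          exact (Finset.sum_subtype _ hiff
            (fun ν' => (if u ≤ s ν' then B ν' (s ν' + 1 - u) a else 0) • q ν' 1)).symm
        have hgz := Fintype.linearIndependent_iff.mp (hli κ₀)
          (fun ν' => if u ≤ s ν'.1 then B ν'.1 (s ν'.1 + 1 - u) a else 0) hsub ⟨ν, hν⟩
        simp only [if_pos huν] at hgz
        have : L = s ν + 1 - u := by omega
        rw [this]
        exact hgz
  exact good M 1 le_rfl (by omega) ν₀ rfl l₀ hl₀.1 (by omega)

end Key

section Transpose

lemma transpose_lowerBlock {N : ℕ} (s : ℕ) (κ : ℂ) (p q : ℕ → Fin N → ℂ) (k : ℂ) :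
    (lowerBlock s κ p q k)ᵀ = upperBlock s κ q p k := by
  unfold lowerBlock upperBlock
  ext a b
  simp [Matrix.transpose_apply, Matrix.sum_apply, Matrix.smul_apply, vecMulVec_apply,
    smul_eq_mul, mul_comm]

lemma transpose_upperBlock {N : ℕ} (s : ℕ) (κ : ℂ) (q p : ℕ → Fin N → ℂ) (k : ℂ) :
    (upperBlock s κ q p k)ᵀ = lowerBlock s κ p q k := by
  unfold lowerBlock upperBlock
  ext a b
  simp [Matrix.transpose_apply, Matrix.sum_apply, Matrix.smul_apply, vecMulVec_apply,
    smul_eq_mul, mul_comm]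

lemma matIterDeriv_transpose {N : ℕ} (m : ℕ) (f : ℂ → Matrix (Fin N) (Fin N) ℂ) (x : ℂ) :
    matIterDeriv m (fun k => (f k)ᵀ) x = (matIterDeriv m f x)ᵀ := by
  ext a b
  simp [matIterDeriv, Matrix.transpose_apply]

end Transpose

/-- if `Γ(k) = I + Σ_ν S̄_ν(k)` (upper blocks at `κ̄_ν`) and
`Γinv(k) = I + Σ_ν S_ν(k)` (lower blocks at `κ_ν`) satisfy `Γ(k)Γinv(k) = I` away from the
poles, then (a) provided the rows `{q^{(ν)}_1 : κ_ν = κ}` are linearly independent at every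
point `κ`, the `|p⟩`-vectors satisfy `Σ_{m=0}^{l−1} (1/m!) Γ^{(m)}(κ_ν) p^{(ν)}_{l−m} = 0`;
(b) provided the columns `{q̄^{(ν)}_1 : κ̄_ν = κ̄}` are linearly independent at every point `κ̄`,
the `⟨p̄|`-vectors satisfy `Σ_{m=0}^{l−1} (1/m!) p̄^{(ν)}_{l−m} Γinv^{(m)}(κ̄_ν) = 0`. -/
theorem stmt2 (N r₁ : ℕ) (hN : 1 ≤ N) (hr₁ : 1 ≤ r₁)
    (s : Fin r₁ → ℕ) (hs : ∀ ν, 1 ≤ s ν)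
    (κ κb : Fin r₁ → ℂ) (hκ : ∀ ν μ, κ ν ≠ κb μ)
    (qb pb p q : Fin r₁ → ℕ → Fin N → ℂ)
    (Γ Γinv : ℂ → Matrix (Fin N) (Fin N) ℂ)
    (hΓ : ∀ k, Γ k = 1 + ∑ ν : Fin r₁, upperBlock (s ν) (κb ν) (qb ν) (pb ν) k)
    (hΓinv : ∀ k, Γinv k = 1 + ∑ ν : Fin r₁, lowerBlock (s ν) (κ ν) (p ν) (q ν) k)
    (hprod : ∀ k : ℂ, (∀ ν, k ≠ κ ν) → (∀ ν, k ≠ κb ν) → Γ k * Γinv k = 1) :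
    ((∀ κ₀ : ℂ, LinearIndependent ℂ fun ν : {ν : Fin r₁ // κ ν = κ₀} => q ν.1 1) →
      ∀ ν : Fin r₁, ∀ l ∈ Finset.Icc 1 (s ν),
        ∑ m ∈ Finset.range l,
          ((Nat.factorial m : ℂ))⁻¹ • (matIterDeriv m Γ (κ ν)).mulVec (p ν (l - m)) = 0) ∧
    ((∀ κb₀ : ℂ, LinearIndependent ℂ fun ν : {ν : Fin r₁ // κb ν = κb₀} => qb ν.1 1) →
      ∀ ν : Fin r₁, ∀ l ∈ Finset.Icc 1 (s ν),
        ∑ m ∈ Finset.range l,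
          ((Nat.factorial m : ℂ))⁻¹ • Matrix.vecMul (pb ν (l - m)) (matIterDeriv m Γinv (κb ν)) = 0) := by
  constructor
  · intro hli ν l hl
    exact keyLemma s hs κ κb hκ qb pb p q Γ Γinv hΓ hΓinv hprod hli ν l hl
  · intro hli ν l hl
    have hΓ' : ∀ k, (fun k => (Γinv k)ᵀ) k
        = 1 + ∑ ν : Fin r₁, upperBlock (s ν) (κ ν) (q ν) (p ν) k := by
      intro k
      simp only
      rw [hΓinv k, Matrix.transpose_add, Matrix.transpose_one, Matrix.transpose_sum]
      congr 1
      exact Finset.sum_congr rfl fun μ _ => transpose_lowerBlock _ _ _ _ _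
    have hΓinv' : ∀ k, (fun k => (Γ k)ᵀ) k
        = 1 + ∑ ν : Fin r₁, lowerBlock (s ν) (κb ν) (pb ν) (qb ν) k := by
      intro k
      simp only
      rw [hΓ k, Matrix.transpose_add, Matrix.transpose_one, Matrix.transpose_sum]
      congr 1
      exact Finset.sum_congr rfl fun μ _ => transpose_upperBlock _ _ _ _ _
    have hprod' : ∀ k : ℂ, (∀ μ, k ≠ κb μ) → (∀ μ, k ≠ κ μ) →
        (fun k => (Γinv k)ᵀ) k * (fun k => (Γ k)ᵀ) k = 1 := by
      intro k h1 h2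
      simp only
      rw [← Matrix.transpose_mul, hprod k h2 h1, Matrix.transpose_one]
    have h1 := keyLemma s hs κb κ (fun μ ρ => (hκ ρ μ).symm) q p pb qb
      (fun k => (Γinv k)ᵀ) (fun k => (Γ k)ᵀ) hΓ' hΓinv' hprod' hli ν l hl
    rw [← h1]
    apply Finset.sum_congr rfl
    intro m _
    rw [matIterDeriv_transpose, Matrix.mulVec_transpose]
end

section
/- Let N ≥ 1, r₁ ≥ 1, sizes s₁,…,s_{r₁} ≥ 1, and complex numbers κ₁,…,κ_{r₁}, κ̄₁,…,κ̄_{r₁} with κ_μ ≠ κ̄_ν for all μ, ν. Let column vectors q̄^{(ν)}_i, p^{(ν)}_i ∈ ℂ^N and row vectors p̄^{(ν)}_i (1 ≤ i ≤ s_ν) be given, and set Γ(k) = I + Σ_{ν=1}^{r₁} S̄_ν(k), where S̄_ν is the upper block at κ̄_ν of size s_ν built from the q̄^{(ν)}, p̄^{(ν)}. Assume that for every ν and every l ∈ {1,…,s_ν} the relation Σ_{m=0}^{l−1} (1/m!) Γ^{(m)}(κ_ν) p^{(ν)}_{l−m} = 0 holds. Then, with m = s₁+…+s_{r₁} and K̄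 the m×m matrix defined in the context, one has the N×m matrix identity (q̄^{(1)}_{s₁},…,q̄^{(1)}_1, q̄^{(2)}_{s₂},…,q̄^{(2)}_1, …, q̄^{(r₁)}_{s_{r₁}},…,q̄^{(r₁)}_1) · K̄ = −(p^{(1)}_1,…,p^{(1)}_{s₁}, p^{(2)}_1,…,p^{(2)}_{s₂}, …, p^{(r₁)}_1,…,p^{(r₁)}_{s_{r₁}}). -/
open Matrix

/-- `H^{(ν)}_{−j}` : the `sν×sν` matrix with `(α,β)` entry `1` when `α = β + j`, else `0`. -/
def Hmat (sν : ℕ) (j : ℕ) : Matrix (Fin sν) (Fin sν) ℂ :=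
  Matrix.of fun α β => if (α : ℕ) = (β : ℕ) + j then 1 else 0

/-- `Q̄_l^{(ν,μ)}` : the `sν×sμ` matrix with (1-based) `(a,b)` entry `p̄^{(ν)}_a ⬝ p^{(μ)}_{b−l}`
when `b > l` and `0` otherwise. -/
noncomputable def Qbar {N : ℕ} (sν sμ : ℕ) (pbν pμ : ℕ → Fin N → ℂ) (l : ℕ) :
    Matrix (Fin sν) (Fin sμ) ℂ :=
  Matrix.of fun a b => if l < (b : ℕ) + 1 then pbν ((a : ℕ) + 1) ⬝ᵥ pμ ((b : ℕ) + 1 - l) else 0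

/-- The block `K̄^{(ν,μ)} = Σ_{j=0}^{sν−1} Σ_{l=0}^{sμ−1} ((−1)^l (j+l)!/(j! l!))
H^{(ν)}_{−j} Q̄_l^{(ν,μ)} (κ_μ − κ̄_ν)^{−(j+l+1)}`. -/
noncomputable def KbarBlock {N : ℕ} (sν sμ : ℕ) (κμ κbν : ℂ) (pbν pμ : ℕ → Fin N → ℂ) :
    Matrix (Fin sν) (Fin sμ) ℂ :=
  ∑ j ∈ Finset.range sν, ∑ l ∈ Finset.range sμ,
    (((-1 : ℂ) ^ l * (Nat.factorial (j + l) : ℂ) /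
        ((Nat.factorial j : ℂ) * (Nat.factorial l : ℂ))) *
      (κμ - κbν) ^ (-((j : ℤ) + (l : ℤ) + 1))) • (Hmat sν j * Qbar sν sμ pbν pμ l)

/-- The `m×m` matrix `K̄` (`m = s₁+…+s_{r₁}`) whose `(ν,μ)` block is `K̄^{(ν,μ)}`. -/
noncomputable def Kbar {N r₁ : ℕ} (s : Fin r₁ → ℕ) (κ κb : Fin r₁ → ℂ)
    (pb p : Fin r₁ → ℕ → Fin N → ℂ) :
    Matrix ((ν : Fin r₁) × Fin (s ν)) ((ν : Fin r₁) × Fin (s ν)) ℂ :=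
  Matrix.of fun x y => KbarBlock (s x.1) (s y.1) (κ y.1) (κb x.1) (pb x.1) (p y.1) x.2 y.2

/-! ### Auxiliary lemmas -/

lemma izd_sum {ι : Type*} (T : Finset ι) (C : ℂ) (c : ι → ℂ) (w : ι → ℂ) (z : ι → ℤ) (m : ℕ) :
    ∀ k : ℂ, (∀ i ∈ T, k ≠ w i) →
      iteratedDeriv m (fun x => C + ∑ i ∈ T, c i * (x - w i) ^ (z i)) k
        = (if m = 0 then C else 0)
          + ∑ i ∈ T, c i * (∏ t ∈ Finset.range m, ((z i : ℂ) - t)) * (k - w i) ^ (z i - m) := by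
  induction m with
  | zero => intro k hk; simp
  | succ m ih =>
    intro k hk
    rw [iteratedDeriv_succ]
    have hev : iteratedDeriv m (fun x => C + ∑ i ∈ T, c i * (x - w i) ^ (z i))
        =ᶠ[nhds k] fun x => (if m = 0 then C else 0)
          + ∑ i ∈ T, c i * (∏ t ∈ Finset.range m, ((z i : ℂ) - t)) * (x - w i) ^ (z i - m) := by
      have hall : ∀ᶠ x in nhds k, ∀ i ∈ T, x ≠ w i :=
        (Filter.eventually_all_finset T).2 fun i hi => eventually_ne_nhds (hk i hi)
      filter_upwards [hall] with x hx
      exact ih x hx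
    rw [hev.deriv_eq]
    have hD : HasDerivAt (fun x => (if m = 0 then C else 0)
          + ∑ i ∈ T, c i * (∏ t ∈ Finset.range m, ((z i : ℂ) - t)) * (x - w i) ^ (z i - m))
        (∑ i ∈ T, c i * (∏ t ∈ Finset.range m, ((z i : ℂ) - t)) *
          (((z i - m : ℤ) : ℂ) * (k - w i) ^ (z i - m - 1))) k := by
      apply HasDerivAt.const_add
      apply HasDerivAt.fun_sum
      intro i hi
      have h0 : k - w i ≠ 0 := sub_ne_zero.mpr (hk i hi)
      have h1 := (hasDerivAt_zpow (z i - m) (k - w i) (Or.inl h0)).comp k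
        ((hasDerivAt_id k).sub_const (w i))
      simpa [mul_comm, mul_left_comm, mul_assoc] using
        h1.const_mul (c i * (∏ t ∈ Finset.range m, ((z i : ℂ) - t)))
    rw [hD.deriv, if_neg (Nat.succ_ne_zero m), zero_add]
    refine Finset.sum_congr rfl fun i hi => ?_
    rw [Finset.prod_range_succ]
    have he : z i - (m + 1 : ℕ) = z i - m - 1 := by push_cast; ring
    rw [he]
    push_cast
    ring

lemma prod_neg_shift (j l : ℕ) :
    ∏ t ∈ Finset.range l, ((-((j : ℂ) + 1)) - t)
      = (-1 : ℂ) ^ l * (Nat.factorial (j + l) : ℂ) / (Nat.factorial j : ℂ) := by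
  induction l with
  | zero =>
    have hj : (Nat.factorial j : ℂ) ≠ 0 := Nat.cast_ne_zero.2 (Nat.factorial_ne_zero j)
    simp [div_self hj]
  | succ l ih =>
    rw [Finset.prod_range_succ, ih]
    have hj : (Nat.factorial j : ℂ) ≠ 0 := Nat.cast_ne_zero.2 (Nat.factorial_ne_zero j)
    rw [show j + (l + 1) = (j + l) + 1 by ring, Nat.factorial_succ]
    push_cast
    field_simp
    ring

lemma HQ_apply {sν sμ : ℕ} (j : ℕ) (M : Matrix (Fin sν) (Fin sμ) ℂ) (α : Fin sν) (b : Fin sμ) :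
    (Hmat sν j * M) α b
      = if h : j ≤ (α : ℕ) then M ⟨(α : ℕ) - j, lt_of_le_of_lt (Nat.sub_le _ _) α.2⟩ b else 0 := by
  rw [Matrix.mul_apply]
  split
  · rename_i h
    rw [Finset.sum_eq_single (⟨(α : ℕ) - j, lt_of_le_of_lt (Nat.sub_le _ _) α.2⟩ : Fin sν)]
    · have hα : (α : ℕ) = ((α : ℕ) - j) + j := by omega
      show (if (α : ℕ) = ((α : ℕ) - j) + j then (1:ℂ) else 0) * _ = _
      rw [if_pos hα, one_mul]
    · intro β _ hβ
      have : ¬ ((α : ℕ) = (β : ℕ) + j) := by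
        intro hc
        apply hβ
        apply Fin.ext
        simp
        omega
      simp [Hmat, this]
    · intro h'; exact absurd (Finset.mem_univ _) h'
  · rename_i h
    apply Finset.sum_eq_zero
    intro β _
    have : ¬ ((α : ℕ) = (β : ℕ) + j) := by omega
    simp [Hmat, this]

/-- Index set for the poles of `Γ`. -/
def Tfin (r₁ : ℕ) (s : Fin r₁ → ℕ) : Finset (Σ _ : Fin r₁, Σ _ : ℕ, ℕ) :=
  Finset.univ.sigma fun ν' => (Finset.Icc 1 (s ν')).sigma fun L => Finset.Icc 1 L

def zf {r₁ : ℕ} (s : Fin r₁ → ℕ) (x : Σ _ : Fin r₁, Σ _ : ℕ, ℕ) : ℤ :=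
  -((s x.1 : ℤ) + 1 - (x.2.1 : ℤ))

/-- if the vectors of `Γ(k) = I + Σ_ν S̄_ν(k)` satisfy
`Σ_{m=0}^{l−1} (1/m!) Γ^{(m)}(κ_ν) p^{(ν)}_{l−m} = 0` for all `ν` and `1 ≤ l ≤ s_ν`, then
`(q̄^{(1)}_{s₁},…,q̄^{(1)}_1,…,q̄^{(r₁)}_{s_{r₁}},…,q̄^{(r₁)}_1)·K̄ =
−(p^{(1)}_1,…,p^{(1)}_{s₁},…,p^{(r₁)}_1,…,p^{(r₁)}_{s_{r₁}})`. -/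
theorem stmt3 (N r₁ : ℕ) (hN : 1 ≤ N) (hr₁ : 1 ≤ r₁)
    (s : Fin r₁ → ℕ) (hs : ∀ ν, 1 ≤ s ν)
    (κ κb : Fin r₁ → ℂ) (hκ : ∀ μ ν, κ μ ≠ κb ν)
    (qb pb p : Fin r₁ → ℕ → Fin N → ℂ)
    (Γ : ℂ → Matrix (Fin N) (Fin N) ℂ)
    (hΓ : ∀ k, Γ k = 1 + ∑ ν : Fin r₁, upperBlock (s ν) (κb ν) (qb ν) (pb ν) k)
    (hker : ∀ ν : Fin r₁, ∀ l ∈ Finset.Icc 1 (s ν),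
      ∑ m ∈ Finset.range l,
        ((Nat.factorial m : ℂ))⁻¹ • (matIterDeriv m Γ (κ ν)).mulVec (p ν (l - m)) = 0)
    (Qmat Pmat : Matrix (Fin N) ((ν : Fin r₁) × Fin (s ν)) ℂ)
    (hQmat : ∀ i x, Qmat i x = qb x.1 (s x.1 - (x.2 : ℕ)) i)
    (hPmat : ∀ i x, Pmat i x = p x.1 ((x.2 : ℕ) + 1) i) :
    Qmat * Kbar s κ κb pb p = -Pmat := by
  classical
  -- entry formula for the iterated derivatives of Γ
  have hentry : ∀ (m : ℕ) (ν : Fin r₁) (a b' : Fin N),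
      matIterDeriv m Γ (κ ν) a b'
        = (if m = 0 then (1 : Matrix (Fin N) (Fin N) ℂ) a b' else 0)
          + ∑ x ∈ Tfin r₁ s, (qb x.1 x.2.2 a * pb x.1 (x.2.1 + 1 - x.2.2) b')
              * (∏ t ∈ Finset.range m, ((zf s x : ℂ) - t)) * (κ ν - κb x.1) ^ (zf s x - m) := by
    intro m ν a b'
    have hfun : (fun k => Γ k a b')
        = fun k => (1 : Matrix (Fin N) (Fin N) ℂ) a b'
            + ∑ x ∈ Tfin r₁ s, (qb x.1 x.2.2 a * pb x.1 (x.2.1 + 1 - x.2.2) b')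
                * (k - κb x.1) ^ (zf s x) := by
      funext k
      rw [hΓ]
      simp only [Matrix.add_apply, Matrix.sum_apply, upperBlock, Matrix.smul_apply,
        Matrix.vecMulVec_apply, smul_eq_mul]
      congr 1
      rw [Tfin, Finset.sum_sigma]
      refine Finset.sum_congr rfl fun ν' _ => ?_
      rw [Finset.sum_sigma]
      refine Finset.sum_congr rfl fun L hL => Finset.sum_congr rfl fun J hJ => ?_
      simp only [zf]
      ring
    show iteratedDeriv m (fun k => Γ k a b') (κ ν) = _
    rw [hfun, izd_sum (Tfin r₁ s) _ _ _ (zf s) m (κ ν) (fun x _ => hκ ν x.1)]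
  -- mulVec entry formula
  have hkey : ∀ (μ : Fin r₁) (v : Fin N → ℂ) (m : ℕ) (i : Fin N),
      ((matIterDeriv m Γ (κ μ)).mulVec v) i
        = (if m = 0 then v i else 0)
          + ∑ x ∈ Tfin r₁ s, qb x.1 x.2.2 i * (pb x.1 (x.2.1 + 1 - x.2.2) ⬝ᵥ v)
              * (∏ t ∈ Finset.range m, ((zf s x : ℂ) - t)) * (κ μ - κb x.1) ^ (zf s x - m) := by
    intro μ v m i
    simp only [Matrix.mulVec, dotProduct, hentry, add_mul, Finset.sum_add_distrib,
      Finset.sum_mul]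
    congr 1
    · split
      · simp [Matrix.one_apply, ite_mul]
      · simp
    · rw [Finset.sum_comm]
      refine Finset.sum_congr rfl fun x hx => ?_
      simp only [dotProduct, Finset.mul_sum, Finset.sum_mul]
      refine Finset.sum_congr rfl fun b' _ => by ring
  -- consequence of the kernel relations
  have hker2 : ∀ (μ : Fin r₁) (b : ℕ), b < s μ → ∀ i : Fin N,
      p μ (b + 1) i
        + ∑ m ∈ Finset.range (b + 1), ∑ x ∈ Tfin r₁ s,
            ((Nat.factorial m : ℂ))⁻¹ * (qb x.1 x.2.2 i
              * (pb x.1 (x.2.1 + 1 - x.2.2) ⬝ᵥ p μ (b + 1 - m))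
              * (∏ t ∈ Finset.range m, ((zf s x : ℂ) - t)) * (κ μ - κb x.1) ^ (zf s x - m)) = 0 := by
    intro μ b hb i
    have h0 := hker μ (b + 1) (Finset.mem_Icc.mpr ⟨Nat.le_add_left 1 b, hb⟩)
    have h1 := congrFun h0 i
    simp only [Finset.sum_apply, Pi.smul_apply, Pi.zero_apply, smul_eq_mul, hkey, mul_add,
      Finset.sum_add_distrib, mul_ite, mul_zero, Finset.mul_sum] at h1
    simp only [Finset.sum_ite_eq'] at h1
    simp only [Finset.mem_range, Nat.lt_add_one_iff, Nat.zero_le, if_true, Nat.factorial_zero,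
      Nat.cast_one, inv_one, one_mul, Nat.sub_zero] at h1
    linear_combination h1
  -- final assembly
  ext i y
  obtain ⟨μ, b⟩ := y
  have hgoal : (-Pmat) i ⟨μ, b⟩ = -(p μ ((b : ℕ) + 1) i) := by
    simp [hPmat]
  rw [Matrix.mul_apply, hgoal]
  have hrhs : -(p μ ((b : ℕ) + 1) i)
      = ∑ m ∈ Finset.range ((b : ℕ) + 1), ∑ x ∈ Tfin r₁ s,
          ((Nat.factorial m : ℂ))⁻¹ * (qb x.1 x.2.2 i
            * (pb x.1 (x.2.1 + 1 - x.2.2) ⬝ᵥ p μ ((b : ℕ) + 1 - m))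
            * (∏ t ∈ Finset.range m, ((zf s x : ℂ) - t)) * (κ μ - κb x.1) ^ (zf s x - m)) := by
    have := hker2 μ (b : ℕ) b.isLt i
    linear_combination -this
  rw [hrhs]
  -- expand each term of the product into a triangular double sum
  have hterm : ∀ x' : (ν : Fin r₁) × Fin (s ν),
      Qmat i x' * Kbar s κ κb pb p x' ⟨μ, b⟩
        = ∑ j ∈ Finset.range ((x'.2 : ℕ) + 1), ∑ l ∈ Finset.range ((b : ℕ) + 1),
            ((-1 : ℂ) ^ l * (Nat.factorial (j + l) : ℂ) /
                ((Nat.factorial j : ℂ) * (Nat.factorial l : ℂ)) *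
              (κ μ - κb x'.1) ^ (-((j : ℤ) + (l : ℤ) + 1)))
            * (qb x'.1 (s x'.1 - (x'.2 : ℕ)) i
              * (pb x'.1 (((x'.2 : ℕ) - j) + 1) ⬝ᵥ p μ ((b : ℕ) + 1 - l))) := by
    intro x'
    obtain ⟨ν, α⟩ := x'
    rw [hQmat]
    show qb ν (s ν - (α : ℕ)) i * KbarBlock (s ν) (s μ) (κ μ) (κb ν) (pb ν) (p μ) α b = _
    rw [KbarBlock]
    simp only [Matrix.sum_apply, Matrix.smul_apply, smul_eq_mul, HQ_apply, Finset.mul_sum]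
    -- shrink the j-range
    rw [← Finset.sum_subset (Finset.range_subset_range.mpr α.isLt)
      (fun j _ hj => by
        have hj' : ¬ j ≤ (α : ℕ) := by
          simp only [Finset.mem_range] at hj; omega
        simp [dif_neg hj'])]
    refine Finset.sum_congr rfl fun j hj => ?_
    have hjα : j ≤ (α : ℕ) := Nat.lt_add_one_iff.mp (Finset.mem_range.mp hj)
    -- shrink the l-range
    rw [← Finset.sum_subset (Finset.range_subset_range.mpr b.isLt)
      (fun l _ hl => by
        rw [dif_pos hjα]
        have : ¬ (l < (b : ℕ) + 1) := fun h => hl (Finset.mem_range.mpr h)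
        simp [Qbar, this]
        exact fun h => absurd (Nat.lt_succ_of_le h) this)]
    refine Finset.sum_congr rfl fun l hl => ?_
    rw [dif_pos hjα]
    have hlb : l < (b : ℕ) + 1 := Finset.mem_range.mp hl
    simp only [Qbar, Matrix.of_apply, if_pos hlb]
    ring
  calc
    ∑ x' : (ν : Fin r₁) × Fin (s ν), Qmat i x' * Kbar s κ κb pb p x' ⟨μ, b⟩
        = ∑ x' : (ν : Fin r₁) × Fin (s ν), ∑ j ∈ Finset.range ((x'.2 : ℕ) + 1),
            ∑ l ∈ Finset.range ((b : ℕ) + 1),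
            ((-1 : ℂ) ^ l * (Nat.factorial (j + l) : ℂ) /
                ((Nat.factorial j : ℂ) * (Nat.factorial l : ℂ)) *
              (κ μ - κb x'.1) ^ (-((j : ℤ) + (l : ℤ) + 1)))
            * (qb x'.1 (s x'.1 - (x'.2 : ℕ)) i
              * (pb x'.1 (((x'.2 : ℕ) - j) + 1) ⬝ᵥ p μ ((b : ℕ) + 1 - l))) :=
      Finset.sum_congr rfl fun x' _ => hterm x'
    _ = ∑ q ∈ (Finset.univ : Finset ((ν : Fin r₁) × Fin (s ν))).sigma
          (fun x' => (Finset.range ((x'.2 : ℕ) + 1)).sigma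
            (fun _ => Finset.range ((b : ℕ) + 1))),
          ((-1 : ℂ) ^ q.2.2 * (Nat.factorial (q.2.1 + q.2.2) : ℂ) /
              ((Nat.factorial q.2.1 : ℂ) * (Nat.factorial q.2.2 : ℂ)) *
            (κ μ - κb q.1.1) ^ (-((q.2.1 : ℤ) + (q.2.2 : ℤ) + 1)))
          * (qb q.1.1 (s q.1.1 - (q.1.2 : ℕ)) i
            * (pb q.1.1 (((q.1.2 : ℕ) - q.2.1) + 1) ⬝ᵥ p μ ((b : ℕ) + 1 - q.2.2))) := by
      rw [← Finset.sum_sigma' (Finset.univ : Finset ((ν : Fin r₁) × Fin (s ν)))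
        (fun x' => (Finset.range ((x'.2 : ℕ) + 1)).sigma (fun _ => Finset.range ((b : ℕ) + 1)))
        (fun x' y =>
          ((-1 : ℂ) ^ y.2 * (Nat.factorial (y.1 + y.2) : ℂ) /
              ((Nat.factorial y.1 : ℂ) * (Nat.factorial y.2 : ℂ)) *
            (κ μ - κb x'.1) ^ (-((y.1 : ℤ) + (y.2 : ℤ) + 1)))
          * (qb x'.1 (s x'.1 - (x'.2 : ℕ)) i
            * (pb x'.1 (((x'.2 : ℕ) - y.1) + 1) ⬝ᵥ p μ ((b : ℕ) + 1 - y.2))))]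
      refine Finset.sum_congr rfl fun x' _ => ?_
      exact Finset.sum_sigma' (Finset.range ((x'.2 : ℕ) + 1))
        (fun _ => Finset.range ((b : ℕ) + 1))
        (fun j l =>
          ((-1 : ℂ) ^ l * (Nat.factorial (j + l) : ℂ) /
              ((Nat.factorial j : ℂ) * (Nat.factorial l : ℂ)) *
            (κ μ - κb x'.1) ^ (-((j : ℤ) + (l : ℤ) + 1)))
          * (qb x'.1 (s x'.1 - (x'.2 : ℕ)) i
            * (pb x'.1 (((x'.2 : ℕ) - j) + 1) ⬝ᵥ p μ ((b : ℕ) + 1 - l))))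
    _ = ∑ r ∈ (Finset.range ((b : ℕ) + 1)).sigma (fun _ => Tfin r₁ s),
          ((Nat.factorial r.1 : ℂ))⁻¹ * (qb r.2.1 r.2.2.2 i
            * (pb r.2.1 (r.2.2.1 + 1 - r.2.2.2) ⬝ᵥ p μ ((b : ℕ) + 1 - r.1))
            * (∏ t ∈ Finset.range r.1, ((zf s r.2 : ℂ) - t))
            * (κ μ - κb r.2.1) ^ (zf s r.2 - r.1)) := by
      refine Finset.sum_bij' (fun q _ => (⟨q.2.2, ⟨q.1.1, ⟨s q.1.1 - q.2.1, s q.1.1 - (q.1.2 : ℕ)⟩⟩⟩ :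
            Σ _ : ℕ, Σ _ : Fin r₁, Σ _ : ℕ, ℕ))
        (fun r hr => ⟨⟨r.2.1, ⟨s r.2.1 - r.2.2.2, by
          have h2 := (Finset.mem_sigma.mp hr).2
          simp only [Tfin, Finset.mem_sigma, Finset.mem_univ, Finset.mem_Icc, true_and] at h2
          omega⟩⟩, ⟨s r.2.1 - r.2.2.1, r.1⟩⟩) ?_ ?_ ?_ ?_ ?_
      · rintro ⟨⟨ν, α⟩, j, l⟩ hq
        simp only [Finset.mem_sigma, Finset.mem_univ, Finset.mem_range, true_and] at hq
        have hα := α.isLt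
        simp only [Finset.mem_sigma, Finset.mem_range, Tfin, Finset.mem_univ, Finset.mem_Icc,
          true_and]
        omega
      · rintro ⟨m, ν, L, J⟩ hr
        simp only [Finset.mem_sigma, Finset.mem_range, Tfin, Finset.mem_univ, Finset.mem_Icc,
          true_and] at hr
        simp only [Finset.mem_sigma, Finset.mem_univ, Finset.mem_range, true_and]
        omega
      · rintro ⟨⟨ν, α⟩, j, l⟩ hq
        simp only [Finset.mem_sigma, Finset.mem_univ, Finset.mem_range, true_and] at hq
        have hα := α.isLt
        simp only [Sigma.ext_iff, heq_eq_eq, Fin.ext_iff]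
        simp only [true_and, and_true]
        constructor <;> omega
      · rintro ⟨m, ν, L, J⟩ hr
        simp only [Finset.mem_sigma, Finset.mem_range, Tfin, Finset.mem_univ, Finset.mem_Icc,
          true_and] at hr
        simp only [Sigma.ext_iff, heq_eq_eq, Fin.ext_iff]
        simp only [true_and, and_true]
        constructor <;> omega
      · rintro ⟨⟨ν, α⟩, j, l⟩ hq
        simp only [Finset.mem_sigma, Finset.mem_univ, Finset.mem_range, true_and] at hq
        have hα := α.isLt
        have hj : j ≤ (α : ℕ) := by omega
        have hl : l ≤ (b : ℕ) := by omega
        have hL : ((s ν - j : ℕ) : ℤ) = (s ν : ℤ) - (j : ℤ) := by omega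
        have hz : zf s ⟨ν, ⟨s ν - j, s ν - (α : ℕ)⟩⟩ = -((j : ℤ) + 1) := by
          simp only [zf]; rw [hL]; ring
        have hidx : (s ν - j) + 1 - (s ν - (α : ℕ)) = ((α : ℕ) - j) + 1 := by omega
        simp only [hz, hidx]
        have hprod : (∏ t ∈ Finset.range l, (((-((j : ℤ) + 1) : ℤ) : ℂ) - t))
            = (-1 : ℂ) ^ l * (Nat.factorial (j + l) : ℂ) / (Nat.factorial j : ℂ) := by
          rw [← prod_neg_shift j l]
          refine Finset.prod_congr rfl fun t _ => ?_
          push_cast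
          ring
        have hexp : -((j : ℤ) + 1) - (l : ℤ) = -((j : ℤ) + (l : ℤ) + 1) := by ring
        rw [hprod, hexp]
        have hfj : (Nat.factorial j : ℂ) ≠ 0 := Nat.cast_ne_zero.2 (Nat.factorial_ne_zero j)
        have hfl : (Nat.factorial l : ℂ) ≠ 0 := Nat.cast_ne_zero.2 (Nat.factorial_ne_zero l)
        field_simp
  exact (Finset.sum_sigma' (Finset.range ((b : ℕ) + 1)) (fun _ => Tfin r₁ s)
    (fun m x => ((Nat.factorial m : ℂ))⁻¹ * (qb x.1 x.2.2 i
      * (pb x.1 (x.2.1 + 1 - x.2.2) ⬝ᵥ p μ ((b : ℕ) + 1 - m))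
      * (∏ t ∈ Finset.range m, ((zf s x : ℂ) - t)) * (κ μ - κb x.1) ^ (zf s x - m)))).symm
end

section
/- With the data of the context (n groups of vectors, points k_j, k̄_j with k_j ≠ k̄_i for all i, j, and F invertible), the rational matrix functions Γ(k) = I − Σ_{i,j=1}^{n} Σ_{m=1}^{r^{(i)}} Σ_{l=1}^{r^{(j)}} v_i^{(m)} (F^{−1})_{im,jl} v̄_j^{(l)} / (k − k̄_j) and Γinv(k) = I + Σ_{i,j=1}^{n} Σ_{m=1}^{r^{(i)}} Σ_{l=1}^{r^{(j)}} v_j^{(l)} (F^{−1})_{jl,im} v̄_i^{(m)} / (k − k_j) satisfy Γ(k)·Γinv(k) = Γinv(k)·Γ(k) = I for every complex k not in {k₁,…,k_n, k̄₁,…,k̄_n}. -/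
open Matrix

section Aux

variable {ι : Type*} [Fintype ι] [DecidableEq ι]

/-- Key contraction: `(G D) W (E G) = E G − G D` where `W = diag q · F − F · diag p`. -/
lemma stmt8_aux1 (F G : Matrix ι ι ℂ) (hGF : G * F = 1) (hFG : F * G = 1)
    (p q : ι → ℂ) (hp : ∀ x, p x ≠ 0) (hq : ∀ x, q x ≠ 0) :
    (G * diagonal (fun x => (q x)⁻¹)) *
        (diagonal q * F - F * diagonal p) *
        (diagonal (fun x => (p x)⁻¹) * G)
      = diagonal (fun x => (p x)⁻¹) * G - G * diagonal (fun x => (q x)⁻¹) := by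
  set D := diagonal (fun x => (q x)⁻¹) with hD
  set E := diagonal (fun x => (p x)⁻¹) with hE
  have hDq : D * diagonal q = 1 := by
    rw [hD, diagonal_mul_diagonal]
    convert diagonal_one using 2
    ext x; exact inv_mul_cancel₀ (hq x)
  have hpE : diagonal p * E = 1 := by
    rw [hE, diagonal_mul_diagonal]
    convert diagonal_one using 2
    ext x; exact mul_inv_cancel₀ (hp x)
  have step : D * (diagonal q * F - F * diagonal p) * E = F * E - D * F := by
    have : D * (diagonal q * F - F * diagonal p) * E
        = (D * diagonal q) * (F * E) - (D * F) * (diagonal p * E) := by noncomm_ring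
    rw [this, hDq, hpE, one_mul, mul_one]
  calc (G * D) * (diagonal q * F - F * diagonal p) * (E * G)
      = G * (D * (diagonal q * F - F * diagonal p) * E) * G := by noncomm_ring
    _ = G * (F * E - D * F) * G := by rw [step]
    _ = (G * F) * (E * G) - (G * D) * (F * G) := by noncomm_ring
    _ = E * G - G * D := by rw [hGF, hFG, one_mul, mul_one]

/-- Key contraction, other order: `(E G) W (G D) = E G − G D`. -/
lemma stmt8_aux2 (F G : Matrix ι ι ℂ) (hGF : G * F = 1) (hFG : F * G = 1)
    (p q : ι → ℂ) (hp : ∀ x, p x ≠ 0) (hq : ∀ x, q x ≠ 0) :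
    (diagonal (fun x => (p x)⁻¹) * G) *
        (diagonal q * F - F * diagonal p) *
        (G * diagonal (fun x => (q x)⁻¹))
      = diagonal (fun x => (p x)⁻¹) * G - G * diagonal (fun x => (q x)⁻¹) := by
  set D := diagonal (fun x => (q x)⁻¹) with hD
  set E := diagonal (fun x => (p x)⁻¹) with hE
  have hqD : diagonal q * D = 1 := by
    rw [hD, diagonal_mul_diagonal]
    convert diagonal_one using 2
    ext x; exact mul_inv_cancel₀ (hq x)
  have hEp : E * diagonal p = 1 := by
    rw [hE, diagonal_mul_diagonal]
    convert diagonal_one using 2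
    ext x; exact inv_mul_cancel₀ (hp x)
  calc (E * G) * (diagonal q * F - F * diagonal p) * (G * D)
      = (E * G) * ((diagonal q) * ((F * G) * D)) -
          (E * (G * F) * diagonal p) * (G * D) := by noncomm_ring
    _ = (E * G) * (diagonal q * D) - (E * diagonal p) * (G * D) := by
        rw [hFG, hGF, one_mul, mul_one]
    _ = E * G - G * D := by rw [hqD, hEp, mul_one, one_mul]

/-- Abstract cancellation: if `A (V̄ V) B = B − A` then `(1 − V A V̄)(1 + V B V̄) = 1`. -/
lemma stmt8_aux3 {κ : Type*} [Fintype κ] [DecidableEq κ]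
    (V : Matrix κ ι ℂ) (Vb : Matrix ι κ ℂ) (A B : Matrix ι ι ℂ)
    (h : A * (Vb * V) * B = B - A) :
    (1 - V * A * Vb) * (1 + V * B * Vb) = 1 := by
  have e : (1 - V * A * Vb) * (1 + V * B * Vb)
      = 1 + V * B * Vb - V * A * Vb - (V * A * Vb) * (V * B * Vb) := by noncomm_ring
  have e2 : (V * A * Vb) * (V * B * Vb) = V * (A * (Vb * V) * B) * Vb := by
    simp only [Matrix.mul_assoc]
  rw [e, e2, h, Matrix.mul_sub, Matrix.sub_mul]
  abel

/-- Abstract cancellation, other order. -/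
lemma stmt8_aux4 {κ : Type*} [Fintype κ] [DecidableEq κ]
    (V : Matrix κ ι ℂ) (Vb : Matrix ι κ ℂ) (A B : Matrix ι ι ℂ)
    (h : B * (Vb * V) * A = B - A) :
    (1 + V * B * Vb) * (1 - V * A * Vb) = 1 := by
  have e : (1 + V * B * Vb) * (1 - V * A * Vb)
      = 1 + V * B * Vb - V * A * Vb - (V * B * Vb) * (V * A * Vb) := by noncomm_ring
  have e2 : (V * B * Vb) * (V * A * Vb) = V * (B * (Vb * V) * A) * Vb := by
    simp only [Matrix.mul_assoc]
  rw [e, e2, h, Matrix.mul_sub, Matrix.sub_mul]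
  abel

end Aux

/-- the soliton matrices for `n` pairs of zeros with equal geometric and algebraic
multiplicities, `Γ(k) = I − Σ v_i^{(m)} (F⁻¹)_{im,jl} v̄_j^{(l)}/(k−k̄_j)` and
`Γinv(k) = I + Σ v_j^{(l)} (F⁻¹)_{jl,im} v̄_i^{(m)}/(k−k_j)`, are mutually inverse away from
the zeros. -/
theorem stmt8 (N n : ℕ) (hN : 1 ≤ N) (hn : 1 ≤ n)
    (r : Fin n → ℕ) (hr : ∀ j, 1 ≤ r j)
    (kk kb : Fin n → ℂ) (hk : ∀ i j, kk j ≠ kb i)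
    (v vb : (j : Fin n) → Fin (r j) → Fin N → ℂ)
    (F : Matrix ((j : Fin n) × Fin (r j)) ((j : Fin n) × Fin (r j)) ℂ)
    (hF : ∀ x y, F x y = (vb x.1 x.2 ⬝ᵥ v y.1 y.2) / (kk y.1 - kb x.1))
    (hFunit : IsUnit F)
    (Γ Γinv : ℂ → Matrix (Fin N) (Fin N) ℂ)
    (hΓ : ∀ k, Γ k = 1 - ∑ x : (j : Fin n) × Fin (r j), ∑ y : (j : Fin n) × Fin (r j),
      (F⁻¹ x y / (k - kb y.1)) • vecMulVec (v x.1 x.2) (vb y.1 y.2))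
    (hΓinv : ∀ k, Γinv k = 1 + ∑ x : (j : Fin n) × Fin (r j), ∑ y : (j : Fin n) × Fin (r j),
      (F⁻¹ x y / (k - kk x.1)) • vecMulVec (v x.1 x.2) (vb y.1 y.2)) :
    ∀ k : ℂ, (∀ j, k ≠ kk j) → (∀ j, k ≠ kb j) → Γ k * Γinv k = 1 ∧ Γinv k * Γ k = 1 := by
  intro k hkk hkb
  have hdet : IsUnit F.det := (Matrix.isUnit_iff_isUnit_det F).mp hFunit
  have hGF : F⁻¹ * F = 1 := Matrix.nonsing_inv_mul F hdet
  have hFG : F * F⁻¹ = 1 := Matrix.mul_nonsing_inv F hdet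
  have hp : ∀ x : ((j : Fin n) × Fin (r j)), k - kk x.1 ≠ 0 :=
    fun x => sub_ne_zero.mpr (hkk x.1)
  have hq : ∀ x : ((j : Fin n) × Fin (r j)), k - kb x.1 ≠ 0 :=
    fun x => sub_ne_zero.mpr (hkb x.1)
  have hkkb : ∀ x y : ((j : Fin n) × Fin (r j)), kk y.1 - kb x.1 ≠ 0 :=
    fun x y => sub_ne_zero.mpr (hk x.1 y.1)
  -- the tall/wide matrices of vectors
  let V : Matrix (Fin N) ((j : Fin n) × Fin (r j)) ℂ := Matrix.of (fun i x => v x.1 x.2 i)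
  let Vb : Matrix ((j : Fin n) × Fin (r j)) (Fin N) ℂ := Matrix.of (fun x i => vb x.1 x.2 i)
  -- general sum-to-product rewriting
  have hsum : ∀ C : Matrix ((j : Fin n) × Fin (r j)) ((j : Fin n) × Fin (r j)) ℂ,
      (∑ x : ((j : Fin n) × Fin (r j)), ∑ y : ((j : Fin n) × Fin (r j)),
        C x y • vecMulVec (v x.1 x.2) (vb y.1 y.2)) = V * C * Vb := by
    intro C
    ext i j
    simp only [Matrix.sum_apply, Matrix.smul_apply, vecMulVec_apply, smul_eq_mul,
      Matrix.mul_apply, Matrix.of_apply, Finset.sum_mul, Finset.mul_sum, V, Vb]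
    rw [Finset.sum_comm]
    exact Finset.sum_congr rfl fun y _ => Finset.sum_congr rfl fun x _ => by ring
  -- Sylvester-type relation
  have hVbV : Vb * V = Matrix.diagonal (fun x : ((j : Fin n) × Fin (r j)) => k - kb x.1) * F
      - F * Matrix.diagonal (fun x : ((j : Fin n) × Fin (r j)) => k - kk x.1) := by
    ext x y
    have h1 : (Vb * V) x y = vb x.1 x.2 ⬝ᵥ v y.1 y.2 := by
      simp [Matrix.mul_apply, dotProduct, V, Vb]
    rw [Matrix.sub_apply, Matrix.diagonal_mul, Matrix.mul_diagonal, h1, hF x y]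
    field_simp [hkkb x y]
    ring
  -- express Γ and Γinv as products
  set D : Matrix ((j : Fin n) × Fin (r j)) ((j : Fin n) × Fin (r j)) ℂ :=
    Matrix.diagonal (fun x => (k - kb x.1)⁻¹) with hD
  set E : Matrix ((j : Fin n) × Fin (r j)) ((j : Fin n) × Fin (r j)) ℂ :=
    Matrix.diagonal (fun x => (k - kk x.1)⁻¹) with hE
  have hΓ' : Γ k = 1 - V * (F⁻¹ * D) * Vb := by
    rw [hΓ k, ← hsum (F⁻¹ * D)]
    congr 1
    refine Finset.sum_congr rfl fun x _ => Finset.sum_congr rfl fun y _ => ?_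
    rw [hD, Matrix.mul_diagonal, div_eq_mul_inv]
  have hΓinv' : Γinv k = 1 + V * (E * F⁻¹) * Vb := by
    rw [hΓinv k, ← hsum (E * F⁻¹)]
    congr 1
    refine Finset.sum_congr rfl fun x _ => Finset.sum_congr rfl fun y _ => ?_
    rw [hE, Matrix.diagonal_mul, div_eq_mul_inv, mul_comm]
  have hA : (F⁻¹ * D) * (Vb * V) * (E * F⁻¹) = E * F⁻¹ - F⁻¹ * D := by
    rw [hVbV, hD, hE]
    exact stmt8_aux1 F F⁻¹ hGF hFG _ _ hp hq
  have hB : (E * F⁻¹) * (Vb * V) * (F⁻¹ * D) = E * F⁻¹ - F⁻¹ * D := by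
    rw [hVbV, hD, hE]
    exact stmt8_aux2 F F⁻¹ hGF hFG _ _ hp hq
  constructor
  · rw [hΓ', hΓinv']
    exact stmt8_aux3 V Vb (F⁻¹ * D) (E * F⁻¹) hA
  · rw [hΓ', hΓinv']
    exact stmt8_aux4 V Vb (F⁻¹ * D) (E * F⁻¹) hB
end

section
/- With the data of the context (n groups of vectors, points k_j, k̄_j with k_j ≠ k̄_i for all i, j, and F invertible), and Γ, Γinv defined by Γ(k) = I − Σ_{i,j} Σ_{m,l} v_i^{(m)} (F^{−1})_{im,jl} v̄_j^{(l)} / (k − k̄_j), Γinv(k) = I + Σ_{i,j} Σ_{m,l} v_j^{(l)} (F^{−1})_{jl,im} v̄_i^{(m)} / (k − k_j), one has for every 1 ≤ j ≤ n and 1 ≤ l ≤ r^{(j)}: Γ(k_j) v_j^{(l)} = 0 and v̄_j^{(l)} Γinv(k̄_j) = 0. (Γ is holomorphic at each k_j and Γinv is holomorphic at each k̄_j since k_j ≠ k̄_i.) -/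
open Matrix

/-- the soliton matrices `Γ`, `Γinv` built from the data `(v, v̄, F)` satisfy
`Γ(k_j) v_j^{(l)} = 0` and `v̄_j^{(l)} Γinv(k̄_j) = 0` for all `j, l`. -/
theorem stmt9 (N n : ℕ) (hN : 1 ≤ N) (hn : 1 ≤ n)
    (r : Fin n → ℕ) (hr : ∀ j, 1 ≤ r j)
    (kk kb : Fin n → ℂ) (hk : ∀ i j, kk j ≠ kb i)
    (v vb : (j : Fin n) → Fin (r j) → Fin N → ℂ)
    (F : Matrix ((j : Fin n) × Fin (r j)) ((j : Fin n) × Fin (r j)) ℂ)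
    (hF : ∀ x y, F x y = (vb x.1 x.2 ⬝ᵥ v y.1 y.2) / (kk y.1 - kb x.1))
    (hFunit : IsUnit F)
    (Γ Γinv : ℂ → Matrix (Fin N) (Fin N) ℂ)
    (hΓ : ∀ k, Γ k = 1 - ∑ x : (j : Fin n) × Fin (r j), ∑ y : (j : Fin n) × Fin (r j),
      (F⁻¹ x y / (k - kb y.1)) • vecMulVec (v x.1 x.2) (vb y.1 y.2))
    (hΓinv : ∀ k, Γinv k = 1 + ∑ x : (j : Fin n) × Fin (r j), ∑ y : (j : Fin n) × Fin (r j),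
      (F⁻¹ x y / (k - kk x.1)) • vecMulVec (v x.1 x.2) (vb y.1 y.2)) :
    ∀ (j : Fin n) (l : Fin (r j)),
      (Γ (kk j)).mulVec (v j l) = 0 ∧ Matrix.vecMul (vb j l) (Γinv (kb j)) = 0 := by
  intro j l
  have hd : ∀ (i jj : Fin n), kk jj - kb i ≠ 0 := fun i jj => sub_ne_zero.mpr (hk i jj)
  have hdet : IsUnit F.det := (Matrix.isUnit_iff_isUnit_det F).mp hFunit
  have hIF : F⁻¹ * F = 1 := Matrix.nonsing_inv_mul F hdet
  have hFI : F * F⁻¹ = 1 := Matrix.mul_nonsing_inv F hdet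
  have hdot : ∀ (y : (j : Fin n) × Fin (r j)),
      vb y.1 y.2 ⬝ᵥ v j l = F y ⟨j, l⟩ * (kk j - kb y.1) := by
    intro y
    rw [hF]
    exact (div_mul_cancel₀ _ (hd y.1 j)).symm
  constructor
  · funext i
    rw [hΓ, sub_mulVec, one_mulVec]
    simp only [Pi.sub_apply, Pi.zero_apply]
    have key : (∑ x : (j : Fin n) × Fin (r j), ∑ y : (j : Fin n) × Fin (r j),
        (F⁻¹ x y / (kk j - kb y.1)) • vecMulVec (v x.1 x.2) (vb y.1 y.2)).mulVec (v j l) i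
        = v j l i := by
      simp only [mulVec, dotProduct, Matrix.sum_apply, Matrix.smul_apply, vecMulVec_apply,
        smul_eq_mul, Finset.sum_mul]
      rw [Finset.sum_comm]
      calc ∑ x : (j : Fin n) × Fin (r j), ∑ t : Fin N, ∑ y : (j : Fin n) × Fin (r j),
            F⁻¹ x y / (kk j - kb y.1) * (v x.1 x.2 i * vb y.1 y.2 t) * v j l t
          = ∑ x : (j : Fin n) × Fin (r j), ∑ y : (j : Fin n) × Fin (r j),
            F⁻¹ x y / (kk j - kb y.1) * v x.1 x.2 i *
              (∑ t : Fin N, vb y.1 y.2 t * v j l t) := by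
            refine Finset.sum_congr rfl fun x _ => ?_
            rw [Finset.sum_comm]
            refine Finset.sum_congr rfl fun y _ => ?_
            rw [Finset.mul_sum]
            refine Finset.sum_congr rfl fun t _ => ?_
            ring
        _ = ∑ x : (j : Fin n) × Fin (r j),
            v x.1 x.2 i * ∑ y : (j : Fin n) × Fin (r j), F⁻¹ x y * F y ⟨j, l⟩ := by
            refine Finset.sum_congr rfl fun x _ => ?_
            rw [Finset.mul_sum]
            refine Finset.sum_congr rfl fun y _ => ?_
            have : (∑ t : Fin N, vb y.1 y.2 t * v j l t) = vb y.1 y.2 ⬝ᵥ v j l := rfl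
            rw [this, hdot y]
            field_simp [hd y.1 j]
        _ = ∑ x : (j : Fin n) × Fin (r j), v x.1 x.2 i * (1 : Matrix ((j : Fin n) × Fin (r j)) ((j : Fin n) × Fin (r j)) ℂ) x ⟨j, l⟩ := by
            refine Finset.sum_congr rfl fun x _ => ?_
            rw [← hIF, Matrix.mul_apply]
        _ = v j l i := by
            simp [Matrix.one_apply]
    rw [key, sub_self]
  · funext t
    rw [hΓinv, vecMul_add, vecMul_one]
    simp only [Pi.add_apply, Pi.zero_apply]
    have key : Matrix.vecMul (vb j l) (∑ x : (j : Fin n) × Fin (r j), ∑ y : (j : Fin n) × Fin (r j),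
        (F⁻¹ x y / (kb j - kk x.1)) • vecMulVec (v x.1 x.2) (vb y.1 y.2)) t
        = - vb j l t := by
      simp only [vecMul, dotProduct, Matrix.sum_apply, Matrix.smul_apply, vecMulVec_apply,
        smul_eq_mul, Finset.mul_sum]
      have hdot2 : ∀ (x : (j : Fin n) × Fin (r j)),
          (∑ s : Fin N, vb j l s * v x.1 x.2 s) = F ⟨j, l⟩ x * (kk x.1 - kb j) := by
        intro x
        have : (∑ s : Fin N, vb j l s * v x.1 x.2 s) = vb j l ⬝ᵥ v x.1 x.2 := rfl
        rw [this, hF ⟨j, l⟩ x]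
        exact (div_mul_cancel₀ _ (hd j x.1)).symm
      calc ∑ s : Fin N, ∑ x : (j : Fin n) × Fin (r j), ∑ y : (j : Fin n) × Fin (r j),
            vb j l s * (F⁻¹ x y / (kb j - kk x.1) * (v x.1 x.2 s * vb y.1 y.2 t))
          = ∑ x : (j : Fin n) × Fin (r j), ∑ y : (j : Fin n) × Fin (r j),
            F⁻¹ x y / (kb j - kk x.1) * vb y.1 y.2 t *
              (∑ s : Fin N, vb j l s * v x.1 x.2 s) := by
            rw [Finset.sum_comm]
            refine Finset.sum_congr rfl fun x _ => ?_
            rw [Finset.sum_comm]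
            refine Finset.sum_congr rfl fun y _ => ?_
            rw [Finset.mul_sum]
            refine Finset.sum_congr rfl fun s _ => ?_
            ring
        _ = ∑ x : (j : Fin n) × Fin (r j), ∑ y : (j : Fin n) × Fin (r j),
            -(F ⟨j, l⟩ x * F⁻¹ x y) * vb y.1 y.2 t := by
            refine Finset.sum_congr rfl fun x _ => ?_
            refine Finset.sum_congr rfl fun y _ => ?_
            rw [hdot2 x]
            have hne : kb j - kk x.1 ≠ 0 := fun h => (hd j x.1) (by linear_combination -h)
            field_simp
            try ring
        _ = ∑ y : (j : Fin n) × Fin (r j),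
            -((1 : Matrix _ _ ℂ) (⟨j, l⟩ : (j : Fin n) × Fin (r j)) y) * vb y.1 y.2 t := by
            rw [Finset.sum_comm]
            refine Finset.sum_congr rfl fun y _ => ?_
            rw [← hFI]
            simp [Matrix.mul_apply, Finset.sum_mul, neg_mul]
        _ = - vb j l t := by
            simp [Matrix.one_apply]
    rw [key, add_neg_cancel]
end

section
/- With the data of the context, assume additionally that k₁,…,k_n are pairwise distinct, k̄₁,…,k̄_n are pairwise distinct, and for each j the column vectors v_j^{(1)},…,v_j^{(r^{(j)})} are linearly independent and the row vectors v̄_j^{(1)},…,v̄_j^{(r^{(j)})} are linearly independent. Then for every complex k not in {k̄₁,…,k̄_n}, det Γ(k) = Π_{j=1}^{n} ((k−k_j)/(k−k̄_j))^{r^{(j)}}, where Γ(k) = I − Σ_{i,j} Σ_{m,l} v_i^{(m)} (F^{−1})_{im,jl} v̄_j^{(l)} / (k − k̄_j). -/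
open Matrix

/-- if moreover the `k_j` are pairwise distinct, the `k̄_j` are pairwise
distinct, and for each `j` the columns `v_j^{(1)},…,v_j^{(r⁽ʲ⁾)}` and the rows
`v̄_j^{(1)},…,v̄_j^{(r⁽ʲ⁾)}` are linearly independent, then
`det Γ(k) = Π_j ((k−k_j)/(k−k̄_j))^{r⁽ʲ⁾}` for all `k` not among the `k̄_j`. -/
theorem stmt10 (N n : ℕ) (hN : 1 ≤ N) (hn : 1 ≤ n)
    (r : Fin n → ℕ) (hr : ∀ j, 1 ≤ r j)
    (kk kb : Fin n → ℂ) (hk : ∀ i j, kk j ≠ kb i)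
    (hkk : Function.Injective kk) (hkb : Function.Injective kb)
    (v vb : (j : Fin n) → Fin (r j) → Fin N → ℂ)
    (hv : ∀ j, LinearIndependent ℂ (v j)) (hvb : ∀ j, LinearIndependent ℂ (vb j))
    (F : Matrix ((j : Fin n) × Fin (r j)) ((j : Fin n) × Fin (r j)) ℂ)
    (hF : ∀ x y, F x y = (vb x.1 x.2 ⬝ᵥ v y.1 y.2) / (kk y.1 - kb x.1))
    (hFunit : IsUnit F)
    (Γ : ℂ → Matrix (Fin N) (Fin N) ℂ)
    (hΓ : ∀ k, Γ k = 1 - ∑ x : (j : Fin n) × Fin (r j), ∑ y : (j : Fin n) × Fin (r j),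
      (F⁻¹ x y / (k - kb y.1)) • vecMulVec (v x.1 x.2) (vb y.1 y.2)) :
    ∀ k : ℂ, (∀ j, k ≠ kb j) →
      (Γ k).det = ∏ j : Fin n, ((k - kk j) / (k - kb j)) ^ (r j) := by
  intro k hkne
  have hkb0 : ∀ j : Fin n, k - kb j ≠ 0 := fun j => sub_ne_zero.mpr (hkne j)
  have hkkb0 : ∀ i j : Fin n, kk j - kb i ≠ 0 := fun i j => sub_ne_zero.mpr (hk i j)
  let V : Matrix (Fin N) ((j : Fin n) × Fin (r j)) ℂ := fun a x => v x.1 x.2 a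
  let W : Matrix ((j : Fin n) × Fin (r j)) (Fin N) ℂ := fun y a => vb y.1 y.2 a
  let D : Matrix ((j : Fin n) × Fin (r j)) ((j : Fin n) × Fin (r j)) ℂ :=
    Matrix.diagonal (fun y => (k - kb y.1)⁻¹)
  let E : Matrix ((j : Fin n) × Fin (r j)) ((j : Fin n) × Fin (r j)) ℂ :=
    Matrix.diagonal (fun y => k - kk y.1)
  have hdetF : IsUnit F.det := (Matrix.isUnit_iff_isUnit_det F).mp hFunit
  have hWV : ∀ x y, (W * V) x y = F x y * (kk y.1 - kb x.1) := by
    intro x y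
    have h := hF x y
    rw [eq_div_iff (hkkb0 x.1 y.1)] at h
    rw [Matrix.mul_apply]
    simpa [Matrix.mul_apply, W, V, dotProduct] using h.symm
  have hΓ' : Γ k = 1 - V * (F⁻¹ * D * W) := by
    rw [hΓ]
    congr 1
    ext a b
    simp only [Matrix.mul_apply]
    simp only [Matrix.mul_apply, Matrix.sum_apply, Matrix.smul_apply, vecMulVec_apply,
      smul_eq_mul, V, W, D, Matrix.diagonal_apply, ite_mul, zero_mul, mul_ite, mul_zero,
      Finset.sum_ite_eq, Finset.sum_ite_eq', Finset.mem_univ, if_true,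
      Finset.sum_mul, Finset.mul_sum]
    apply Finset.sum_congr rfl
    intro x _
    apply Finset.sum_congr rfl
    intro y _
    rw [div_eq_mul_inv]
    ring
  have key : (Γ k).det = (1 - F⁻¹ * D * W * V).det := by
    rw [hΓ', Matrix.det_one_sub_mul_comm]
  have h1 : F⁻¹ * F = 1 := Matrix.nonsing_inv_mul F hdetF
  have hfac : 1 - F⁻¹ * D * W * V = F⁻¹ * (D * F * E) := by
    have h2 : D * F * E = F - D * (W * V) := by
      ext x y
      simp only [Matrix.sub_apply, D, E, Matrix.mul_diagonal, Matrix.diagonal_mul]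
      rw [hWV x y]
      have hc : (k - kb x.1)⁻¹ * (k - kb x.1) = 1 := inv_mul_cancel₀ (hkb0 x.1)
      linear_combination F x y * hc
    rw [h2, Matrix.mul_sub, h1, Matrix.mul_assoc, Matrix.mul_assoc]
  rw [key, hfac, Matrix.det_mul, Matrix.det_mul, Matrix.det_mul, Matrix.det_diagonal,
    Matrix.det_diagonal]
  have hdet1 : F⁻¹.det * F.det = 1 := by
    rw [← Matrix.det_mul, h1, Matrix.det_one]
  calc F⁻¹.det * ((∏ x : (j : Fin n) × Fin (r j), (k - kb x.1)⁻¹) * F.det *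
        ∏ x : (j : Fin n) × Fin (r j), (k - kk x.1))
      = (F⁻¹.det * F.det) * ∏ x : (j : Fin n) × Fin (r j), ((k - kk x.1) / (k - kb x.1)) := by
        rw [Finset.prod_div_distrib, Finset.prod_inv_distrib]
        ring
    _ = ∏ j : Fin n, ((k - kk j) / (k - kb j)) ^ (r j) := by
        rw [hdet1, one_mul, ← Finset.univ_sigma_univ, Finset.prod_sigma]
        simp [Finset.prod_const, div_pow, Finset.prod_div_distrib]
end

section
/- Let N ≥ 1, let k₁ ≠ k̄₁ be complex numbers, let v₁, v₂ ∈ ℂ^N be column vectors and v̄₁, v̄₂ row vectors satisfying v̄₁v₁ = 1, v̄₂v₂ = 1 and v̄₂v₁ = 0. Define Γ(k) = I + (k̄₁−k₁)(v₁v̄₁ + v₂v̄₂)/(k − k̄₁) and Γinv(k) = (I + (k₁−k̄₁) v₁v̄₁/(k − k₁))·(I + (k₁−k̄₁) v₂v̄₂/(k − k₁)). Then Γ(k)·Γinv(k) = Γinv(k)·Γ(k) = I for every complex k with k ≠ k₁ and k ≠ k̄₁. -/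
open Matrix

lemma vmv_mul_vmv {N : ℕ} (a b c d : Fin N → ℂ) :
    vecMulVec a b * vecMulVec c d = (b ⬝ᵥ c) • vecMulVec a d := by
  ext i j
  simp [Matrix.mul_apply, vecMulVec_apply, dotProduct, Finset.mul_sum, Finset.sum_mul]
  ring_nf
  congr 1; ext x; ring

/-- With `v̄₁v₁ = 1`, `v̄₂v₂ = 1`, `v̄₂v₁ = 0`,
`Γ(k) = I + (k̄₁−k₁)(v₁v̄₁ + v₂v̄₂)/(k−k̄₁)` and
`Γinv(k) = (I + (k₁−k̄₁)v₁v̄₁/(k−k₁))·(I + (k₁−k̄₁)v₂v̄₂/(k−k₁))` are mutually inverse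
for every `k ≠ k₁, k̄₁`. -/
theorem stmt11 (N : ℕ) (hN : 1 ≤ N) (k₁ kb₁ : ℂ) (hk : k₁ ≠ kb₁)
    (v₁ v₂ vb₁ vb₂ : Fin N → ℂ)
    (h11 : vb₁ ⬝ᵥ v₁ = 1) (h22 : vb₂ ⬝ᵥ v₂ = 1) (h21 : vb₂ ⬝ᵥ v₁ = 0)
    (Γ Γinv : ℂ → Matrix (Fin N) (Fin N) ℂ)
    (hΓ : ∀ k, Γ k = 1 + ((kb₁ - k₁) / (k - kb₁)) • (vecMulVec v₁ vb₁ + vecMulVec v₂ vb₂))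
    (hΓinv : ∀ k, Γinv k =
      (1 + ((k₁ - kb₁) / (k - k₁)) • vecMulVec v₁ vb₁) *
        (1 + ((k₁ - kb₁) / (k - k₁)) • vecMulVec v₂ vb₂)) :
    ∀ k : ℂ, k ≠ k₁ → k ≠ kb₁ → Γ k * Γinv k = 1 ∧ Γinv k * Γ k = 1 := by
  intro k hk1 hk2
  have hd1 : k - k₁ ≠ 0 := sub_ne_zero.mpr hk1
  have hd2 : k - kb₁ ≠ 0 := sub_ne_zero.mpr hk2
  have hd1' : -k₁ + k ≠ 0 := by rw [add_comm, ← sub_eq_add_neg]; exact hd1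
  have hd2' : -kb₁ + k ≠ 0 := by rw [add_comm, ← sub_eq_add_neg]; exact hd2
  set a : ℂ := (k₁ - kb₁) / (k - k₁) with ha
  set b : ℂ := (kb₁ - k₁) / (k - kb₁) with hb
  set c : ℂ := vb₁ ⬝ᵥ v₂ with hc
  set P₁ := vecMulVec v₁ vb₁ with hP₁
  set P₂ := vecMulVec v₂ vb₂ with hP₂
  set Q := vecMulVec v₁ vb₂ with hQ
  have e11 : P₁ * P₁ = P₁ := by rw [hP₁, vmv_mul_vmv, h11, one_smul]
  have e22 : P₂ * P₂ = P₂ := by rw [hP₂, vmv_mul_vmv, h22, one_smul]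
  have e12 : P₁ * P₂ = c • Q := by rw [hP₁, hP₂, hQ, vmv_mul_vmv, hc]
  have e21 : P₂ * P₁ = 0 := by rw [hP₂, hP₁, vmv_mul_vmv, h21, zero_smul]
  have e1Q : P₁ * Q = Q := by rw [hP₁, hQ, vmv_mul_vmv, h11, one_smul]
  have e2Q : P₂ * Q = 0 := by rw [hP₂, hQ, vmv_mul_vmv, h21, zero_smul]
  have eQ1 : Q * P₁ = 0 := by rw [hQ, hP₁, vmv_mul_vmv, h21, zero_smul]
  have eQ2 : Q * P₂ = Q := by rw [hQ, hP₂, vmv_mul_vmv, h22, one_smul]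
  have hab : a + b + a * b = 0 := by
    rw [ha, hb]; field_simp; ring
  have hab2 : a ^ 2 * c + a ^ 2 * c * b + a * b * c = 0 := by
    have : a ^ 2 * c + a ^ 2 * c * b + a * b * c = a * c * (a + a * b + b) := by ring
    rw [this]
    have : a + a * b + b = a + b + a * b := by ring
    rw [this, hab, mul_zero]
  clear_value a b c P₁ P₂ Q
  have hΓi : Γinv k = 1 + a • P₁ + a • P₂ + (a ^ 2 * c) • Q := by
    rw [hΓinv k, ← ha]
    simp only [mul_add, add_mul, mul_one, one_mul, Matrix.mul_smul, Matrix.smul_mul,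
      smul_smul, e12]
    match_scalars <;> ring
  constructor
  · rw [hΓ k, ← hb, hΓi]
    simp only [mul_add, add_mul, mul_one, one_mul, Matrix.mul_smul, Matrix.smul_mul,
      smul_add, smul_smul, e11, e12, e21, e22, e1Q, e2Q, eQ1, eQ2, smul_zero, add_zero,
      zero_add, mul_zero]
    match_scalars
    all_goals first
      | ring1
      | linear_combination hab
      | linear_combination (a * c) * hab
      | linear_combination c * hab
      | linear_combination hab2
  · rw [hΓ k, ← hb, hΓi]
    simp only [mul_add, add_mul, mul_one, one_mul, Matrix.mul_smul, Matrix.smul_mul,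
      smul_add, smul_smul, e11, e12, e21, e22, e1Q, e2Q, eQ1, eQ2, smul_zero, add_zero,
      zero_add, mul_zero]
    match_scalars
    all_goals first
      | ring1
      | linear_combination hab
      | linear_combination (a * c) * hab
      | linear_combination c * hab
      | linear_combination hab2
end

section
/- Let N ≥ 1, let k₁ ≠ k̄₁ be complex numbers, let v₁, v₂ ∈ ℂ^N be column vectors and v̄₁, v̄₂ row vectors satisfying v̄₁v₁ = 1, v̄₂v₂ = 1, v̄₂v₁ = 0 and v̄₁v₂ ≠ 0. Set A = I − v₁v̄₁ − v₂v̄₂ (the value at k = k₁ of Γ(k) = I + (k̄₁−k₁)(v₁v̄₁+v₂v̄₂)/(k−k̄₁)) and B = (I − v₁v̄₁)(I − v₂v̄₂) (the value at k = k̄₁ of Γinv(k) = (I + (k₁−k̄₁)v₁v̄₁/(k−k₁))(I + (k₁−k̄₁)v₂v̄₂/(k−k₁))). Then: (a) v̄₁B = 0 and v̄₂B = 0, and v̄₁, v̄₂ are linearly independent, so the left kernel of B has dimension at least 2; (b) every column vector p ∈ ℂ^N with A·p = 0 is a scalar multiple of v₁, so the kernel of A is exactly the one-dimensional span of v₁.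 -/
open Matrix

lemma myVecMul_vecMulVec {N : ℕ} (u v w : Fin N → ℂ) :
    Matrix.vecMul u (vecMulVec v w) = (u ⬝ᵥ v) • w := by
  ext j
  simp [Matrix.vecMul, dotProduct, vecMulVec_apply, Finset.sum_mul, mul_assoc]

lemma myVecMulVec_mulVec {N : ℕ} (v w x : Fin N → ℂ) :
    (vecMulVec v w).mulVec x = (w ⬝ᵥ x) • v := by
  ext i
  simp [Matrix.mulVec, dotProduct, vecMulVec_apply, Finset.mul_sum, Finset.sum_mul,
    mul_assoc, mul_comm, mul_left_comm]

/-- An abnormal pair of zeros: with `v̄₁v₁ = 1`, `v̄₂v₂ = 1`, `v̄₂v₁ = 0`,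
`v̄₁v₂ ≠ 0`, and `A = I − v₁v̄₁ − v₂v̄₂`, `B = (I − v₁v̄₁)(I − v₂v̄₂)`:
(a) `v̄₁B = 0`, `v̄₂B = 0`, `v̄₁, v̄₂` are linearly independent, so the left kernel of `B` has
dimension at least 2; (b) every `p` with `A·p = 0` is a multiple of `v₁`, so the kernel of `A`
is exactly the span of `v₁`. -/
theorem stmt13 (N : ℕ) (hN : 1 ≤ N) (k₁ kb₁ : ℂ) (hk : k₁ ≠ kb₁)
    (v₁ v₂ vb₁ vb₂ : Fin N → ℂ)
    (h11 : vb₁ ⬝ᵥ v₁ = 1) (h22 : vb₂ ⬝ᵥ v₂ = 1) (h21 : vb₂ ⬝ᵥ v₁ = 0) (h12 : vb₁ ⬝ᵥ v₂ ≠ 0)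
    (A B : Matrix (Fin N) (Fin N) ℂ)
    (hA : A = 1 - vecMulVec v₁ vb₁ - vecMulVec v₂ vb₂)
    (hB : B = (1 - vecMulVec v₁ vb₁) * (1 - vecMulVec v₂ vb₂)) :
    (Matrix.vecMul vb₁ B = 0 ∧ Matrix.vecMul vb₂ B = 0 ∧
      LinearIndependent ℂ ![vb₁, vb₂] ∧
      2 ≤ Module.finrank ℂ (LinearMap.ker B.vecMulLinear)) ∧
    ((∀ p : Fin N → ℂ, A.mulVec p = 0 → ∃ c : ℂ, p = c • v₁) ∧
      LinearMap.ker A.mulVecLin = Submodule.span ℂ {v₁}) := by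
  have hb1 : Matrix.vecMul vb₁ B = 0 := by
    rw [hB, ← Matrix.vecMul_vecMul]
    have h : Matrix.vecMul vb₁ (1 - vecMulVec v₁ vb₁) = 0 := by
      rw [Matrix.vecMul_sub, Matrix.vecMul_one, myVecMul_vecMulVec, h11, one_smul, sub_self]
    rw [h, Matrix.zero_vecMul]
  have hb2 : Matrix.vecMul vb₂ B = 0 := by
    rw [hB, ← Matrix.vecMul_vecMul]
    have h : Matrix.vecMul vb₂ (1 - vecMulVec v₁ vb₁) = vb₂ := by
      rw [Matrix.vecMul_sub, Matrix.vecMul_one, myVecMul_vecMulVec, h21, zero_smul, sub_zero]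
    rw [h, Matrix.vecMul_sub, Matrix.vecMul_one, myVecMul_vecMulVec, h22, one_smul, sub_self]
  have hli : LinearIndependent ℂ ![vb₁, vb₂] := by
    rw [LinearIndependent.pair_iff]
    intro s t hst
    have h1 : (s • vb₁ + t • vb₂) ⬝ᵥ v₁ = 0 := by rw [hst]; simp
    have h2 : (s • vb₁ + t • vb₂) ⬝ᵥ v₂ = 0 := by rw [hst]; simp
    simp [add_dotProduct, smul_dotProduct, h11, h21, h22] at h1 h2
    subst h1
    simpa using h2
  have hker : 2 ≤ Module.finrank ℂ (LinearMap.ker B.vecMulLinear) := by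
    have hle : Submodule.span ℂ (Set.range ![vb₁, vb₂]) ≤ LinearMap.ker B.vecMulLinear := by
      rw [Submodule.span_le]
      rintro x ⟨i, rfl⟩
      fin_cases i <;> simp [LinearMap.mem_ker, hb1, hb2]
    have := Submodule.finrank_mono hle
    rwa [finrank_span_eq_card hli, Fintype.card_fin] at this
  have hbpart : ∀ p : Fin N → ℂ, A.mulVec p = 0 → ∃ c : ℂ, p = c • v₁ := by
    intro p hp
    have heq : p - (vb₁ ⬝ᵥ p) • v₁ - (vb₂ ⬝ᵥ p) • v₂ = 0 := by
      have : A.mulVec p = p - (vb₁ ⬝ᵥ p) • v₁ - (vb₂ ⬝ᵥ p) • v₂ := by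
        rw [hA, Matrix.sub_mulVec, Matrix.sub_mulVec, Matrix.one_mulVec,
          myVecMulVec_mulVec, myVecMulVec_mulVec]
      rw [← this, hp]
    have h2p : vb₂ ⬝ᵥ p = 0 := by
      have hd : vb₁ ⬝ᵥ (p - (vb₁ ⬝ᵥ p) • v₁ - (vb₂ ⬝ᵥ p) • v₂) = 0 := by rw [heq]; simp
      simp [dotProduct_sub, dotProduct_smul, h11, smul_eq_mul] at hd
      rcases hd with h | h
      · exact h
      · exact absurd h h12
    refine ⟨vb₁ ⬝ᵥ p, ?_⟩
    have := heq
    rw [h2p, zero_smul, sub_zero, sub_eq_zero] at this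
    exact this
  refine ⟨⟨hb1, hb2, hli, hker⟩, hbpart, ?_⟩
  apply le_antisymm
  · intro p hp
    obtain ⟨c, rfl⟩ := hbpart p (by simpa using hp)
    exact Submodule.smul_mem _ c (Submodule.mem_span_singleton_self v₁)
  · rw [Submodule.span_le]
    rintro x hx
    simp only [Set.mem_singleton_iff] at hx
    subst hx
    simp only [SetLike.mem_coe, LinearMap.mem_ker, Matrix.mulVecLin_apply]
    rw [hA, Matrix.sub_mulVec, Matrix.sub_mulVec, Matrix.one_mulVec,
      myVecMulVec_mulVec, myVecMulVec_mulVec, h11, h21, one_smul, zero_smul, sub_self, sub_zero]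
end

section
/- Let N ≥ 1, s ≥ 1, κ ∈ ℂ, and let f and g be N×N-complex-matrix-valued functions holomorphic on a neighborhood of κ. Then T_s[f·g](κ) = T_s[f](κ) · T_s[g](κ), where f·g denotes the pointwise matrix product; that is, the block lower-triangular Toeplitz construction from Taylor coefficients is multiplicative. -/
open Finset

lemma itdWithin_eq {U : Set ℂ} (hU : IsOpen U) {x : ℂ} (hx : x ∈ U) (n : ℕ) (f : ℂ → ℂ) :
    iteratedDerivWithin n f U x = iteratedDeriv n f x := by
  rw [iteratedDerivWithin_eq_iteratedFDerivWithin, iteratedDeriv_eq_iteratedFDeriv,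
    iteratedFDerivWithin_of_isOpen n hU hx]

lemma itd_add {U : Set ℂ} (hU : IsOpen U) {x : ℂ} (hx : x ∈ U) {f g : ℂ → ℂ}
    (hf : AnalyticOnNhd ℂ f U) (hg : AnalyticOnNhd ℂ g U) (n : ℕ) :
    iteratedDeriv n (f + g) x = iteratedDeriv n f x + iteratedDeriv n g x := by
  rw [← itdWithin_eq hU hx, ← itdWithin_eq hU hx n f, ← itdWithin_eq hU hx n g]
  exact iteratedDerivWithin_add hx hU.uniqueDiffOn
    ((hf.contDiffOn hU.uniqueDiffOn).contDiffWithinAt hx) ((hg.contDiffOn hU.uniqueDiffOn).contDiffWithinAt hx)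

lemma analytic_fsum {U : Set ℂ} {ι : Type*} (t : Finset ι) (h : ι → ℂ → ℂ)
    (hh : ∀ c ∈ t, AnalyticOnNhd ℂ (h c) U) :
    AnalyticOnNhd ℂ (fun z => ∑ c ∈ t, h c z) U := by
  classical
  induction t using Finset.cons_induction with
  | empty => simpa using analyticOnNhd_const
  | cons a t' hc ih =>
    simp only [Finset.sum_cons]
    exact (hh a (Finset.mem_cons_self a t')).add
      (ih fun c hct => hh c (Finset.mem_cons_of_mem hct))

lemma itd_fsum {U : Set ℂ} (hU : IsOpen U) {x : ℂ} (hx : x ∈ U) {ι : Type*} (t : Finset ι)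
    (h : ι → ℂ → ℂ) (hh : ∀ c ∈ t, AnalyticOnNhd ℂ (h c) U) (n : ℕ) :
    iteratedDeriv n (fun z => ∑ c ∈ t, h c z) x = ∑ c ∈ t, iteratedDeriv n (h c) x := by
  classical
  induction t using Finset.cons_induction with
  | empty =>
    simp only [Finset.sum_empty]
    have : deriv^[n] (fun _ : ℂ => (0:ℂ)) = fun _ => 0 :=
      Function.iterate_fixed (by funext y; simp) n
    simp [iteratedDeriv_eq_iterate, this]
  | cons a t' hc ih =>
    simp only [Finset.sum_cons]
    rw [show (fun z => h a z + ∑ c ∈ t', h c z)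
        = ((h a) + fun z => ∑ c ∈ t', h c z) from rfl,
      itd_add hU hx (hh a (Finset.mem_cons_self a t'))
        (analytic_fsum t' h fun c hct => hh c (Finset.mem_cons_of_mem hct)) n,
      ih fun c hct => hh c (Finset.mem_cons_of_mem hct)]

lemma binom_step (n : ℕ) (a b : ℕ → ℂ) :
    (∑ m ∈ range (n+1), (n.choose m : ℂ) * a (m+1) * b (n-m))
  + (∑ m ∈ range (n+1), (n.choose m : ℂ) * a m * b (n-m+1))
  = ∑ m ∈ range (n+2), ((n+1).choose m : ℂ) * a m * b (n+1-m) := by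
  rw [Finset.sum_range_succ' (fun m => ((n+1).choose m : ℂ) * a m * b (n+1-m)) (n+1)]
  have e1 : ∀ i ∈ range (n+1),
      (((n+1).choose (i+1) : ℂ)) * a (i+1) * b (n+1-(i+1))
      = (n.choose i : ℂ) * a (i+1) * b (n-i) + (n.choose (i+1) : ℂ) * a (i+1) * b (n-i) := by
    intro i _
    rw [Nat.succ_sub_succ, Nat.choose_succ_succ]
    push_cast
    ring
  rw [Finset.sum_congr rfl e1, Finset.sum_add_distrib]
  have e2 : (∑ m ∈ range (n+1), (n.choose m : ℂ) * a m * b (n-m+1))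
      = (∑ i ∈ range (n+1), (n.choose (i+1) : ℂ) * a (i+1) * b (n-i))
        + ((n+1).choose 0 : ℂ) * a 0 * b (n+1) := by
    rw [Finset.sum_range_succ' (fun m => (n.choose m : ℂ) * a m * b (n-m+1)) n,
      Finset.sum_range_succ (fun i => (n.choose (i+1) : ℂ) * a (i+1) * b (n-i)) n]
    simp only [Nat.choose_succ_self, Nat.cast_zero, zero_mul, add_zero,
      Nat.choose_zero_right, Nat.cast_one, one_mul, Nat.sub_zero]
    congr 1
    apply Finset.sum_congr rfl
    intro i hi
    have : n - (i+1) + 1 = n - i := by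
      simp only [Finset.mem_range] at hi; omega
    rw [this]
  rw [e2]
  rw [Nat.sub_zero]
  ring

lemma leibniz {U : Set ℂ} (hU : IsOpen U) :
    ∀ (n : ℕ) (u v : ℂ → ℂ), AnalyticOnNhd ℂ u U → AnalyticOnNhd ℂ v U → ∀ x ∈ U,
    iteratedDeriv n (fun z => u z * v z) x =
      ∑ m ∈ range (n + 1),
        (n.choose m : ℂ) * iteratedDeriv m u x * iteratedDeriv (n - m) v x := by
  intro n
  induction n with
  | zero => intro u v hu hv x hx; simp
  | succ n ih =>
    intro u v hu hv x hx
    have hu' : AnalyticOnNhd ℂ (deriv u) U := hu.deriv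
    have hv' : AnalyticOnNhd ℂ (deriv v) U := hv.deriv
    have heq : deriv (fun z => u z * v z) =ᶠ[nhds x]
        ((fun z => deriv u z * v z) + fun z => u z * deriv v z) := by
      filter_upwards [hU.mem_nhds hx] with y hy
      exact deriv_mul ((hu y hy).differentiableAt) ((hv y hy).differentiableAt)
    rw [iteratedDeriv_succ', heq.iteratedDeriv_eq n,
      itd_add hU hx (hu'.mul hv) (hu.mul hv') n,
      ih _ _ hu' hv x hx, ih _ _ hu hv' x hx]
    have h1 : ∀ m, iteratedDeriv m (deriv u) x = iteratedDeriv (m+1) u x := by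
      intro m; rw [iteratedDeriv_succ']
    have h2 : ∀ m, iteratedDeriv m (deriv v) x = iteratedDeriv (m+1) v x := by
      intro m; rw [iteratedDeriv_succ']
    simp_rw [h1, h2]
    exact binom_step n (fun m => iteratedDeriv m u x) (fun m => iteratedDeriv m v x)



/-- `T_s[f](κ)` : the `sN×sN` block lower-triangular Toeplitz matrix whose `(i,j)` block
(for `j ≤ i`) is `f^{(i−j)}(κ)/(i−j)!` and whose blocks above the block diagonal vanish. -/
noncomputable def Ts {N : ℕ} (s : ℕ) (f : ℂ → Matrix (Fin N) (Fin N) ℂ) (κ : ℂ) :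
    Matrix (Fin s × Fin N) (Fin s × Fin N) ℂ :=
  Matrix.of fun x y =>
    if (y.1 : ℕ) ≤ (x.1 : ℕ) then
      ((Nat.factorial ((x.1 : ℕ) - (y.1 : ℕ)) : ℂ))⁻¹ *
        iteratedDeriv ((x.1 : ℕ) - (y.1 : ℕ)) (fun k => f k x.2 y.2) κ
    else 0

/-- the block lower-triangular Toeplitz construction from Taylor coefficients
is multiplicative: `T_s[f·g](κ) = T_s[f](κ)·T_s[g](κ)` for `f, g` holomorphic near `κ`. -/
theorem stmt14 (N s : ℕ) (hN : 1 ≤ N) (hs : 1 ≤ s) (κ : ℂ)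
    (U : Set ℂ) (hU : IsOpen U) (hκU : κ ∈ U)
    (f g : ℂ → Matrix (Fin N) (Fin N) ℂ)
    (hf : ∀ a b, DifferentiableOn ℂ (fun k => f k a b) U)
    (hg : ∀ a b, DifferentiableOn ℂ (fun k => g k a b) U) :
    Ts s (fun k => f k * g k) κ = Ts s f κ * Ts s g κ := by
  classical
  ext x y
  obtain ⟨i, a⟩ := x
  obtain ⟨j, b⟩ := y
  rw [Matrix.mul_apply, Fintype.sum_prod_type]
  by_cases hij : (j : ℕ) ≤ (i : ℕ)
  · have hfa : ∀ a c, AnalyticOnNhd ℂ (fun k => f k a c) U :=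
      fun a c => (hf a c).analyticOnNhd hU
    have hga : ∀ c b, AnalyticOnNhd ℂ (fun k => g k c b) U :=
      fun c b => (hg c b).analyticOnNhd hU
    set n := (i : ℕ) - (j : ℕ) with hn
    set F := fun (c : Fin N) (m : ℕ) => iteratedDeriv m (fun k => f k a c) κ with hF
    set G := fun (c : Fin N) (m : ℕ) => iteratedDeriv m (fun k => g k c b) κ with hG
    have hLHS : Ts s (fun k => f k * g k) κ (i, a) (j, b)
        = ∑ c : Fin N, ∑ m ∈ Finset.range (n + 1),
            ((n.factorial : ℂ))⁻¹ * ((n.choose m : ℂ) * F c m * G c (n - m)) := by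
      simp only [Ts, Matrix.of_apply, hij, if_true]
      have hfun : (fun k => (f k * g k) a b) = fun k => ∑ c, f k a c * g k c b := by
        funext k; rw [Matrix.mul_apply]
      rw [hfun, itd_fsum hU hκU Finset.univ (fun c z => f z a c * g z c b)
          (fun c _ => (hfa a c).mul (hga c b)) n, Finset.mul_sum]
      apply Finset.sum_congr rfl
      intro c _
      rw [leibniz hU n _ _ (hfa a c) (hga c b) κ hκU, Finset.mul_sum]
    rw [hLHS]
    conv_rhs => rw [Finset.sum_comm]
    apply Finset.sum_congr rfl
    intro c _
    -- RHS inner sum over k : Fin s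
    have hRHS : (∑ k : Fin s, Ts s f κ (i, a) (k, c) * Ts s g κ (k, c) (j, b))
        = ∑ t ∈ Finset.range s,
            (if t ≤ (i : ℕ) then (((i : ℕ) - t).factorial : ℂ)⁻¹ * F c ((i : ℕ) - t) else 0) *
            (if (j : ℕ) ≤ t then ((t - (j : ℕ)).factorial : ℂ)⁻¹ * G c (t - (j : ℕ)) else 0) := by
      rw [← Fin.sum_univ_eq_sum_range]
      apply Finset.sum_congr rfl
      intro k _
      simp only [Ts, Matrix.of_apply, hF, hG]
    rw [hRHS]
    have hfilter : (Finset.range s).filter (fun t => (j : ℕ) ≤ t ∧ t ≤ (i : ℕ))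
        = Finset.Icc (j : ℕ) (i : ℕ) := by
      ext t
      simp only [Finset.mem_filter, Finset.mem_range, Finset.mem_Icc]
      have := i.2
      omega
    have hsum2 : (∑ t ∈ Finset.range s,
            (if t ≤ (i : ℕ) then (((i : ℕ) - t).factorial : ℂ)⁻¹ * F c ((i : ℕ) - t) else 0) *
            (if (j : ℕ) ≤ t then ((t - (j : ℕ)).factorial : ℂ)⁻¹ * G c (t - (j : ℕ)) else 0))
        = ∑ t ∈ Finset.Icc (j : ℕ) (i : ℕ),
            ((((i : ℕ) - t).factorial : ℂ)⁻¹ * F c ((i : ℕ) - t)) *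
            (((t - (j : ℕ)).factorial : ℂ)⁻¹ * G c (t - (j : ℕ))) := by
      rw [← hfilter, Finset.sum_filter]
      apply Finset.sum_congr rfl
      intro t _
      by_cases h1 : (j : ℕ) ≤ t <;> by_cases h2 : t ≤ (i : ℕ) <;> simp [h1, h2]
    rw [hsum2, ← Finset.Ico_add_one_right_eq_Icc, Finset.sum_Ico_eq_sum_range]
    have hrange : (i : ℕ) + 1 - (j : ℕ) = n + 1 := by omega
    rw [hrange]
    rw [← Finset.sum_range_reflect
      (fun m => ((n.factorial : ℂ))⁻¹ * ((n.choose m : ℂ) * F c m * G c (n - m))) (n + 1)]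
    apply Finset.sum_congr rfl
    intro m hm
    simp only [Finset.mem_range] at hm
    have hmn : m ≤ n := by omega
    have e1 : n + 1 - 1 - m = n - m := by omega
    have e2 : (i : ℕ) - ((j : ℕ) + m) = n - m := by omega
    have e3 : (j : ℕ) + m - (j : ℕ) = m := by omega
    have e4 : n - (n - m) = m := by omega
    rw [e1, e2, e3, e4, Nat.choose_symm hmn]
    have key : ((n.choose m : ℂ)) * (m.factorial : ℂ) * ((n - m).factorial : ℂ)
        = (n.factorial : ℂ) := by
      exact_mod_cast congrArg (Nat.cast : ℕ → ℂ) (Nat.choose_mul_factorial_mul_factorial hmn)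
    have h1 : ((m.factorial : ℂ)) ≠ 0 := Nat.cast_ne_zero.2 (Nat.factorial_ne_zero m)
    have h2 : (((n - m).factorial : ℂ)) ≠ 0 := Nat.cast_ne_zero.2 (Nat.factorial_ne_zero _)
    have h3 : ((n.factorial : ℂ)) ≠ 0 := Nat.cast_ne_zero.2 (Nat.factorial_ne_zero n)
    field_simp
    linear_combination F c (n - m) * G c m * key
  · show (if ((j:ℕ) ≤ (i:ℕ)) then _ else 0) = _
    rw [if_neg hij]
    symm
    apply Finset.sum_eq_zero
    intro k _
    apply Finset.sum_eq_zero
    intro c _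
    simp only [Ts, Matrix.of_apply]
    by_cases h1 : (k : ℕ) ≤ (i : ℕ)
    · have h2 : ¬ (j : ℕ) ≤ (k : ℕ) := by omega
      simp [h1, h2]
    · simp [h1]
end
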